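/- arXiv:nlin/0511058 — 14 statements merged into one kernel-verified Lean document; each statement's English description precedes it below -/
import Mathlib

section
/- Let α, β, γ, λ be real numbers with α − β − 1 > 0 and γ + 1 ≠ 0, set q* = (γ+1)(β+2)/(α−β−1), and let 0 < R ≤ ∞. Suppose y : (0,R) → ℝ is twice differentiable with y(x) > 0 and y′(x) < 0 on (0,R), and y satisfies (x^α (−y′(x))^{β+1})′ = λ x^γ y(x)^{q*−1} for all x ∈ (0,R) (i.e. y solves the model equation with the critical exponent p = q* − 1). Then the function ψ(x) := ((β+1)/(α−β−1)) x^{α+1} (−y′(x))^{β+2} − x^α y(x) (−y′(x))^{β+1} + (λ/(γ+1)) x^{γ+1} y(x)^{q*} has vanishing derivative at every x ∈ (0,R); in particular ψ is constant on (0,R). (This is the first integral (Noether conserved quantity) of the model equation in the critical Sobolev case.) -/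
open Real Set

private lemma first_integral_aux (α β γ lam x a g b z U Y V q : ℝ)
    (hA : α - β - 1 ≠ 0) (h2 : γ + 1 ≠ 0)
    (hq : q = (γ + 1) * (β + 2) / (α - β - 1))
    (key : α * a * (b * U) + a * x * (V * (β + 1) * b) = lam * g * z) :
    0 = ((β + 1) / (α - β - 1) * ((α + 1) * (a * x)) * (b * U * U)
        + (β + 1) / (α - β - 1) * (a * x * x) * (V * (β + 2) * (b * U)))
      - ((α * a * Y + a * x * -U) * (b * U) + a * x * Y * (V * (β + 1) * b))
      + (lam / (γ + 1) * ((γ + 1) * g) * (z * Y) + lam / (γ + 1) * (g * x) * (-U * q * z)) := by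
  subst hq
  field_simp
  linear_combination (-(((β + 2) * x * U - (α - β - 1) * Y))) * key

/-- the first integral (Noether conserved quantity) of the model equation
in the critical Sobolev case: ψ has vanishing derivative on (0,R), hence is constant. -/
theorem first_integral_model_equation_critical
    (α β γ lam : ℝ) (h1 : 0 < α - β - 1) (h2 : γ + 1 ≠ 0)
    (qstar : ℝ) (hq : qstar = (γ + 1) * (β + 2) / (α - β - 1))
    (R : EReal) (hR : 0 < R)
    (y : ℝ → ℝ)
    (hdiff : ∀ x : ℝ, 0 < x → (x : EReal) < R → DifferentiableAt ℝ y x)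
    (hdiff2 : ∀ x : ℝ, 0 < x → (x : EReal) < R → DifferentiableAt ℝ (deriv y) x)
    (hpos : ∀ x : ℝ, 0 < x → (x : EReal) < R → 0 < y x)
    (hdec : ∀ x : ℝ, 0 < x → (x : EReal) < R → deriv y x < 0)
    (heq : ∀ x : ℝ, 0 < x → (x : EReal) < R →
      HasDerivAt (fun t : ℝ => t ^ α * (-deriv y t) ^ (β + 1))
        (lam * x ^ γ * y x ^ (qstar - 1)) x) :
    let ψ : ℝ → ℝ := fun t =>
      ((β + 1) / (α - β - 1)) * t ^ (α + 1) * (-deriv y t) ^ (β + 2)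
        - t ^ α * y t * (-deriv y t) ^ (β + 1)
        + (lam / (γ + 1)) * t ^ (γ + 1) * y t ^ qstar
    (∀ x : ℝ, 0 < x → (x : EReal) < R → HasDerivAt ψ 0 x) ∧
    (∀ x₁ x₂ : ℝ, 0 < x₁ → (x₁ : EReal) < R → 0 < x₂ → (x₂ : EReal) < R → ψ x₁ = ψ x₂) := by
  intro ψ
  have hA : α - β - 1 ≠ 0 := ne_of_gt h1
  have key : ∀ x : ℝ, 0 < x → (x : EReal) < R → HasDerivAt ψ 0 x := by
    intro x hx hxR
    have hx0 : x ≠ 0 := ne_of_gt hx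
    have hy : HasDerivAt y (deriv y x) x := (hdiff x hx hxR).hasDerivAt
    have hu : HasDerivAt (fun t => -deriv y t) (-deriv (deriv y) x) x :=
      ((hdiff2 x hx hxR).hasDerivAt).neg
    have hU : 0 < -deriv y x := by linarith [hdec x hx hxR]
    have hU0 : -deriv y x ≠ 0 := ne_of_gt hU
    have hY : 0 < y x := hpos x hx hxR
    have hY0 : y x ≠ 0 := ne_of_gt hY
    have hxa : HasDerivAt (fun t : ℝ => t ^ α) (α * x ^ (α - 1)) x :=
      Real.hasDerivAt_rpow_const (Or.inl hx0)
    have hxa1 : HasDerivAt (fun t : ℝ => t ^ (α + 1)) ((α + 1) * x ^ (α + 1 - 1)) x :=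
      Real.hasDerivAt_rpow_const (Or.inl hx0)
    have hxg : HasDerivAt (fun t : ℝ => t ^ (γ + 1)) ((γ + 1) * x ^ (γ + 1 - 1)) x :=
      Real.hasDerivAt_rpow_const (Or.inl hx0)
    have hub1 : HasDerivAt (fun t => (-deriv y t) ^ (β + 1))
        (-deriv (deriv y) x * (β + 1) * (-deriv y x) ^ (β + 1 - 1)) x :=
      hu.rpow_const (Or.inl hU0)
    have hub2 : HasDerivAt (fun t => (-deriv y t) ^ (β + 2))
        (-deriv (deriv y) x * (β + 2) * (-deriv y x) ^ (β + 2 - 1)) x :=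
      hu.rpow_const (Or.inl hU0)
    have hyq : HasDerivAt (fun t => y t ^ qstar)
        (deriv y x * qstar * y x ^ (qstar - 1)) x :=
      hy.rpow_const (Or.inl hY0)
    have hw : HasDerivAt (fun t : ℝ => t ^ α * (-deriv y t) ^ (β + 1))
        (α * x ^ (α - 1) * (-deriv y x) ^ (β + 1)
          + x ^ α * (-deriv (deriv y) x * (β + 1) * (-deriv y x) ^ (β + 1 - 1))) x :=
      hxa.mul hub1
    have keyeq : α * x ^ (α - 1) * (-deriv y x) ^ (β + 1)
          + x ^ α * (-deriv (deriv y) x * (β + 1) * (-deriv y x) ^ (β + 1 - 1))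
        = lam * x ^ γ * y x ^ (qstar - 1) := hw.unique (heq x hx hxR)
    have hψ : HasDerivAt ψ
        ((((β + 1) / (α - β - 1)) * ((α + 1) * x ^ (α + 1 - 1)) * (-deriv y x) ^ (β + 2)
            + ((β + 1) / (α - β - 1)) * x ^ (α + 1)
              * (-deriv (deriv y) x * (β + 2) * (-deriv y x) ^ (β + 2 - 1)))
          - ((α * x ^ (α - 1) * y x + x ^ α * deriv y x) * (-deriv y x) ^ (β + 1)
            + (x ^ α * y x) * (-deriv (deriv y) x * (β + 1) * (-deriv y x) ^ (β + 1 - 1)))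
          + ((lam / (γ + 1)) * ((γ + 1) * x ^ (γ + 1 - 1)) * y x ^ qstar
            + (lam / (γ + 1)) * x ^ (γ + 1) * (deriv y x * qstar * y x ^ (qstar - 1)))) x := by
      exact (((hxa1.const_mul _).mul hub2).sub ((hxa.mul hy).mul hub1)).add
        ((hxg.const_mul _).mul hyq)
    convert hψ using 1
    have ea : x ^ α = x ^ (α - 1) * x := by
      rw [← Real.rpow_add_one hx0, sub_add_cancel]
    have ea1 : x ^ (α + 1) = x ^ (α - 1) * x * x := by
      rw [Real.rpow_add_one hx0, ea]
    have ea2 : x ^ (α + 1 - 1) = x ^ (α - 1) * x := by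
      rw [add_sub_cancel_right, ea]
    have eg : x ^ (γ + 1) = x ^ γ * x := Real.rpow_add_one hx0 γ
    have eg1 : x ^ (γ + 1 - 1) = x ^ γ := by rw [add_sub_cancel_right]
    have eb1 : (-deriv y x) ^ (β + 1) = (-deriv y x) ^ (β + 1 - 1) * (-deriv y x) := by
      rw [← Real.rpow_add_one hU0, sub_add_cancel]
    have eb2 : (-deriv y x) ^ (β + 2)
        = (-deriv y x) ^ (β + 1 - 1) * (-deriv y x) * (-deriv y x) := by
      rw [show β + 2 = (β + 1) + 1 by ring, Real.rpow_add_one hU0, eb1]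
    have eb3 : (-deriv y x) ^ (β + 2 - 1) = (-deriv y x) ^ (β + 1 - 1) * (-deriv y x) := by
      rw [show β + 2 - 1 = β + 1 by ring, eb1]
    have ez : y x ^ qstar = y x ^ (qstar - 1) * y x := by
      rw [← Real.rpow_add_one hY0, sub_add_cancel]
    rw [ea, eb1] at keyeq
    rw [ea, ea1, ea2, eg, eg1, eb2, eb3, eb1, ez]
    have haux := first_integral_aux α β γ lam x (x ^ (α - 1)) (x ^ γ)
      ((-deriv y x) ^ (β + 1 - 1)) (y x ^ (qstar - 1)) (-deriv y x) (y x)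
      (-deriv (deriv y) x) qstar hA h2 hq keyeq
    linear_combination haux
  refine ⟨key, ?_⟩
  have main : ∀ a b : ℝ, 0 < a → (a : EReal) < R → 0 < b → (b : EReal) < R → a < b →
      ψ a = ψ b := by
    intro a b ha haR hb hbR hab
    have hmem : ∀ t ∈ Icc a b, 0 < t ∧ (t : EReal) < R := by
      intro t ht
      refine ⟨lt_of_lt_of_le ha ht.1, lt_of_le_of_lt ?_ hbR⟩
      exact_mod_cast ht.2
    have hcont : ContinuousOn ψ (Icc a b) := fun t ht =>
      ((key t (hmem t ht).1 (hmem t ht).2).continuousAt).continuousWithinAt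
    obtain ⟨c, hc, hc'⟩ := exists_hasDerivAt_eq_slope ψ (fun _ => 0) hab hcont
      (fun t ht => key t (hmem t ⟨le_of_lt ht.1, le_of_lt ht.2⟩).1
        (hmem t ⟨le_of_lt ht.1, le_of_lt ht.2⟩).2)
    have hba : b - a ≠ 0 := sub_ne_zero.mpr (ne_of_gt hab)
    have := hc'.symm
    field_simp at this
    linarith [this]
  intro x₁ x₂ h₁ h₁R h₂ h₂R
  rcases lt_trichotomy x₁ x₂ with h | h | h
  · exact main x₁ x₂ h₁ h₁R h₂ h₂R h
  · rw [h]
  · exact (main x₂ x₁ h₂ h₂R h₁ h₁R h).symm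
end

section
/- Let α, β, γ, λ be real numbers with α − β − 1 > 0, β + 1 > 0 and γ + 1 ≠ 0, set q* = (γ+1)(β+2)/(α−β−1), and let 0 < R ≤ ∞. Suppose y : (0,R) → ℝ is twice differentiable with y(x) > 0 and y′(x) < 0 on (0,R), satisfies (x^α (−y′(x))^{β+1})′ = λ x^γ y(x)^{q*−1} on (0,R), and the first integral vanishes identically: ((β+1)/(α−β−1)) x^{α+1} (−y′(x))^{β+2} − x^α y(x) (−y′(x))^{β+1} + (λ/(γ+1)) x^{γ+1} y(x)^{q*} = 0 for all x ∈ (0,R). Then y satisfies the second-order equation y′′(x) = ((γ − α + 1)/(β + 1)) · y′(x)/x + ((γ + 1)/(α − β − 1)) · y′(x)²/y(x) for all x ∈ (0,R). -/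
open Real Set

/-- a positive decreasing solution of the critical model equation whose
first integral vanishes identically satisfies the reduced second-order equation
y″ = ((γ−α+1)/(β+1)) y′/x + ((γ+1)/(α−β−1)) y′²/y. -/
theorem reduced_equation_from_vanishing_first_integral
    (α β γ lam : ℝ) (h1 : 0 < α - β - 1) (h2 : 0 < β + 1) (h3 : γ + 1 ≠ 0)
    (qstar : ℝ) (hq : qstar = (γ + 1) * (β + 2) / (α - β - 1))
    (R : EReal) (hR : 0 < R)
    (y : ℝ → ℝ)
    (hdiff : ∀ x : ℝ, 0 < x → (x : EReal) < R → DifferentiableAt ℝ y x)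
    (hdiff2 : ∀ x : ℝ, 0 < x → (x : EReal) < R → DifferentiableAt ℝ (deriv y) x)
    (hpos : ∀ x : ℝ, 0 < x → (x : EReal) < R → 0 < y x)
    (hdec : ∀ x : ℝ, 0 < x → (x : EReal) < R → deriv y x < 0)
    (heq : ∀ x : ℝ, 0 < x → (x : EReal) < R →
      HasDerivAt (fun t : ℝ => t ^ α * (-deriv y t) ^ (β + 1))
        (lam * x ^ γ * y x ^ (qstar - 1)) x)
    (hψ : ∀ x : ℝ, 0 < x → (x : EReal) < R →
      ((β + 1) / (α - β - 1)) * x ^ (α + 1) * (-deriv y x) ^ (β + 2)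
        - x ^ α * y x * (-deriv y x) ^ (β + 1)
        + (lam / (γ + 1)) * x ^ (γ + 1) * y x ^ qstar = 0) :
    ∀ x : ℝ, 0 < x → (x : EReal) < R →
      deriv (deriv y) x =
        ((γ - α + 1) / (β + 1)) * (deriv y x / x)
          + ((γ + 1) / (α - β - 1)) * ((deriv y x) ^ 2 / y x) := by
  intro x hx hxR
  have hne : x ≠ 0 := ne_of_gt hx
  have hyx : 0 < y x := hpos x hx hxR
  have hy' : deriv y x < 0 := hdec x hx hxR
  have hu : 0 < -deriv y x := by linarith
  set v := deriv (deriv y) x with hv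
  have hdy2 : HasDerivAt (deriv y) v x := (hdiff2 x hx hxR).hasDerivAt
  have hdy : HasDerivAt y (deriv y x) x := (hdiff x hx hxR).hasDerivAt
  have hw : HasDerivAt (fun t : ℝ => t ^ α * (-deriv y t) ^ (β + 1))
      (lam * x ^ γ * y x ^ (qstar - 1)) x := heq x hx hxR
  have hneg : HasDerivAt (fun t : ℝ => -deriv y t) (-v) x := hdy2.neg
  have h1' : HasDerivAt (fun t : ℝ => t * (-deriv y t))
      (1 * (-deriv y x) + x * (-v)) x := (hasDerivAt_id x).mul hneg
  have hφ1 : HasDerivAt (fun t : ℝ => t * (-deriv y t) * (t ^ α * (-deriv y t) ^ (β + 1)))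
      ((1 * (-deriv y x) + x * (-v)) * (x ^ α * (-deriv y x) ^ (β + 1))
        + (x * (-deriv y x)) * (lam * x ^ γ * y x ^ (qstar - 1))) x := h1'.mul hw
  have hφ2 : HasDerivAt (fun t : ℝ => y t * (t ^ α * (-deriv y t) ^ (β + 1)))
      (deriv y x * (x ^ α * (-deriv y x) ^ (β + 1))
        + y x * (lam * x ^ γ * y x ^ (qstar - 1))) x := hdy.mul hw
  have hp1 : HasDerivAt (fun t : ℝ => t ^ (γ + 1)) ((γ + 1) * x ^ γ) x := by
    have h := Real.hasDerivAt_rpow_const (x := x) (p := γ + 1) (Or.inl hne)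
    have e : γ + 1 - 1 = γ := by ring
    rwa [e] at h
  have hp2 : HasDerivAt (fun t : ℝ => y t ^ qstar)
      (deriv y x * qstar * y x ^ (qstar - 1)) x :=
    hdy.rpow_const (Or.inl (ne_of_gt hyx))
  have hφ3 : HasDerivAt (fun t : ℝ => t ^ (γ + 1) * y t ^ qstar)
      ((γ + 1) * x ^ γ * (y x ^ qstar)
        + x ^ (γ + 1) * (deriv y x * qstar * y x ^ (qstar - 1))) x := hp1.mul hp2
  have hφD : HasDerivAt (fun t : ℝ =>
      ((β + 1) / (α - β - 1)) * (t * (-deriv y t) * (t ^ α * (-deriv y t) ^ (β + 1)))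
        - y t * (t ^ α * (-deriv y t) ^ (β + 1))
        + (lam / (γ + 1)) * (t ^ (γ + 1) * y t ^ qstar))
      (((β + 1) / (α - β - 1)) * ((1 * (-deriv y x) + x * (-v)) * (x ^ α * (-deriv y x) ^ (β + 1))
          + (x * (-deriv y x)) * (lam * x ^ γ * y x ^ (qstar - 1)))
        - (deriv y x * (x ^ α * (-deriv y x) ^ (β + 1))
          + y x * (lam * x ^ γ * y x ^ (qstar - 1)))
        + (lam / (γ + 1)) * ((γ + 1) * x ^ γ * (y x ^ qstar)
          + x ^ (γ + 1) * (deriv y x * qstar * y x ^ (qstar - 1)))) x :=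
    ((HasDerivAt.const_mul _ hφ1).sub hφ2).add (HasDerivAt.const_mul _ hφ3)
  have hopen : IsOpen {t : ℝ | 0 < t ∧ (t : EReal) < R} := by
    have : {t : ℝ | 0 < t ∧ (t : EReal) < R}
        = Ioi (0 : ℝ) ∩ ((↑) : ℝ → EReal) ⁻¹' (Iio R) := rfl
    rw [this]
    exact isOpen_Ioi.inter (isOpen_Iio.preimage continuous_coe_real_ereal)
  have hev : (fun t : ℝ =>
      ((β + 1) / (α - β - 1)) * (t * (-deriv y t) * (t ^ α * (-deriv y t) ^ (β + 1)))
        - y t * (t ^ α * (-deriv y t) ^ (β + 1))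
        + (lam / (γ + 1)) * (t ^ (γ + 1) * y t ^ qstar))
      =ᶠ[nhds x] (fun _ => (0 : ℝ)) := by
    filter_upwards [hopen.mem_nhds ⟨hx, hxR⟩] with t ht
    obtain ⟨ht0, htR⟩ := ht
    have hut : 0 < -deriv y t := by have := hdec t ht0 htR; linarith
    have hψt := hψ t ht0 htR
    have e1 : t ^ (α + 1) = t ^ α * t := Real.rpow_add_one (ne_of_gt ht0) α
    have e2 : (-deriv y t) ^ (β + 2) = (-deriv y t) ^ (β + 1) * (-deriv y t) := by
      rw [show β + 2 = (β + 1) + 1 by ring, Real.rpow_add_one (ne_of_gt hut)]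
    rw [e1, e2] at hψt
    linear_combination hψt
  have hD0 : ((β + 1) / (α - β - 1)) * ((1 * (-deriv y x) + x * (-v)) * (x ^ α * (-deriv y x) ^ (β + 1))
          + (x * (-deriv y x)) * (lam * x ^ γ * y x ^ (qstar - 1)))
        - (deriv y x * (x ^ α * (-deriv y x) ^ (β + 1))
          + y x * (lam * x ^ γ * y x ^ (qstar - 1)))
        + (lam / (γ + 1)) * ((γ + 1) * x ^ γ * (y x ^ qstar)
          + x ^ (γ + 1) * (deriv y x * qstar * y x ^ (qstar - 1))) = 0 :=
    hφD.unique ((hasDerivAt_const x (0 : ℝ)).congr_of_eventuallyEq hev)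
  -- now pure algebra
  have hψx := hψ x hx hxR
  have e1 : x ^ (α + 1) = x ^ α * x := Real.rpow_add_one hne α
  have e2 : (-deriv y x) ^ (β + 2) = (-deriv y x) ^ (β + 1) * (-deriv y x) := by
    rw [show β + 2 = (β + 1) + 1 by ring, Real.rpow_add_one (ne_of_gt hu)]
  have e3 : x ^ (γ + 1) = x ^ γ * x := Real.rpow_add_one hne γ
  have e4 : y x ^ qstar = y x ^ (qstar - 1) * y x := by
    have h := Real.rpow_add_one (ne_of_gt hyx) (qstar - 1)
    have e : qstar - 1 + 1 = qstar := by ring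
    rwa [e] at h
  rw [e1, e2] at hψx
  rw [e3, e4] at hD0 hψx
  have ha : α - β - 1 ≠ 0 := ne_of_gt h1
  have hb : β + 1 ≠ 0 := ne_of_gt h2
  have hA : (0:ℝ) < x ^ α := Real.rpow_pos_of_pos hx α
  have hB : (0:ℝ) < (-deriv y x) ^ (β + 1) := Real.rpow_pos_of_pos hu _
  have hP : (0:ℝ) < x ^ γ := Real.rpow_pos_of_pos hx γ
  have hQ : (0:ℝ) < y x ^ (qstar - 1) := Real.rpow_pos_of_pos hyx _
  set A := x ^ α
  set B := (-deriv y x) ^ (β + 1)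
  set P := x ^ γ
  set Q := y x ^ (qstar - 1)
  rw [hq] at hD0
  have hD0' : ((β + 1) * ((-deriv y x + -(x * v)) * (A * B) + -(x * deriv y x * (lam * P * Q)))
      - (α - β - 1) * (deriv y x * (A * B) + y x * (lam * P * Q))) * ((γ + 1) * (α - β - 1))
      + lam * ((γ + 1) * P * (Q * y x) * (α - β - 1)
        + P * x * (deriv y x * ((γ + 1) * (β + 2)) * Q)) * (α - β - 1) = 0 := by
    field_simp at hD0
    linear_combination ((γ + 1) * (α - β - 1)) * hD0
  have key : (γ + 1) * (A * B) *
      ((α - β - 1) * (β + 1) * x * y x * v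
        - (α - β - 1) * (γ - α + 1) * deriv y x * y x
        - (γ + 1) * (β + 1) * x * (deriv y x) ^ 2) = 0 := by
    have hψx' : (-((β + 1) * (A * x) * (B * deriv y x)) - (α - β - 1) * (A * y x * B)) * (γ + 1)
        + lam * (P * x) * (Q * y x) * (α - β - 1) = 0 := by
      field_simp at hψx
      linear_combination hψx
    linear_combination ((γ + 1) * deriv y x) * hψx' - (y x) * hD0'
  have hfac : (α - β - 1) * (β + 1) * x * y x * v
      - (α - β - 1) * (γ - α + 1) * deriv y x * y x
      - (γ + 1) * (β + 1) * x * (deriv y x) ^ 2 = 0 := by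
    have hAB : (γ + 1) * (A * B) ≠ 0 := mul_ne_zero h3 (ne_of_gt (mul_pos hA hB))
    rcases mul_eq_zero.mp key with h | h
    · exact absurd h hAB
    · exact h
  have hxne : x ≠ 0 := hne
  have hyne : y x ≠ 0 := ne_of_gt hyx
  field_simp
  linear_combination hfac
end

section
/- Let α, β, γ, λ, y₀ be real numbers with α − β − 1 > 0, β + 1 > 0, γ − α + β + 2 > 0, λ > 0 and y₀ > 0. Set q* = (γ+1)(β+2)/(α−β−1), σ = (γ−α+β+2)/(α−β−1), s = (γ−α+β+2)/(β+1), k₀ = ((β+1)/(α−β−1)) · (λ y₀^σ/(γ+1))^{1/(β+1)}, and define y_*(x) = (y₀^{−σ} + k₀ x^s)^{−1/σ} for x ≥ 0. Then: (i) y_*(0) = y₀ and y_*(x) > 0 for all x ≥ 0; (ii) y_* is differentiable on (0,∞) with y_*′(x) < 0 for all x > 0; (iii) x^α (−y_*′(x))^{β+1} → 0 as x → 0⁺; and (iv) the function x ↦ x^α (−y_*′(x))^{β+1} is differentiable on (0,∞) with derivative λ x^γ y_*(x)^{q*−1} for every x > 0, i.e. y_* solves −(x^α |y′|^β y′)′ =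 λ x^γ y^{q*−1} on (0,∞). (Existence part of Theorem 3.) -/
open Real Set Filter Topology

/-- existence part of Theorem 3: the explicit function
y_*(x) = (y₀^{−σ} + k₀ x^s)^{−1/σ} solves the critical model equation
−(x^α |y′|^β y′)′ = λ x^γ y^{q*−1} on (0,∞) with y_*(0) = y₀, y_* > 0, y_*′ < 0
and x^α(−y_*′)^{β+1} → 0 as x → 0⁺. -/
theorem explicit_solution_critical_model_equation
    (α β γ lam y₀ : ℝ)
    (h1 : 0 < α - β - 1) (h2 : 0 < β + 1) (h3 : 0 < γ - α + β + 2)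
    (hlam : 0 < lam) (hy₀ : 0 < y₀)
    (qstar σ s k₀ : ℝ)
    (hq : qstar = (γ + 1) * (β + 2) / (α - β - 1))
    (hσ : σ = (γ - α + β + 2) / (α - β - 1))
    (hs : s = (γ - α + β + 2) / (β + 1))
    (hk₀ : k₀ = ((β + 1) / (α - β - 1)) * (lam * y₀ ^ σ / (γ + 1)) ^ (1 / (β + 1))) :
    let ystar : ℝ → ℝ := fun x => (y₀ ^ (-σ) + k₀ * x ^ s) ^ (-1 / σ)
    ystar 0 = y₀ ∧
    (∀ x : ℝ, 0 ≤ x → 0 < ystar x) ∧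
    (∀ x > (0:ℝ), DifferentiableAt ℝ ystar x ∧ deriv ystar x < 0) ∧
    Tendsto (fun x : ℝ => x ^ α * (-deriv ystar x) ^ (β + 1))
      (nhdsWithin 0 (Set.Ioi 0)) (nhds 0) ∧
    (∀ x > (0:ℝ), HasDerivAt (fun t : ℝ => t ^ α * (-deriv ystar t) ^ (β + 1))
      (lam * x ^ γ * ystar x ^ (qstar - 1)) x) := by
  intro ystar
  have hγ1 : (0:ℝ) < γ + 1 := by linarith
  have hβne : β + 1 ≠ 0 := ne_of_gt h2
  have hDne : α - β - 1 ≠ 0 := ne_of_gt h1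
  have hEne : γ - α + β + 2 ≠ 0 := ne_of_gt h3
  have hγne : γ + 1 ≠ 0 := ne_of_gt hγ1
  have hσpos : 0 < σ := by rw [hσ]; positivity
  have hspos : 0 < s := by rw [hs]; positivity
  have hσne : σ ≠ 0 := ne_of_gt hσpos
  have hsne : s ≠ 0 := ne_of_gt hspos
  set A : ℝ := y₀ ^ (-σ) with hA
  have hApos : 0 < A := Real.rpow_pos_of_pos hy₀ _
  set M : ℝ := lam * y₀ ^ σ / (γ + 1) with hM
  have hy₀σ : 0 < y₀ ^ σ := Real.rpow_pos_of_pos hy₀ _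
  have hMpos : 0 < M := by rw [hM]; positivity
  have hk₀pos : 0 < k₀ := by
    rw [hk₀]
    have := Real.rpow_pos_of_pos hMpos (1 / (β + 1))
    positivity
  set e : ℝ := (-1 / σ - 1) * (β + 1) with he
  set K : ℝ := (k₀ * s / σ) ^ (β + 1) with hK
  -- algebraic identities
  have hks : k₀ * s / σ = M ^ (1 / (β + 1)) := by
    rw [hk₀, hs, hσ]; field_simp
  have hKM : K = M := by
    rw [hK, hks, ← Real.rpow_mul hMpos.le, one_div_mul_cancel hβne, Real.rpow_one]
  have hyy : y₀ ^ σ * y₀ ^ (-σ) = 1 := by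
    rw [← Real.rpow_add hy₀]; simp
  have hKA : K * ((γ + 1) * A) = lam := by
    rw [hKM, hM, hA]; field_simp; linear_combination hyy
  have hes : e * s = -(γ + 1) := by
    rw [he, hσ, hs]; field_simp; ring
  have he1 : -1 / σ * (qstar - 1) = e - 1 := by
    rw [he, hσ, hq]; field_simp; ring
  have hsb : α + (s - 1) * (β + 1) = γ + 1 := by
    rw [hs]; field_simp; ring
  -- positivity of the base
  have hu : ∀ x : ℝ, 0 ≤ x → 0 < A + k₀ * x ^ s := by
    intro x hx
    have : 0 ≤ x ^ s := Real.rpow_nonneg hx s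
    positivity
  -- derivative of ystar
  have hderiv_u : ∀ x : ℝ, 0 < x →
      HasDerivAt (fun t : ℝ => A + k₀ * t ^ s) (k₀ * (s * x ^ (s - 1))) x := by
    intro x hx
    exact ((Real.hasDerivAt_rpow_const (Or.inl hx.ne')).const_mul k₀).const_add A
  have hdy : ∀ x : ℝ, 0 < x →
      HasDerivAt ystar
        (-(k₀ * s / σ * (x ^ (s - 1) * (A + k₀ * x ^ s) ^ (-1 / σ - 1)))) x := by
    intro x hx
    have h' := (hderiv_u x hx).rpow_const (p := -1 / σ) (Or.inl (hu x hx.le).ne')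
    convert h' using 1
    ring
  have hndy : ∀ x : ℝ, 0 < x →
      -deriv ystar x = k₀ * s / σ * (x ^ (s - 1) * (A + k₀ * x ^ s) ^ (-1 / σ - 1)) := by
    intro x hx
    rw [(hdy x hx).deriv, neg_neg]
  -- the auxiliary function g
  set g : ℝ → ℝ := fun t => K * (t ^ (γ + 1) * (A + k₀ * t ^ s) ^ e) with hg
  have hWg : ∀ t : ℝ, 0 < t → t ^ α * (-deriv ystar t) ^ (β + 1) = g t := by
    intro t ht
    have hut := hu t ht.le
    have h1' : 0 ≤ k₀ * s / σ := by positivity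
    have h2' : 0 ≤ t ^ (s - 1) := Real.rpow_nonneg ht.le _
    have h3' : 0 ≤ (A + k₀ * t ^ s) ^ (-1 / σ - 1) := Real.rpow_nonneg hut.le _
    rw [hndy t ht, Real.mul_rpow h1' (by positivity), Real.mul_rpow h2' h3',
      ← Real.rpow_mul ht.le, ← Real.rpow_mul hut.le, hg]
    have : t ^ α * t ^ ((s - 1) * (β + 1)) = t ^ (γ + 1) := by
      rw [← Real.rpow_add ht, hsb]
    rw [← he, ← hK]
    calc t ^ α * ((k₀ * s / σ) ^ (β + 1) * (t ^ ((s - 1) * (β + 1)) * (A + k₀ * t ^ s) ^ e))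
        = (k₀ * s / σ) ^ (β + 1) * (t ^ α * t ^ ((s - 1) * (β + 1)) * (A + k₀ * t ^ s) ^ e) := by
          ring
      _ = K * (t ^ (γ + 1) * (A + k₀ * t ^ s) ^ e) := by rw [this]
  refine ⟨?_, ?_, ?_, ?_, ?_⟩
  · -- ystar 0 = y₀
    show (y₀ ^ (-σ) + k₀ * (0:ℝ) ^ s) ^ (-1 / σ) = y₀
    rw [Real.zero_rpow hsne, mul_zero, add_zero, ← Real.rpow_mul hy₀.le,
      show -σ * (-1 / σ) = 1 from by field_simp, Real.rpow_one]
  · intro x hx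
    exact Real.rpow_pos_of_pos (hu x hx) _
  · intro x hx
    refine ⟨(hdy x hx).differentiableAt, ?_⟩
    rw [(hdy x hx).deriv, neg_lt, neg_zero]
    have : 0 < x ^ (s - 1) := Real.rpow_pos_of_pos hx _
    have h2' : 0 < (A + k₀ * x ^ s) ^ (-1 / σ - 1) := Real.rpow_pos_of_pos (hu x hx.le) _
    positivity
  · -- tendsto 0
    have hgc : ContinuousAt g 0 := by
      apply ContinuousAt.mul continuousAt_const
      apply ContinuousAt.mul
      · exact Real.continuousAt_rpow_const 0 (γ + 1) (Or.inr hγ1.le)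
      · apply ContinuousAt.rpow_const
        · exact continuousAt_const.add
            (continuousAt_const.mul (Real.continuousAt_rpow_const 0 s (Or.inr hspos.le)))
        · left
          simp only [Real.zero_rpow hsne, mul_zero, add_zero]
          exact hApos.ne'
    have hg0 : g 0 = 0 := by
      simp [hg, Real.zero_rpow hγne]
    have h₁ : Tendsto g (nhdsWithin 0 (Set.Ioi 0)) (nhds (g 0)) :=
      (hgc.tendsto).mono_left nhdsWithin_le_nhds
    rw [hg0] at h₁
    refine h₁.congr' ?_
    filter_upwards [self_mem_nhdsWithin] with t ht
    exact (hWg t ht).symm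
  · intro x hx
    have hux := hu x hx.le
    have hgx : HasDerivAt g
        (K * ((γ + 1) * x ^ γ * (A + k₀ * x ^ s) ^ e
          + x ^ (γ + 1) * ((k₀ * (s * x ^ (s - 1))) * e * (A + k₀ * x ^ s) ^ (e - 1)))) x := by
      have hp1 : HasDerivAt (fun t : ℝ => t ^ (γ + 1)) ((γ + 1) * x ^ γ) x := by
        have := Real.hasDerivAt_rpow_const (x := x) (p := γ + 1) (Or.inl hx.ne')
        simpa using this
      have hp2 : HasDerivAt (fun t : ℝ => (A + k₀ * t ^ s) ^ e)
          ((k₀ * (s * x ^ (s - 1))) * e * (A + k₀ * x ^ s) ^ (e - 1)) x :=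
        (hderiv_u x hx).rpow_const (Or.inl hux.ne')
      exact (hp1.mul hp2).const_mul K
    have key : K * ((γ + 1) * x ^ γ * (A + k₀ * x ^ s) ^ e
          + x ^ (γ + 1) * ((k₀ * (s * x ^ (s - 1))) * e * (A + k₀ * x ^ s) ^ (e - 1)))
        = lam * x ^ γ * ystar x ^ (qstar - 1) := by
      have f1 : (A + k₀ * x ^ s) ^ e = (A + k₀ * x ^ s) * (A + k₀ * x ^ s) ^ (e - 1) := by
        nth_rewrite 1 [show e = 1 + (e - 1) by ring]
        rw [Real.rpow_add hux, Real.rpow_one]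
      have f2 : x ^ (γ + 1) * x ^ (s - 1) = x ^ γ * x ^ s := by
        rw [← Real.rpow_add hx, ← Real.rpow_add hx]; ring_nf
      have f3 : ystar x ^ (qstar - 1) = (A + k₀ * x ^ s) ^ (e - 1) := by
        show ((A + k₀ * x ^ s) ^ (-1 / σ)) ^ (qstar - 1) = _
        rw [← Real.rpow_mul hux.le, he1]
      rw [f3]
      set U : ℝ := (A + k₀ * x ^ s) ^ (e - 1)
      linear_combination (K * (γ + 1) * x ^ γ) * f1 + (K * e * k₀ * s * U) * f2
        + (K * k₀ * x ^ γ * x ^ s * U) * hes + (x ^ γ * U) * hKA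
    have hev : (fun t : ℝ => t ^ α * (-deriv ystar t) ^ (β + 1)) =ᶠ[nhds x] g := by
      filter_upwards [Ioi_mem_nhds hx] with t ht
      exact hWg t ht
    exact key ▸ hgx.congr_of_eventuallyEq hev
end

section
/- Let α, β, γ, λ, y₀ be real numbers with α − β − 1 > 0, β + 1 > 0, γ − α + β + 2 > 0, λ > 0 and y₀ > 0, and set q* = (γ+1)(β+2)/(α−β−1), σ = (γ−α+β+2)/(α−β−1), s = (γ−α+β+2)/(β+1), k₀ = ((β+1)/(α−β−1)) · (λ y₀^σ/(γ+1))^{1/(β+1)}, and y_*(x) = (y₀^{−σ} + k₀ x^s)^{−1/σ}. Suppose y : [0,∞) → ℝ is continuous with y(0) = y₀ and y(x) > 0 for all x ≥ 0, is differentiable on (0,∞), the function x ↦ x^α |y′(x)|^β y′(x) is differentiable on (0,∞) with derivative −λ x^γ y(x)^{q*−1} for every x > 0, and x^α |y′(x)|^β y′(x) → 0 as x → 0⁺. Then y(x) = y_*(x) for all x ≥ 0. (Uniqueness part of Theorem 3.) -/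
open Real Set Filter Topology intervalIntegral MeasureTheory

lemma const_of_deriv_zero_tendsto (f : ℝ → ℝ) (c : ℝ)
    (hf : ∀ x ∈ Ioi (0:ℝ), HasDerivAt f 0 x)
    (hl : Tendsto f (𝓝[>] (0:ℝ)) (𝓝 c)) : ∀ x ∈ Ioi (0:ℝ), f x = c := by
  intro b hb
  have key : ∀ a ∈ Ioc (0:ℝ) b, f b = f a := by
    intro a ha
    have hcont : ContinuousOn f (Icc a b) := by
      intro t ht
      exact ((hf t (lt_of_lt_of_le ha.1 ht.1)).continuousAt).continuousWithinAt
    have hderiv : ∀ t ∈ Ico a b, HasDerivWithinAt f 0 (Ici t) t := fun t ht =>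
      (hf t (lt_of_lt_of_le ha.1 ht.1)).hasDerivWithinAt
    exact constant_of_has_deriv_right_zero hcont hderiv b ⟨ha.2, le_refl b⟩
  have hev : f =ᶠ[𝓝[>] (0:ℝ)] fun _ => f b := by
    filter_upwards [Ioc_mem_nhdsGT_of_mem (⟨le_refl (0:ℝ), hb⟩ : (0:ℝ) ∈ Ico 0 b)] with a ha
    exact (key a ha).symm
  have : Tendsto (fun _ : ℝ => f b) (𝓝[>] (0:ℝ)) (𝓝 c) := hl.congr' hev
  exact tendsto_nhds_unique (l := 𝓝[>] (0:ℝ)) tendsto_const_nhds this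

lemma aux_sA2 (αa βa γa lam : ℝ) (h1 : 0 < αa - βa - 1) (h2 : 0 < βa + 1) (hγ1 : 0 < γa + 1) :
    (lam * ((αa - βa - 1) / (βa + 1)) / (γa + 1)) * ((γa + 1) * (βa + 2) / (αa - βa - 1))
      = lam * ((βa + 1)⁻¹ + 1) := by
  have hne1 : γa + 1 ≠ 0 := ne_of_gt hγ1
  have hne2 : αa - βa - 1 ≠ 0 := ne_of_gt h1
  have hne3 : βa + 1 ≠ 0 := ne_of_gt h2
  field_simp
  ring

lemma aux_sA1 (c γa lam : ℝ) (hγ1 : 0 < γa + 1) :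
    (lam * c / (γa + 1)) * (γa + 1) = lam * c := by
  field_simp

lemma aux_e1pos (αa βa γa : ℝ) (h1 : 0 < αa - βa - 1) (h2 : 0 < βa + 1)
    (h3 : 0 < γa - αa + βa + 2) :
    0 < (γa + 1) * ((βa + 1)⁻¹ + 1) - (αa - βa - 1) / (βa + 1) := by
  have hγ1 : 0 < γa + 1 := by linarith
  have key : (γa + 1) * ((βa + 1)⁻¹ + 1) - (αa - βa - 1) / (βa + 1)
      = ((γa + 1) * (βa + 2) - (αa - βa - 1)) / (βa + 1) := by
    field_simp
    ring
  rw [key]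
  apply div_pos _ h2
  nlinarith [mul_pos hγ1 h2]

lemma aux_thetaA (a b c : ℝ) (ha : a ≠ 0) (hb : b ≠ 0) : (a / b) * (c * b / a) = c := by
  field_simp

lemma aux_exp1 (αa βa : ℝ) (h2 : 0 < βa + 1) :
    -(αa * (βa + 1)⁻¹) = -((αa - βa - 1) / (βa + 1)) - 1 := by
  have hne : βa + 1 ≠ 0 := ne_of_gt h2
  field_simp
  ring

lemma aux_q1θσ (αa βa γa : ℝ) (h1 : 0 < αa - βa - 1) (h2 : 0 < βa + 1) (hγ1 : 0 < γa + 1) :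
    ((γa + 1) * (βa + 2) / (αa - βa - 1) - 1) - (γa + 1) / ((αa - βa - 1) / (βa + 1))
      = (γa - αa + βa + 2) / (αa - βa - 1) := by
  have hne2 : αa - βa - 1 ≠ 0 := ne_of_gt h1
  have hne3 : βa + 1 ≠ 0 := ne_of_gt h2
  rw [div_div_eq_mul_div]
  field_simp
  ring

lemma aux_sc1 (αa βa γa : ℝ) (h2 : 0 < βa + 1) :
    (γa + 1) * (βa + 1)⁻¹ + -(αa * (βa + 1)⁻¹) = (γa - αa + βa + 2) / (βa + 1) - 1 := by
  have hne : βa + 1 ≠ 0 := ne_of_gt h2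
  field_simp
  ring

lemma aux_sc2 (αa βa γa : ℝ) (h1 : 0 < αa - βa - 1) (h2 : 0 < βa + 1) :
    (γa + 1) / ((αa - βa - 1) / (βa + 1)) * (βa + 1)⁻¹
      + (-((γa - αa + βa + 2) / (αa - βa - 1)) - 1) = 0 := by
  have hne1 : αa - βa - 1 ≠ 0 := ne_of_gt h1
  have hne2 : βa + 1 ≠ 0 := ne_of_gt h2
  rw [div_div_eq_mul_div]
  field_simp
  ring

lemma aux_sc3 (C αa βa γa : ℝ) (h1 : 0 < αa - βa - 1) (h2 : 0 < βa + 1) :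
    (γa - αa + βa + 2) / (αa - βa - 1) * C
      = (βa + 1) / (αa - βa - 1) * C * ((γa - αa + βa + 2) / (βa + 1)) := by
  have hne1 : αa - βa - 1 ≠ 0 := ne_of_gt h1
  have hne2 : βa + 1 ≠ 0 := ne_of_gt h2
  field_simp

set_option maxHeartbeats 4000000 in
/-- uniqueness part of Theorem 3: any positive solution of
−(x^α |y′|^β y′)′ = λ x^γ y^{q*−1} on (0,∞) with y(0) = y₀ and
x^α |y′|^β y′ → 0 as x → 0⁺ coincides with the explicit solution y_*. -/
theorem uniqueness_critical_model_equation
    (α β γ lam y₀ : ℝ)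
    (h1 : 0 < α - β - 1) (h2 : 0 < β + 1) (h3 : 0 < γ - α + β + 2)
    (hlam : 0 < lam) (hy₀ : 0 < y₀)
    (qstar σ s k₀ : ℝ)
    (hq : qstar = (γ + 1) * (β + 2) / (α - β - 1))
    (hσ : σ = (γ - α + β + 2) / (α - β - 1))
    (hs : s = (γ - α + β + 2) / (β + 1))
    (hk₀ : k₀ = ((β + 1) / (α - β - 1)) * (lam * y₀ ^ σ / (γ + 1)) ^ (1 / (β + 1)))
    (y : ℝ → ℝ)
    (hcont : ContinuousOn y (Set.Ici 0))
    (hy0 : y 0 = y₀)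
    (hpos : ∀ x : ℝ, 0 ≤ x → 0 < y x)
    (hdiff : ∀ x > (0:ℝ), DifferentiableAt ℝ y x)
    (heq : ∀ x > (0:ℝ), HasDerivAt (fun t : ℝ => t ^ α * |deriv y t| ^ β * deriv y t)
      (-(lam * x ^ γ * y x ^ (qstar - 1))) x)
    (hlim : Tendsto (fun x : ℝ => x ^ α * |deriv y x| ^ β * deriv y x)
      (nhdsWithin 0 (Set.Ioi 0)) (nhds 0)) :
    ∀ x : ℝ, 0 ≤ x → y x = (y₀ ^ (-σ) + k₀ * x ^ s) ^ (-1 / σ) := by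
  -- basic positivity facts
  have hb0 : β + 1 ≠ 0 := ne_of_gt h2
  have hab : (0:ℝ) < α - β - 1 := h1
  have hγ1 : (0:ℝ) < γ + 1 := by linarith
  have hγ : (-1:ℝ) < γ := by linarith
  set q1 : ℝ := qstar - 1 with hq1def
  have hq1pos : 0 < q1 := by
    rw [hq1def, hq, sub_pos, lt_div_iff₀ hab]
    nlinarith
  set κ : ℝ := (α - β - 1) / (β + 1) with hκdef
  have hκpos : 0 < κ := div_pos hab h2
  set ib : ℝ := (β + 1)⁻¹ with hibdef
  have hibpos : 0 < ib := inv_pos.2 h2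
  have hspos : 0 < s := by rw [hs]; exact div_pos h3 h2
  have hσpos : 0 < σ := by rw [hσ]; exact div_pos h3 hab
  -- the function g and F
  set g : ℝ → ℝ := fun t => y t ^ q1 with hgdef
  set φ : ℝ → ℝ := fun t => t ^ γ * g t with hφdef
  set F : ℝ → ℝ := fun x => lam * ∫ t in (0:ℝ)..x, φ t with hFdef
  clear_value q1 κ ib
  have hgcont : ContinuousOn g (Ici 0) := by
    apply hcont.rpow_const
    intro t ht
    exact Or.inl (ne_of_gt (hpos t ht))
  have hInt : ∀ x : ℝ, 0 ≤ x → IntervalIntegrable φ volume 0 x := by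
    intro x hx
    have h1' : IntervalIntegrable (fun t : ℝ => t ^ γ) volume 0 x := intervalIntegrable_rpow' hγ
    apply h1'.mul_continuousOn
    rw [uIcc_of_le hx]
    exact hgcont.mono (Icc_subset_Ici_self)
  have hφcont : ContinuousOn φ (Ioi 0) := by
    apply ContinuousOn.mul
    · exact fun t ht => ((Real.continuousAt_rpow_const t γ (Or.inl (ne_of_gt ht))).continuousWithinAt)
    · exact (hgcont.mono Ioi_subset_Ici_self)
  have hF' : ∀ x : ℝ, 0 < x → HasDerivAt F (lam * (x ^ γ * g x)) x := by
    intro x hx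
    have hmeas := hφcont.stronglyMeasurableAtFilter isOpen_Ioi (μ := volume) x hx
    have hca : ContinuousAt φ x := by
      have := hφcont.continuousAt (Ioi_mem_nhds hx)
      exact this
    have := (integral_hasDerivAt_right (hInt x hx.le) hmeas hca)
    exact this.const_mul lam
  have hFpos : ∀ x : ℝ, 0 < x → 0 < F x := by
    intro x hx
    refine mul_pos hlam (intervalIntegral_pos_of_pos_on (hInt x hx.le) ?_ hx)
    intro t ht
    exact mul_pos (Real.rpow_pos_of_pos ht.1 γ) (Real.rpow_pos_of_pos (hpos t ht.1.le) q1)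
  -- limit of F x / x^(γ+1)
  set c1 : ℝ := lam * y₀ ^ q1 / (γ + 1) with hc1def
  clear_value c1
  have T1 : Tendsto (fun x => F x / x ^ (γ + 1)) (𝓝[>] (0:ℝ)) (𝓝 c1) := by
    rw [Metric.tendsto_nhdsWithin_nhds]
    intro ε hε
    have hg0 : ContinuousWithinAt g (Ici 0) 0 := hgcont 0 self_mem_Ici
    set ε' : ℝ := ε * (γ + 1) / lam / 2 with hε'def
    have hε'pos : 0 < ε' := by positivity
    obtain ⟨δ, hδpos, hδ⟩ := Metric.continuousWithinAt_iff.1 hg0 ε' hε'pos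
    refine ⟨δ, hδpos, ?_⟩
    intro x hx hxd
    have hx' : (0:ℝ) < x := hx
    have hxp : 0 < x ^ (γ + 1) := Real.rpow_pos_of_pos hx' _
    have hg00 : g 0 = y₀ ^ q1 := by simp [hgdef, hy0]
    have hint_pow : ∫ t in (0:ℝ)..x, t ^ γ = x ^ (γ + 1) / (γ + 1) := by
      rw [integral_rpow (Or.inl hγ), Real.zero_rpow (ne_of_gt hγ1)]
      ring
    set ψ : ℝ → ℝ := fun t => t ^ γ * (g t - y₀ ^ q1) with hψdef
    have hψint : IntervalIntegrable ψ volume 0 x := by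
      apply (intervalIntegrable_rpow' hγ).mul_continuousOn
      rw [uIcc_of_le hx'.le]
      exact ((hgcont.mono Icc_subset_Ici_self).sub continuousOn_const)
    have hpowint : IntervalIntegrable (fun t : ℝ => t ^ γ * ε') volume 0 x :=
      (intervalIntegrable_rpow' hγ).mul_const ε'
    have hconstint : IntervalIntegrable (fun t : ℝ => t ^ γ * y₀ ^ q1) volume 0 x :=
      (intervalIntegrable_rpow' hγ).mul_const _
    have hsplit : (∫ t in (0:ℝ)..x, ψ t)
        = (∫ t in (0:ℝ)..x, φ t) - x ^ (γ + 1) / (γ + 1) * y₀ ^ q1 := by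
      have : (∫ t in (0:ℝ)..x, ψ t)
          = (∫ t in (0:ℝ)..x, φ t) - ∫ t in (0:ℝ)..x, t ^ γ * y₀ ^ q1 := by
        rw [← intervalIntegral.integral_sub (hInt x hx'.le) hconstint]
        apply intervalIntegral.integral_congr
        intro t ht
        simp only [hψdef, hφdef]
        ring
      rw [this, intervalIntegral.integral_mul_const, hint_pow]
    have hbound : |∫ t in (0:ℝ)..x, ψ t| ≤ ε' * (x ^ (γ + 1) / (γ + 1)) := by
      have h1' : |∫ t in (0:ℝ)..x, ψ t| ≤ ∫ t in (0:ℝ)..x, |ψ t| :=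
        intervalIntegral.abs_integral_le_integral_abs hx'.le
      have h2' : (∫ t in (0:ℝ)..x, |ψ t|) ≤ ∫ t in (0:ℝ)..x, t ^ γ * ε' := by
        apply intervalIntegral.integral_mono_on hx'.le hψint.abs hpowint
        intro t ht
        have htn : 0 ≤ t := ht.1
        have htpow : 0 ≤ t ^ γ := Real.rpow_nonneg htn γ
        have hgd : |g t - y₀ ^ q1| ≤ ε' := by
          rcases eq_or_lt_of_le htn with rfl | htpos
          · simp [hg00]; positivity
          · have hdist : dist t 0 < δ := by
              rw [Real.dist_eq, sub_zero, abs_of_pos htpos]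
              calc t ≤ x := ht.2
                _ < δ := by rwa [Real.dist_eq, sub_zero, abs_of_pos hx'] at hxd
            have := hδ (mem_Ici.2 htn) hdist
            rw [Real.dist_eq, hg00] at this
            exact this.le
        calc |ψ t| = t ^ γ * |g t - y₀ ^ q1| := by
              rw [hψdef]; rw [abs_mul, abs_of_nonneg htpow]
          _ ≤ t ^ γ * ε' := mul_le_mul_of_nonneg_left hgd htpow
      have h3' : (∫ t in (0:ℝ)..x, t ^ γ * ε') = ε' * (x ^ (γ + 1) / (γ + 1)) := by
        rw [intervalIntegral.integral_mul_const, hint_pow]; ring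
      linarith [h1', h2', h3'.symm ▸ h2']
    have hdiffeq : F x / x ^ (γ + 1) - c1
        = lam * ((∫ t in (0:ℝ)..x, φ t) - x ^ (γ + 1) / (γ + 1) * y₀ ^ q1) / x ^ (γ + 1) := by
      rw [hFdef, hc1def]
      field_simp
    rw [Real.dist_eq, hdiffeq, abs_div, abs_of_pos hxp, abs_mul, abs_of_pos hlam, ← hsplit]
    rw [div_lt_iff₀ hxp]
    have : lam * |∫ t in (0:ℝ)..x, ψ t| ≤ lam * (ε' * (x ^ (γ + 1) / (γ + 1))) :=
      mul_le_mul_of_nonneg_left hbound hlam.le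
    have heq2 : lam * (ε' * (x ^ (γ + 1) / (γ + 1))) = ε / 2 * x ^ (γ + 1) := by
      rw [hε'def]; field_simp
    nlinarith [hxp]
  have tpow : ∀ p : ℝ, 0 < p → Tendsto (fun x : ℝ => x ^ p) (𝓝[>] (0:ℝ)) (𝓝 0) := by
    intro p hp
    have hc := (Real.continuousAt_rpow_const 0 p (Or.inr hp.le)).continuousWithinAt
      (s := Ioi (0:ℝ))
    simpa [ContinuousWithinAt, Real.zero_rpow (ne_of_gt hp)] using hc
  have T0 : Tendsto F (𝓝[>] (0:ℝ)) (𝓝 0) := by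
    have hev : (fun x => F x / x ^ (γ + 1) * x ^ (γ + 1)) =ᶠ[𝓝[>] (0:ℝ)] F := by
      filter_upwards [self_mem_nhdsWithin] with x hx
      have : x ^ (γ + 1) ≠ 0 := ne_of_gt (Real.rpow_pos_of_pos hx _)
      field_simp
    simpa using Tendsto.congr' hev (T1.mul (tpow (γ + 1) hγ1))
  -- the integrated equation
  have hGF : ∀ x : ℝ, 0 < x → x ^ α * |deriv y x| ^ β * deriv y x = -F x := by
    set D : ℝ → ℝ := fun x => x ^ α * |deriv y x| ^ β * deriv y x + F x with hDdef
    have hD0 : ∀ x ∈ Ioi (0:ℝ), HasDerivAt D 0 x := by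
      intro x hx
      have h' := (heq x hx).add (hF' x hx)
      refine h'.congr_deriv ?_
      simp only [hgdef]
      ring
    have hDlim : Tendsto D (𝓝[>] (0:ℝ)) (𝓝 0) := by
      simpa using hlim.add T0
    have hDc := const_of_deriv_zero_tendsto D 0 hD0 hDlim
    intro x hx
    have := hDc x hx
    simp only [hDdef] at this
    linarith
  -- formula for deriv y
  have hm : ∀ x : ℝ, 0 < x → deriv y x = -(F x ^ ib * x ^ (-(α * ib))) := by
    intro x hx
    have hG := hGF x hx
    set d := deriv y x with hd
    have hxα : 0 < x ^ α := Real.rpow_pos_of_pos hx α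
    have hFx := hFpos x hx
    have hdneg : d < 0 := by
      by_contra hcon
      push_neg at hcon
      have h0 : 0 ≤ x ^ α * |d| ^ β * d :=
        mul_nonneg (mul_nonneg hxα.le (Real.rpow_nonneg (abs_nonneg d) β)) hcon
      linarith
    have habs : |d| = -d := abs_of_neg hdneg
    have hnd : 0 < -d := neg_pos.2 hdneg
    have key : x ^ α * (-d) ^ (β + 1) = F x := by
      rw [Real.rpow_add_one (ne_of_gt hnd)]
      rw [habs] at hG
      linear_combination -hG
    have h5 : (-d) ^ (β + 1) = F x / x ^ α := by
      rw [← key]; field_simp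
    have h6 : -d = (F x / x ^ α) ^ ib := by
      rw [← h5, hibdef, Real.rpow_rpow_inv hnd.le hb0]
    have h7 : (F x / x ^ α) ^ ib = F x ^ ib * x ^ (-(α * ib)) := by
      rw [Real.div_rpow hFx.le hxα.le, ← Real.rpow_mul hx.le, Real.rpow_neg hx.le,
        div_eq_mul_inv]
    rw [← h7, ← h6]
    ring
  -- Pohozaev identity
  set A : ℝ := lam * κ / (γ + 1) with hAdef
  set b2 : ℝ := ib + 1 with hb2def
  set H : ℝ → ℝ := fun x => x ^ (-κ) * F x ^ b2 + A * (x ^ (γ + 1) * y x ^ qstar)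
      - κ * (F x * y x) with hHdef
  clear_value A b2
  have sA1 : A * (γ + 1) = lam * κ := by
    rw [hAdef]; exact aux_sA1 κ γ lam hγ1
  have sA2 : A * qstar = lam * b2 := by
    rw [hAdef, hq, hb2def, hibdef, hκdef]
    exact aux_sA2 α β γ lam h1 h2 hγ1
  have hH' : ∀ x ∈ Ioi (0:ℝ), HasDerivAt H 0 x := by
    intro x hx
    have hx' : (0:ℝ) < x := hx
    have hFx := hFpos x hx'
    have hux := hpos x hx'.le
    have hdx := hm x hx'
    have hF := hF' x hx'
    have hyd : HasDerivAt y (deriv y x) x := (hdiff x hx').hasDerivAt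
    have hx1 : HasDerivAt (fun t : ℝ => t ^ (-κ)) (-κ * x ^ (-κ - 1)) x :=
      Real.hasDerivAt_rpow_const (Or.inl (ne_of_gt hx'))
    have hF2 : HasDerivAt (fun t : ℝ => F t ^ b2)
        (lam * (x ^ γ * g x) * b2 * F x ^ (b2 - 1)) x :=
      hF.rpow_const (Or.inl (ne_of_gt hFx))
    have hx2 : HasDerivAt (fun t : ℝ => t ^ (γ + 1)) ((γ + 1) * x ^ (γ + 1 - 1)) x :=
      Real.hasDerivAt_rpow_const (Or.inl (ne_of_gt hx'))
    have hy2 : HasDerivAt (fun t : ℝ => y t ^ qstar)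
        (deriv y x * qstar * y x ^ (qstar - 1)) x :=
      hyd.rpow_const (Or.inl (ne_of_gt hux))
    have hbig := ((hx1.mul hF2).add ((hx2.mul hy2).const_mul A)).sub
      ((hF.mul hyd).const_mul κ)
    have e1 : F x ^ b2 = F x ^ ib * F x := by
      rw [hb2def, Real.rpow_add_one (ne_of_gt hFx)]
    have e2 : F x ^ (b2 - 1) = F x ^ ib := by
      rw [hb2def, add_sub_cancel_right]
    have e3 : x ^ (-κ - 1) = x ^ (-κ) * x⁻¹ := by
      rw [Real.rpow_sub hx', Real.rpow_one, div_eq_mul_inv]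
    have e4 : x ^ (γ + 1 - 1) = x ^ γ := by norm_num
    have e5 : x ^ (γ + 1) = x ^ γ * x := Real.rpow_add_one (ne_of_gt hx') γ
    have e6 : y x ^ qstar = y x ^ q1 * y x := by
      rw [show qstar = qstar - 1 + 1 by ring, Real.rpow_add_one (ne_of_gt hux), ← hq1def]
    have e7 : deriv y x = -(F x ^ ib * (x ^ (-κ) * x⁻¹)) := by
      rw [hdx, show -(α * ib) = -κ - 1 by rw [hibdef, hκdef]; exact aux_exp1 α β h2, e3]
    have hzero : -κ * x ^ (-κ - 1) * F x ^ b2 + x ^ (-κ) * (lam * (x ^ γ * g x) * b2 * F x ^ (b2 - 1))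
        + A * ((γ + 1) * x ^ (γ + 1 - 1) * y x ^ qstar + x ^ (γ + 1) * (deriv y x * qstar * y x ^ (qstar - 1)))
        - κ * (lam * (x ^ γ * g x) * y x + F x * deriv y x) = 0 := by
      simp only [hgdef]
      rw [e1, e2, e3, e4, e5, e6, e7, ← hq1def]
      have hxI : x * x⁻¹ = 1 := mul_inv_cancel₀ (ne_of_gt hx')
      linear_combination (x ^ γ * y x ^ q1 * y x) * sA1
        - (x ^ (-κ) * x ^ γ * y x ^ q1 * F x ^ ib) * sA2
        - (A * qstar * x ^ (-κ) * x ^ γ * y x ^ q1 * F x ^ ib) * hxI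
    rw [hzero] at hbig
    exact hbig
  have hc1pos : 0 < c1 := by
    rw [hc1def]; positivity
  set e₁ : ℝ := (γ + 1) * b2 - κ with he₁def
  clear_value e₁
  have he₁pos : 0 < e₁ := by
    rw [he₁def, hb2def, hibdef, hκdef]
    exact aux_e1pos α β γ h1 h2 h3
  have ylim : Tendsto y (𝓝[>] (0:ℝ)) (𝓝 y₀) := by
    have := (hcont 0 self_mem_Ici).mono_left (nhdsWithin_mono 0 Ioi_subset_Ici_self)
    rwa [hy0] at this
  have hHlim : Tendsto H (𝓝[>] (0:ℝ)) (𝓝 0) := by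
    have hev : (fun x => (F x / x ^ (γ + 1)) ^ b2 * x ^ e₁ + A * (x ^ (γ + 1) * y x ^ qstar)
        - κ * (F x * y x)) =ᶠ[𝓝[>] (0:ℝ)] H := by
      filter_upwards [self_mem_nhdsWithin] with x hx
      have hx' : (0:ℝ) < x := hx
      have hFx := hFpos x hx'
      have hrw : (F x / x ^ (γ + 1)) ^ b2 * x ^ e₁ = x ^ (-κ) * F x ^ b2 := by
        calc (F x / x ^ (γ + 1)) ^ b2 * x ^ e₁
            = (F x ^ b2 / x ^ ((γ + 1) * b2)) * x ^ e₁ := by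
              rw [Real.div_rpow hFx.le (Real.rpow_nonneg hx'.le _), ← Real.rpow_mul hx'.le]
          _ = F x ^ b2 * (x ^ e₁ / x ^ ((γ + 1) * b2)) := by ring
          _ = F x ^ b2 * x ^ (e₁ - (γ + 1) * b2) := by rw [← Real.rpow_sub hx']
          _ = x ^ (-κ) * F x ^ b2 := by
              rw [show e₁ - (γ + 1) * b2 = -κ by rw [he₁def]; ring]; ring
      rw [hHdef, hrw]
    have t1' : Tendsto (fun x => (F x / x ^ (γ + 1)) ^ b2 * x ^ e₁) (𝓝[>] (0:ℝ))
        (𝓝 (c1 ^ b2 * 0)) :=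
      (T1.rpow_const (Or.inl (ne_of_gt hc1pos))).mul (tpow e₁ he₁pos)
    have t2' : Tendsto (fun x => x ^ (γ + 1) * y x ^ qstar) (𝓝[>] (0:ℝ))
        (𝓝 (0 * y₀ ^ qstar)) :=
      (tpow (γ + 1) hγ1).mul (ylim.rpow_const (Or.inl (ne_of_gt hy₀)))
    have t3' : Tendsto F (𝓝[>] (0:ℝ)) (𝓝 0) := T0
    have tall := (t1'.add (t2'.const_mul A)).sub ((t3'.mul ylim).const_mul κ)
    have hval : c1 ^ b2 * 0 + A * (0 * y₀ ^ qstar) - κ * (0 * y₀) = 0 := by ring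
    rw [hval] at tall
    exact Tendsto.congr' hev tall
  have hH0 : ∀ x : ℝ, 0 < x → H x = 0 := fun x hx =>
    const_of_deriv_zero_tendsto H 0 hH' hHlim x hx
  -- the first-order reduction Φ ≡ c₃
  set θ : ℝ := (γ + 1) / κ with hθdef
  set c₃ : ℝ := lam * y₀ ^ σ / (γ + 1) with hc₃def
  clear_value θ c₃
  have hc₃pos : 0 < c₃ := by rw [hc₃def]; positivity
  have sθ1 : θ * κ = γ + 1 := by
    rw [hθdef]; exact div_mul_cancel₀ (γ + 1) (ne_of_gt hκpos)
  have sθ2 : θ * A = lam := by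
    rw [hθdef, hAdef]
    exact aux_thetaA (γ + 1) κ lam (ne_of_gt hγ1) (ne_of_gt hκpos)
  set Φ : ℝ → ℝ := fun x => F x * x ^ (-(γ + 1)) * y x ^ (-θ) with hΦdef
  have hΦ' : ∀ x ∈ Ioi (0:ℝ), HasDerivAt Φ 0 x := by
    intro x hx
    have hx' : (0:ℝ) < x := hx
    have hFx := hFpos x hx'
    have hux := hpos x hx'.le
    have hdx := hm x hx'
    have hF := hF' x hx'
    have hyd : HasDerivAt y (deriv y x) x := (hdiff x hx').hasDerivAt
    have hxI : x * x⁻¹ = 1 := mul_inv_cancel₀ (ne_of_gt hx')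
    have huJ : y x * (y x)⁻¹ = 1 := mul_inv_cancel₀ (ne_of_gt hux)
    have e1 : F x ^ b2 = F x ^ ib * F x := by
      rw [hb2def, Real.rpow_add_one (ne_of_gt hFx)]
    have e5 : x ^ (γ + 1) = x ^ γ * x := Real.rpow_add_one (ne_of_gt hx') γ
    have e6 : y x ^ qstar = y x ^ q1 * y x := by
      rw [show qstar = qstar - 1 + 1 by ring, Real.rpow_add_one (ne_of_gt hux), ← hq1def]
    have e7 : deriv y x = -(F x ^ ib * (x ^ (-κ) * x⁻¹)) := by
      rw [hdx, show -(α * ib) = -κ - 1 by rw [hibdef, hκdef]; exact aux_exp1 α β h2,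
        Real.rpow_sub hx', Real.rpow_one, div_eq_mul_inv]
    have hHx := hH0 x hx'
    rw [hHdef] at hHx
    simp only at hHx
    have h8 : deriv y x * (x * F x) = -(x ^ (-κ) * F x ^ b2) := by
      rw [e7, e1]
      linear_combination (-(x ^ (-κ) * F x ^ ib * F x)) * hxI
    have hd2 : deriv y x * (x * F x)
        = A * (x ^ γ * x * (y x ^ q1 * y x)) - κ * (F x * y x) := by
      rw [h8, ← e5, ← e6]
      linarith [hHx]
    have hK : lam * (x ^ γ * y x ^ q1) * (x * y x) - (γ + 1) * (F x * y x)
        - θ * (deriv y x * (x * F x)) = 0 := by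
      linear_combination (-θ) * hd2 - (x ^ γ * x * y x ^ q1 * y x) * sθ2
        + (F x * y x) * sθ1
    have hx1 : HasDerivAt (fun t : ℝ => t ^ (-(γ + 1))) (-(γ + 1) * x ^ (-(γ + 1) - 1)) x :=
      Real.hasDerivAt_rpow_const (Or.inl (ne_of_gt hx'))
    have hy1 : HasDerivAt (fun t : ℝ => y t ^ (-θ)) (deriv y x * -θ * y x ^ (-θ - 1)) x :=
      hyd.rpow_const (Or.inl (ne_of_gt hux))
    have hbig := (hF.mul hx1).mul hy1
    have f1 : x ^ (-(γ + 1) - 1) = x ^ (-(γ + 1)) * x⁻¹ := by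
      rw [Real.rpow_sub hx', Real.rpow_one, div_eq_mul_inv]
    have f2 : y x ^ (-θ - 1) = y x ^ (-θ) * (y x)⁻¹ := by
      rw [Real.rpow_sub hux, Real.rpow_one, div_eq_mul_inv]
    have hzero : (lam * (x ^ γ * g x) * x ^ (-(γ + 1)) + F x * (-(γ + 1) * x ^ (-(γ + 1) - 1)))
          * y x ^ (-θ) + F x * x ^ (-(γ + 1)) * (deriv y x * -θ * y x ^ (-θ - 1)) = 0 := by
      simp only [hgdef]
      rw [f1, f2]
      linear_combination (x ^ (-(γ + 1)) * y x ^ (-θ) * x⁻¹ * (y x)⁻¹) * hK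
        + (x ^ (-(γ + 1)) * y x ^ (-θ) * (γ + 1) * F x * x⁻¹
            - x ^ (-(γ + 1)) * y x ^ (-θ) * lam * x ^ γ * y x ^ q1 * x * x⁻¹) * huJ
        + (-(x ^ (-(γ + 1)) * y x ^ (-θ) * lam * x ^ γ * y x ^ q1)
            + x ^ (-(γ + 1)) * y x ^ (-θ) * θ * F x * deriv y x * (y x)⁻¹) * hxI
    simp only [Pi.mul_apply] at hbig
    rw [hzero] at hbig
    exact hbig
  have hq1θσ : q1 - θ = σ := by
    rw [hq1def, hq, hθdef, hκdef, hσ]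
    exact aux_q1θσ α β γ h1 h2 hγ1
  have hΦlim : Tendsto Φ (𝓝[>] (0:ℝ)) (𝓝 c₃) := by
    have hev : (fun x => F x / x ^ (γ + 1) * y x ^ (-θ)) =ᶠ[𝓝[>] (0:ℝ)] Φ := by
      filter_upwards [self_mem_nhdsWithin] with x hx
      rw [hΦdef]
      simp only
      rw [Real.rpow_neg (le_of_lt hx) (γ + 1), div_eq_mul_inv]
    have t : Tendsto (fun x => F x / x ^ (γ + 1) * y x ^ (-θ)) (𝓝[>] (0:ℝ))
        (𝓝 (c1 * y₀ ^ (-θ))) := T1.mul (ylim.rpow_const (Or.inl (ne_of_gt hy₀)))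
    have hval : c1 * y₀ ^ (-θ) = c₃ := by
      rw [hc1def, hc₃def, ← hq1θσ, show q1 - θ = q1 + (-θ) by ring, Real.rpow_add hy₀]
      ring
    rw [hval] at t
    exact Tendsto.congr' hev t
  have hΦc := const_of_deriv_zero_tendsto Φ c₃ hΦ' hΦlim
  have hΦ : ∀ x : ℝ, 0 < x → F x = c₃ * x ^ (γ + 1) * y x ^ θ := by
    intro x hx
    have hx' : (0:ℝ) < x := hx
    have hux := hpos x hx'.le
    have hΦx := hΦc x hx
    rw [hΦdef] at hΦx
    simp only at hΦx
    have h9 : x ^ (-(γ + 1)) * x ^ (γ + 1) = 1 := by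
      rw [← Real.rpow_add hx', neg_add_cancel, Real.rpow_zero]
    have h10 : y x ^ (-θ) * y x ^ θ = 1 := by
      rw [← Real.rpow_add hux, neg_add_cancel, Real.rpow_zero]
    linear_combination (x ^ (γ + 1) * y x ^ θ) * hΦx
      + (-(F x * x ^ (-(γ + 1)) * x ^ (γ + 1))) * h10 + (-(F x)) * h9
  -- final integration
  have hfin : ∀ x : ℝ, 0 < x → y x ^ (-σ) = y₀ ^ (-σ) + k₀ * x ^ s := by
    have hsc1 : (γ + 1) * ib + -(α * ib) = s - 1 := by
      rw [hibdef, hs]; exact aux_sc1 α β γ h2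
    have hsc2 : θ * ib + (-σ - 1) = 0 := by
      rw [hθdef, hκdef, hibdef, hσ]; exact aux_sc2 α β γ h1 h2
    have hsc3 : σ * c₃ ^ ib = k₀ * s := by
      rw [hk₀, hσ, hs, hibdef, one_div]
      exact aux_sc3 (c₃ ^ (β + 1)⁻¹) α β γ h1 h2
    have hw' : ∀ x ∈ Ioi (0:ℝ), HasDerivAt (fun t => y t ^ (-σ) - k₀ * t ^ s) 0 x := by
      intro x hx
      have hx' : (0:ℝ) < x := hx
      have hux := hpos x hx'.le
      have hdx := hm x hx'
      have hyd : HasDerivAt y (deriv y x) x := (hdiff x hx').hasDerivAt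
      have w1 : HasDerivAt (fun t => y t ^ (-σ)) (deriv y x * -σ * y x ^ (-σ - 1)) x :=
        hyd.rpow_const (Or.inl (ne_of_gt hux))
      have w2 : HasDerivAt (fun t : ℝ => k₀ * t ^ s) (k₀ * (s * x ^ (s - 1))) x := by
        have h := (Real.hasDerivAt_rpow_const (x := x) (p := s)
          (Or.inl (ne_of_gt hx'))).const_mul k₀
        exact h
      have hFib : F x ^ ib = c₃ ^ ib * x ^ ((γ + 1) * ib) * y x ^ (θ * ib) := by
        rw [hΦ x hx',
          Real.mul_rpow (mul_nonneg hc₃pos.le (Real.rpow_nonneg hx'.le _))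
            (Real.rpow_nonneg hux.le _),
          Real.mul_rpow hc₃pos.le (Real.rpow_nonneg hx'.le _),
          ← Real.rpow_mul hx'.le, ← Real.rpow_mul hux.le]
      have e1' : x ^ ((γ + 1) * ib) * x ^ (-(α * ib)) = x ^ (s - 1) := by
        rw [← Real.rpow_add hx', hsc1]
      have e2' : y x ^ (θ * ib) * y x ^ (-σ - 1) = 1 := by
        rw [← Real.rpow_add hux, hsc2, Real.rpow_zero]
      have hcalc : deriv y x * -σ * y x ^ (-σ - 1) = k₀ * (s * x ^ (s - 1)) := by
        calc deriv y x * -σ * y x ^ (-σ - 1)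
            = σ * c₃ ^ ib * (x ^ ((γ + 1) * ib) * x ^ (-(α * ib)))
              * (y x ^ (θ * ib) * y x ^ (-σ - 1)) := by
              rw [hdx, hFib]; ring
          _ = σ * c₃ ^ ib * x ^ (s - 1) * 1 := by rw [e1', e2']
          _ = k₀ * (s * x ^ (s - 1)) := by linear_combination (x ^ (s - 1)) * hsc3
      have hsub := w1.sub w2
      rw [hcalc] at hsub
      rw [sub_self] at hsub
      exact hsub
    have hwlim : Tendsto (fun t => y t ^ (-σ) - k₀ * t ^ s) (𝓝[>] (0:ℝ))
        (𝓝 (y₀ ^ (-σ))) := by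
      have t1 : Tendsto (fun t => y t ^ (-σ)) (𝓝[>] (0:ℝ)) (𝓝 (y₀ ^ (-σ))) :=
        ylim.rpow_const (Or.inl (ne_of_gt hy₀))
      have t2 := (tpow s hspos).const_mul k₀
      have t3 := t1.sub t2
      simpa using t3
    have hwc := const_of_deriv_zero_tendsto _ _ hw' hwlim
    intro x hx
    have hx2 := hwc x hx
    linarith [hx2]
  intro x hx
  have hyx := hpos x hx
  have hrec : ∀ u : ℝ, 0 < u → (u ^ (-σ)) ^ (-1 / σ) = u := by
    intro u hu
    rw [← Real.rpow_mul hu.le]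
    rw [show (-σ) * (-1 / σ) = 1 by field_simp, Real.rpow_one]
  rcases eq_or_lt_of_le hx with h | h
  · rw [← h, hy0, show ((0:ℝ)) ^ s = 0 from Real.zero_rpow (ne_of_gt hspos), mul_zero, add_zero]
    exact (hrec y₀ hy₀).symm
  · rw [← hfin x h, hrec (y x) hyx]
end

section
/- Let α, β, γ, λ be real numbers with m := γ − α + β + 2 ≠ 0, and let ε ∈ ℝ. Suppose y : (0,∞) → ℝ is differentiable with y′(x) < 0 for all x > 0, and the function x ↦ x^α (−y′(x))^{β+1} is differentiable on (0,∞) with derivative λ x^γ e^{y(x)} for every x > 0 (i.e. y solves −(x^α |y′|^β y′)′ = λ x^γ e^y). Then the transformed function ỹ(x) = y(e^{ε/m} x) + ε again satisfies ỹ′ < 0 on (0,∞), and x ↦ x^α (−ỹ′(x))^{β+1} is differentiable on (0,∞) with derivative λ x^γ e^{ỹ(x)}. (This is the substance of Theorem 4: the one-parameter group generated by X₂ maps solutions of the exponential model equation to solutions.) -/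
/-!
With `c = e^{ε/m}`, the flux `F_y(t) = t^α (-y'(t))^{β+1}` of `ỹ(t) = y(c t) + ε` is
`c^{β+1-α} F_y(c t)`, so by the chain rule its derivative at `x` is `c^{β+2-α}` times
`λ (c x)^γ e^{y(c x)}`, i.e. `c^m λ x^γ e^{y(c x)} = λ x^γ e^{ỹ(x)}` because `c^m = e^ε`.
-/

open Real

noncomputable def flux (α β : ℝ) (y : ℝ → ℝ) (t : ℝ) : ℝ :=
  t ^ α * (-deriv y t) ^ (β + 1)

lemma deriv_comp_mul_add_const (y : ℝ → ℝ) (c ε t : ℝ) :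
    deriv (fun s => y (c * s) + ε) t = c * deriv y (c * t) := by
  rw [deriv_add_const, deriv_comp_mul_left, smul_eq_mul]

lemma rpow_mul_mul_rpow_eq {c t u : ℝ} (α β : ℝ) (hc : 0 < c) (ht : 0 ≤ t) (hu : 0 ≤ u) :
    t ^ α * (c * u) ^ (β + 1) = c ^ (β + 1 - α) * ((c * t) ^ α * u ^ (β + 1)) := by
  have hpow : c ^ (β + 1 - α) * c ^ α = c ^ (β + 1) := by
    rw [← rpow_add hc, sub_add_cancel]
  rw [mul_rpow hc.le hu, mul_rpow hc.le ht, ← hpow]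
  ring

lemma flux_comp_mul_add_const {α β c ε t : ℝ} {y : ℝ → ℝ} (hc : 0 < c) (ht : 0 ≤ t)
    (hy : deriv y (c * t) ≤ 0) :
    flux α β (fun s => y (c * s) + ε) t = c ^ (β + 1 - α) * flux α β y (c * t) := by
  rw [flux, flux, deriv_comp_mul_add_const, neg_mul_eq_mul_neg]
  exact rpow_mul_mul_rpow_eq α β hc ht (neg_nonneg.mpr hy)

theorem hasDerivAt_flux_comp_mul_add_const {α β γ lam c ε x : ℝ} {y : ℝ → ℝ} (hc : 0 < c)
    (hcm : c ^ (γ - α + β + 2) = exp ε) (hdec : ∀ s > 0, deriv y s ≤ 0)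
    (hF : HasDerivAt (flux α β y) (lam * (c * x) ^ γ * exp (y (c * x))) (c * x)) (hx : 0 < x) :
    HasDerivAt (flux α β (fun s => y (c * s) + ε)) (lam * x ^ γ * exp (y (c * x) + ε)) x := by
  have hscaled : HasDerivAt (fun t => c ^ (β + 1 - α) * flux α β y (c * t))
      (c ^ (β + 1 - α) * (lam * (c * x) ^ γ * exp (y (c * x)) * c)) x :=
    (hF.comp x ((hasDerivAt_id x).const_mul c |>.congr_deriv (mul_one c))).const_mul _
  have hvalue : c ^ (β + 1 - α) * (lam * (c * x) ^ γ * exp (y (c * x)) * c)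
      = lam * x ^ γ * exp (y (c * x) + ε) := by
    have hpow : c ^ (β + 1 - α) * c ^ γ * c = exp ε := by
      rw [← hcm, ← rpow_add hc, ← rpow_add_one hc.ne']
      ring_nf
    rw [mul_rpow hc.le hx.le, exp_add, ← hpow]
    ring
  refine hvalue ▸ hscaled.congr_of_eventuallyEq ?_
  filter_upwards [Ioi_mem_nhds hx] with t (ht : 0 < t)
  exact flux_comp_mul_add_const hc ht.le (hdec _ (mul_pos hc ht))

theorem symmetry_exponential_model_equation_general
    (α β γ lam : ℝ) (m : ℝ) (hm0 : m = γ - α + β + 2) (hm : m ≠ 0)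
    (ε : ℝ) (y : ℝ → ℝ)
    (hdec : ∀ x > (0:ℝ), deriv y x < 0)
    (heq : ∀ x > (0:ℝ), HasDerivAt (fun t : ℝ => t ^ α * (-deriv y t) ^ (β + 1))
      (lam * x ^ γ * Real.exp (y x)) x) :
    (∀ x > (0:ℝ), deriv (fun s : ℝ => y (Real.exp (ε / m) * s) + ε) x < 0) ∧
    (∀ x > (0:ℝ), HasDerivAt
      (fun t : ℝ => t ^ α * (-deriv (fun s : ℝ => y (Real.exp (ε / m) * s) + ε) t) ^ (β + 1))
      (lam * x ^ γ * Real.exp (y (Real.exp (ε / m) * x) + ε)) x) := by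
  have hc : 0 < exp (ε / m) := exp_pos _
  have hcm : exp (ε / m) ^ (γ - α + β + 2) = exp ε := by
    rw [← hm0, ← exp_mul, div_mul_cancel₀ _ hm]
  refine ⟨fun x hx => ?_, fun x hx => ?_⟩
  · rw [deriv_comp_mul_add_const]
    exact mul_neg_of_pos_of_neg hc (hdec _ (mul_pos hc hx))
  · exact hasDerivAt_flux_comp_mul_add_const hc hcm (fun s hs => (hdec s hs).le)
      (heq _ (mul_pos hc hx)) hx

/-- the one-parameter group generated by X₂, acting by
ỹ(x) = y(e^{ε/m} x) + ε, maps decreasing solutions of the exponential model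
equation −(x^α |y′|^β y′)′ = λ x^γ e^y to solutions. -/
theorem symmetry_exponential_model_equation
    (α β γ lam : ℝ) (m : ℝ) (hm0 : m = γ - α + β + 2) (hm : m ≠ 0)
    (ε : ℝ) (y : ℝ → ℝ)
    (hdiff : ∀ x > (0:ℝ), DifferentiableAt ℝ y x)
    (hdec : ∀ x > (0:ℝ), deriv y x < 0)
    (heq : ∀ x > (0:ℝ), HasDerivAt (fun t : ℝ => t ^ α * (-deriv y t) ^ (β + 1))
      (lam * x ^ γ * Real.exp (y x)) x) :
    (∀ x > (0:ℝ), deriv (fun s : ℝ => y (Real.exp (ε / m) * s) + ε) x < 0) ∧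
    (∀ x > (0:ℝ), HasDerivAt
      (fun t : ℝ => t ^ α * (-deriv (fun s : ℝ => y (Real.exp (ε / m) * s) + ε) t) ^ (β + 1))
      (lam * x ^ γ * Real.exp (y (Real.exp (ε / m) * x) + ε)) x) :=
  symmetry_exponential_model_equation_general α β γ lam m hm0 hm ε y hdec heq
end

section
/- Let α, β, γ be real numbers with β + 2 > 0 and m := γ − α + β + 2 ≠ 0, let ε ∈ ℝ, and let y : (0,∞) → ℝ be differentiable. Define ỹ(x) = y(e^{ε/m} x) + ε. Then, as Lebesgue integrals of nonnegative measurable functions (possibly infinite), ∫₀^∞ x^α |ỹ′(x)|^{β+2} dx = e^{ε(β+1−α)/m} · ∫₀^∞ x^α |y′(x)|^{β+2} dx and ∫₀^∞ x^γ e^{ỹ(x)} dx = e^{ε(β+1−α)/m} · ∫₀^∞ x^γ e^{y(x)} dx. In particular, if α = β + 1 then both integrals are invariant under the transformation for every ε; and the common factor e^{ε(β+1−α)/m} equals 1 for every ε ≠ 0 if and only if α = β + 1. (This is the substance of Theorem 5: the Lie point symmetry of the exponential model equation is a variational symmetry of J[y] = (1/(β+2))∫₀^∞ x^α|y′|^{β+2}dx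 − λ∫₀^∞ x^γ e^y dx if and only if α = β + 1.) -/
open Real Set MeasureTheory

lemma scale_lint (c : ℝ) (hc : 0 < c) (g : ℝ → ENNReal)
    (hg : AEMeasurable g (volume.restrict (Ioi (0:ℝ)))) :
    ∫⁻ x in Ioi (0:ℝ), g (c * x) = ENNReal.ofReal c⁻¹ * ∫⁻ x in Ioi (0:ℝ), g x := by
  have hpre : (fun x : ℝ => c * x) ⁻¹' (Ioi 0) = Ioi 0 := by
    ext x
    simp only [mem_preimage, mem_Ioi]
    constructor
    · intro h; nlinarith
    · intro h; positivity
  have hmap : Measure.map (fun x : ℝ => c * x) (volume.restrict (Ioi (0:ℝ)))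
      = ENNReal.ofReal c⁻¹ • volume.restrict (Ioi (0:ℝ)) := by
    have := Measure.restrict_map (μ := (volume : Measure ℝ))
      (f := fun x : ℝ => c * x) (s := Ioi (0:ℝ)) (measurable_const_mul c) measurableSet_Ioi
    rw [hpre] at this
    rw [← this, Real.map_volume_mul_left (ne_of_gt hc),
      abs_of_pos (inv_pos.mpr hc), Measure.restrict_smul]
  have hg' : AEMeasurable g (Measure.map (fun x : ℝ => c * x) (volume.restrict (Ioi (0:ℝ)))) := by
    rw [hmap]; exact hg.smul_measure _
  have := lintegral_map' hg' (measurable_const_mul c).aemeasurable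
  rw [hmap, lintegral_smul_measure] at this
  exact this.symm

/-- substance of Theorem 5: under ỹ(x) = y(e^{ε/m} x) + ε both terms of
the functional J[y] = (1/(β+2))∫₀^∞ x^α|y′|^{β+2}dx − λ∫₀^∞ x^γ e^y dx pick up the
factor e^{ε(β+1−α)/m}; in particular the symmetry is variational iff α = β + 1. -/
theorem variational_symmetry_iff_pohozaev_trudinger
    (α β γ : ℝ) (hβ : 0 < β + 2) (m : ℝ) (hm0 : m = γ - α + β + 2) (hm : m ≠ 0)
    (y : ℝ → ℝ) (hdiff : ∀ x > (0:ℝ), DifferentiableAt ℝ y x) :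
    (∀ ε : ℝ,
      (∫⁻ x in Set.Ioi (0:ℝ), ENNReal.ofReal
          (x ^ α * |deriv (fun s : ℝ => y (Real.exp (ε / m) * s) + ε) x| ^ (β + 2))) =
        ENNReal.ofReal (Real.exp (ε * (β + 1 - α) / m)) *
          ∫⁻ x in Set.Ioi (0:ℝ), ENNReal.ofReal (x ^ α * |deriv y x| ^ (β + 2))) ∧
    (∀ ε : ℝ,
      (∫⁻ x in Set.Ioi (0:ℝ), ENNReal.ofReal
          (x ^ γ * Real.exp (y (Real.exp (ε / m) * x) + ε))) =
        ENNReal.ofReal (Real.exp (ε * (β + 1 - α) / m)) *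
          ∫⁻ x in Set.Ioi (0:ℝ), ENNReal.ofReal (x ^ γ * Real.exp (y x))) ∧
    (α = β + 1 → ∀ ε : ℝ,
      (∫⁻ x in Set.Ioi (0:ℝ), ENNReal.ofReal
          (x ^ α * |deriv (fun s : ℝ => y (Real.exp (ε / m) * s) + ε) x| ^ (β + 2))) =
        (∫⁻ x in Set.Ioi (0:ℝ), ENNReal.ofReal (x ^ α * |deriv y x| ^ (β + 2))) ∧
      (∫⁻ x in Set.Ioi (0:ℝ), ENNReal.ofReal
          (x ^ γ * Real.exp (y (Real.exp (ε / m) * x) + ε))) =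
        ∫⁻ x in Set.Ioi (0:ℝ), ENNReal.ofReal (x ^ γ * Real.exp (y x))) ∧
    ((∀ ε : ℝ, ε ≠ 0 → Real.exp (ε * (β + 1 - α) / m) = 1) ↔ α = β + 1) := by
  -- measurability facts
  have hderiv_meas : Measurable (deriv y) := measurable_deriv y
  have hg1 : Measurable fun u : ℝ => ENNReal.ofReal (u ^ α * |deriv y u| ^ (β + 2)) := by
    fun_prop
  have hycont : ContinuousOn y (Ioi (0:ℝ)) := fun x hx =>
    ((hdiff x hx).continuousAt).continuousWithinAt
  have hyae : AEMeasurable y (volume.restrict (Ioi (0:ℝ))) :=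
    hycont.aemeasurable measurableSet_Ioi
  have hg2 : AEMeasurable (fun u : ℝ => ENNReal.ofReal (u ^ γ * Real.exp (y u)))
      (volume.restrict (Ioi (0:ℝ))) := by
    exact ENNReal.measurable_ofReal.comp_aemeasurable
      (((by fun_prop : Measurable fun u : ℝ => u ^ γ).aemeasurable).mul
        (Real.measurable_exp.comp_aemeasurable hyae))
  -- Part 1
  have part1 : ∀ ε : ℝ,
      (∫⁻ x in Set.Ioi (0:ℝ), ENNReal.ofReal
          (x ^ α * |deriv (fun s : ℝ => y (Real.exp (ε / m) * s) + ε) x| ^ (β + 2))) =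
        ENNReal.ofReal (Real.exp (ε * (β + 1 - α) / m)) *
          ∫⁻ x in Set.Ioi (0:ℝ), ENNReal.ofReal (x ^ α * |deriv y x| ^ (β + 2)) := by
    intro ε
    set c := Real.exp (ε / m) with hcdef
    have hc : 0 < c := Real.exp_pos _
    have key : ∀ x ∈ Ioi (0:ℝ),
        ENNReal.ofReal (x ^ α * |deriv (fun s : ℝ => y (c * s) + ε) x| ^ (β + 2))
          = ENNReal.ofReal (c ^ (β + 2 - α)) *
            ENNReal.ofReal ((c * x) ^ α * |deriv y (c * x)| ^ (β + 2)) := by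
      intro x hx
      have hx0 : (0:ℝ) < x := hx
      have hcx : 0 < c * x := mul_pos hc hx0
      have hder : deriv (fun s : ℝ => y (c * s) + ε) x = deriv y (c * x) * c := by
        have h1 : HasDerivAt (fun s : ℝ => y (c * s) + ε) (deriv y (c * x) * (c * 1)) x :=
          (((hdiff _ hcx).hasDerivAt.comp x ((hasDerivAt_id x).const_mul c)).add_const ε)
        simpa using h1.deriv
      rw [← ENNReal.ofReal_mul (Real.rpow_nonneg hc.le _)]
      congr 1
      rw [hder, abs_mul, abs_of_pos hc, Real.mul_rpow (abs_nonneg _) hc.le,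
        Real.mul_rpow hc.le hx0.le,
        show c ^ (β + 2 - α) * (c ^ α * x ^ α * |deriv y (c * x)| ^ (β + 2))
          = (c ^ (β + 2 - α) * c ^ α) * (x ^ α * |deriv y (c * x)| ^ (β + 2)) from by ring,
        ← Real.rpow_add hc, show β + 2 - α + α = β + 2 from by ring]
      ring
    calc (∫⁻ x in Set.Ioi (0:ℝ), ENNReal.ofReal
            (x ^ α * |deriv (fun s : ℝ => y (c * s) + ε) x| ^ (β + 2)))
        = ∫⁻ x in Set.Ioi (0:ℝ), ENNReal.ofReal (c ^ (β + 2 - α)) *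
            ENNReal.ofReal ((c * x) ^ α * |deriv y (c * x)| ^ (β + 2)) :=
          setLIntegral_congr_fun measurableSet_Ioi key
      _ = ENNReal.ofReal (c ^ (β + 2 - α)) *
            ∫⁻ x in Set.Ioi (0:ℝ), ENNReal.ofReal ((c * x) ^ α * |deriv y (c * x)| ^ (β + 2)) :=
          lintegral_const_mul' _ _ ENNReal.ofReal_ne_top
      _ = ENNReal.ofReal (c ^ (β + 2 - α)) * (ENNReal.ofReal c⁻¹ *
            ∫⁻ x in Set.Ioi (0:ℝ), ENNReal.ofReal (x ^ α * |deriv y x| ^ (β + 2))) := by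
          rw [scale_lint c hc _ hg1.aemeasurable]
      _ = ENNReal.ofReal (Real.exp (ε * (β + 1 - α) / m)) *
            ∫⁻ x in Set.Ioi (0:ℝ), ENNReal.ofReal (x ^ α * |deriv y x| ^ (β + 2)) := by
          rw [← mul_assoc, ← ENNReal.ofReal_mul (Real.rpow_nonneg hc.le _)]
          congr 2
          rw [← Real.rpow_neg_one c, ← Real.rpow_add hc,
            show β + 2 - α + (-1) = β + 1 - α from by ring,
            hcdef, ← Real.exp_log (Real.exp_pos (ε / m)), Real.log_exp,
            ← Real.exp_mul]
          congr 1
          ring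
  -- Part 2
  have part2 : ∀ ε : ℝ,
      (∫⁻ x in Set.Ioi (0:ℝ), ENNReal.ofReal
          (x ^ γ * Real.exp (y (Real.exp (ε / m) * x) + ε))) =
        ENNReal.ofReal (Real.exp (ε * (β + 1 - α) / m)) *
          ∫⁻ x in Set.Ioi (0:ℝ), ENNReal.ofReal (x ^ γ * Real.exp (y x)) := by
    intro ε
    set c := Real.exp (ε / m) with hcdef
    have hc : 0 < c := Real.exp_pos _
    have key : ∀ x ∈ Ioi (0:ℝ),
        ENNReal.ofReal (x ^ γ * Real.exp (y (c * x) + ε))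
          = ENNReal.ofReal (Real.exp ε * c ^ (-γ)) *
            ENNReal.ofReal ((c * x) ^ γ * Real.exp (y (c * x))) := by
      intro x hx
      have hx0 : (0:ℝ) < x := hx
      rw [← ENNReal.ofReal_mul (by positivity)]
      congr 1
      rw [Real.exp_add, Real.mul_rpow hc.le hx0.le, Real.rpow_neg hc.le]
      field_simp
    calc (∫⁻ x in Set.Ioi (0:ℝ), ENNReal.ofReal (x ^ γ * Real.exp (y (c * x) + ε)))
        = ∫⁻ x in Set.Ioi (0:ℝ), ENNReal.ofReal (Real.exp ε * c ^ (-γ)) *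
            ENNReal.ofReal ((c * x) ^ γ * Real.exp (y (c * x))) :=
          setLIntegral_congr_fun measurableSet_Ioi key
      _ = ENNReal.ofReal (Real.exp ε * c ^ (-γ)) *
            ∫⁻ x in Set.Ioi (0:ℝ), ENNReal.ofReal ((c * x) ^ γ * Real.exp (y (c * x))) :=
          lintegral_const_mul' _ _ ENNReal.ofReal_ne_top
      _ = ENNReal.ofReal (Real.exp ε * c ^ (-γ)) * (ENNReal.ofReal c⁻¹ *
            ∫⁻ x in Set.Ioi (0:ℝ), ENNReal.ofReal (x ^ γ * Real.exp (y x))) := by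
          rw [scale_lint c hc _ hg2]
      _ = ENNReal.ofReal (Real.exp (ε * (β + 1 - α) / m)) *
            ∫⁻ x in Set.Ioi (0:ℝ), ENNReal.ofReal (x ^ γ * Real.exp (y x)) := by
          rw [← mul_assoc, ← ENNReal.ofReal_mul (by positivity)]
          congr 2
          rw [mul_assoc, ← Real.rpow_neg_one c, ← Real.rpow_add hc, hcdef,
            ← Real.exp_log (Real.exp_pos (ε / m)), Real.log_exp, ← Real.exp_mul,
            ← Real.exp_add]
          congr 1
          field_simp
          rw [hm0]; ring
  refine ⟨part1, part2, ?_, ?_⟩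
  · intro hα ε
    have hz : ε * (β + 1 - α) / m = 0 := by rw [hα]; ring
    constructor
    · rw [part1 ε, hz, Real.exp_zero, ENNReal.ofReal_one, one_mul]
    · rw [part2 ε, hz, Real.exp_zero, ENNReal.ofReal_one, one_mul]
  · constructor
    · intro h
      have := h m hm
      rw [Real.exp_eq_one_iff] at this
      have h2 : m * (β + 1 - α) / m = β + 1 - α := by field_simp
      rw [h2] at this
      linarith
    · intro hα ε _
      rw [hα, show ε * (β + 1 - (β + 1)) / m = 0 from by ring, Real.exp_zero]
end

section
/- Let α > 0, γ, λ be real numbers and 0 < R ≤ ∞. Suppose y : (0,R) → ℝ is twice differentiable with y′(x) < 0 on (0,R), and satisfies (x^α (−y′(x))^α)′ = λ x^γ e^{y(x)} for all x ∈ (0,R) (i.e. y solves −(x^α |y′|^{α−1} y′)′ = λ x^γ e^y, the model equation in the Pohozaev–Trudinger case α = β + 1). Then the function ψ(x) := α x^{α+1} (−y′(x))^{α+1} − (α+1)(γ+1) x^α (−y′(x))^α + λ(α+1) x^{γ+1} e^{y(x)} has vanishing derivative at every x ∈ (0,R); in particular ψ is constant on (0,R). (This is the first integral (Noether conserved quantity)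 obtained from the variational symmetry when α = β + 1.) -/
open Real Set

/-- the first integral (Noether conserved quantity) of the generalized
Liouville–Gelfand equation −(x^α |y′|^{α−1} y′)′ = λ x^γ e^y (the Pohozaev–Trudinger
case α = β + 1): ψ has vanishing derivative on (0,R), hence is constant. -/
theorem first_integral_liouville_gelfand
    (α γ lam : ℝ) (hα : 0 < α)
    (R : EReal) (hR : 0 < R)
    (y : ℝ → ℝ)
    (hdiff : ∀ x : ℝ, 0 < x → (x : EReal) < R → DifferentiableAt ℝ y x)
    (hdiff2 : ∀ x : ℝ, 0 < x → (x : EReal) < R → DifferentiableAt ℝ (deriv y) x)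
    (hdec : ∀ x : ℝ, 0 < x → (x : EReal) < R → deriv y x < 0)
    (heq : ∀ x : ℝ, 0 < x → (x : EReal) < R →
      HasDerivAt (fun t : ℝ => t ^ α * (-deriv y t) ^ α)
        (lam * x ^ γ * Real.exp (y x)) x) :
    let ψ : ℝ → ℝ := fun t =>
      α * t ^ (α + 1) * (-deriv y t) ^ (α + 1)
        - (α + 1) * (γ + 1) * t ^ α * (-deriv y t) ^ α
        + lam * (α + 1) * t ^ (γ + 1) * Real.exp (y t)
    (∀ x : ℝ, 0 < x → (x : EReal) < R → HasDerivAt ψ 0 x) ∧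
    (∀ x₁ x₂ : ℝ, 0 < x₁ → (x₁ : EReal) < R → 0 < x₂ → (x₂ : EReal) < R → ψ x₁ = ψ x₂) := by
  intro ψ
  have key : ∀ x : ℝ, 0 < x → (x : EReal) < R → HasDerivAt ψ 0 x := by
    intro x hx hxR
    set p : ℝ → ℝ := fun t => -deriv y t with hp_def
    have hpdiff : DifferentiableAt ℝ p x := (hdiff2 x hx hxR).neg
    have hpd : HasDerivAt p (deriv p x) x := hpdiff.hasDerivAt
    have hpx : 0 < p x := by simpa [hp_def] using neg_pos.mpr (hdec x hx hxR)
    have hyd : HasDerivAt y (deriv y x) x := (hdiff x hx hxR).hasDerivAt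
    have hu : HasDerivAt (fun t : ℝ => t ^ α * p t ^ α)
        (lam * x ^ γ * Real.exp (y x)) x := heq x hx hxR
    have h1 : HasDerivAt (fun t : ℝ => t ^ α) (α * x ^ (α - 1)) x :=
      Real.hasDerivAt_rpow_const (Or.inl hx.ne')
    have h2 : HasDerivAt (fun t : ℝ => p t ^ α) (α * p x ^ (α - 1) * deriv p x) x := by
      have := (Real.hasDerivAt_rpow_const (p := α) (Or.inl hpx.ne')).comp x hpd
      simpa [Function.comp_def, mul_comm, mul_assoc] using this
    have hu2 : HasDerivAt (fun t : ℝ => t ^ α * p t ^ α)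
        (α * x ^ (α - 1) * p x ^ α + x ^ α * (α * p x ^ (α - 1) * deriv p x)) x :=
      h1.mul h2
    have hrel : α * x ^ (α - 1) * p x ^ α + x ^ α * (α * p x ^ (α - 1) * deriv p x)
        = lam * x ^ γ * Real.exp (y x) := hu2.unique hu
    -- auxiliary function φ, equal to ψ near x
    set φ : ℝ → ℝ := fun t =>
      α * (t * p t * (t ^ α * p t ^ α))
        - (α + 1) * (γ + 1) * (t ^ α * p t ^ α)
        + lam * (α + 1) * (t * (t ^ γ * Real.exp (y t))) with hφ_def
    have h3 : HasDerivAt (fun t : ℝ => t * p t) (1 * p x + x * deriv p x) x :=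
      (hasDerivAt_id x).mul hpd
    have h4 : HasDerivAt (fun t : ℝ => t * p t * (t ^ α * p t ^ α))
        ((1 * p x + x * deriv p x) * (x ^ α * p x ^ α)
          + (x * p x) * (lam * x ^ γ * Real.exp (y x))) x := h3.mul hu
    have h5 : HasDerivAt (fun t : ℝ => t ^ γ) (γ * x ^ (γ - 1)) x :=
      Real.hasDerivAt_rpow_const (Or.inl hx.ne')
    have h6 : HasDerivAt (fun t : ℝ => Real.exp (y t)) (Real.exp (y x) * deriv y x) x :=
      hyd.exp
    have h7 : HasDerivAt (fun t : ℝ => t ^ γ * Real.exp (y t))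
        (γ * x ^ (γ - 1) * Real.exp (y x) + x ^ γ * (Real.exp (y x) * deriv y x)) x :=
      h5.mul h6
    have h8 : HasDerivAt (fun t : ℝ => t * (t ^ γ * Real.exp (y t)))
        (1 * (x ^ γ * Real.exp (y x))
          + x * (γ * x ^ (γ - 1) * Real.exp (y x) + x ^ γ * (Real.exp (y x) * deriv y x))) x :=
      (hasDerivAt_id x).mul h7
    have hφd : HasDerivAt φ
        (α * ((1 * p x + x * deriv p x) * (x ^ α * p x ^ α)
            + (x * p x) * (lam * x ^ γ * Real.exp (y x)))
          - (α + 1) * (γ + 1) * (lam * x ^ γ * Real.exp (y x))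
          + lam * (α + 1) * (1 * (x ^ γ * Real.exp (y x))
            + x * (γ * x ^ (γ - 1) * Real.exp (y x)
              + x ^ γ * (Real.exp (y x) * deriv y x)))) x :=
      ((h4.const_mul α).sub (hu.const_mul ((α + 1) * (γ + 1)))).add (h8.const_mul (lam * (α + 1)))
    -- ψ equals φ near x
    have hev : ψ =ᶠ[nhds x] φ := by
      have hpc : ContinuousAt p x := hpdiff.continuousAt
      have h0 : ∀ᶠ t in nhds x, 0 < p t := hpc.eventually (eventually_gt_nhds hpx)
      have h0' : ∀ᶠ t in nhds x, 0 < t := eventually_gt_nhds hx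
      filter_upwards [h0, h0'] with t hpt ht
      have hne : -deriv y t ≠ 0 := by simpa [hp_def] using hpt.ne'
      simp only [ψ, hφ_def, hp_def]
      rw [Real.rpow_add_one ht.ne' α, Real.rpow_add_one hne α, Real.rpow_add_one ht.ne' γ]
      ring
    have hψd := hφd.congr_of_eventuallyEq hev
    have hzero : (α * ((1 * p x + x * deriv p x) * (x ^ α * p x ^ α)
            + (x * p x) * (lam * x ^ γ * Real.exp (y x)))
          - (α + 1) * (γ + 1) * (lam * x ^ γ * Real.exp (y x))
          + lam * (α + 1) * (1 * (x ^ γ * Real.exp (y x))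
            + x * (γ * x ^ (γ - 1) * Real.exp (y x)
              + x ^ γ * (Real.exp (y x) * deriv y x)))) = 0 := by
      have hxα : x ^ α = x ^ (α - 1) * x := by
        rw [show α = (α - 1) + 1 by ring, Real.rpow_add_one hx.ne']; ring_nf
      have hpα : p x ^ α = p x ^ (α - 1) * p x := by
        rw [show α = (α - 1) + 1 by ring, Real.rpow_add_one hpx.ne']; ring_nf
      have hxγ : x ^ γ = x ^ (γ - 1) * x := by
        rw [show γ = (γ - 1) + 1 by ring, Real.rpow_add_one hx.ne']; ring_nf
      have hdy : deriv y x = -p x := by simp [hp_def]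
      rw [hdy]
      rw [hxα, hpα, hxγ] at hrel ⊢
      linear_combination (x * p x) * hrel
    rw [hzero] at hψd
    exact hψd
  refine ⟨key, ?_⟩
  have half : ∀ x₁ x₂ : ℝ, 0 < x₁ → (x₁ : EReal) < R → 0 < x₂ → (x₂ : EReal) < R →
      x₁ ≤ x₂ → ψ x₂ = ψ x₁ := by
    intro x₁ x₂ h₁ h₁R h₂ h₂R hle
    have hmem : ∀ t ∈ Icc x₁ x₂, 0 < t ∧ (t : EReal) < R := by
      intro t ht
      exact ⟨lt_of_lt_of_le h₁ ht.1,
        lt_of_le_of_lt (EReal.coe_le_coe_iff.mpr ht.2) h₂R⟩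
    refine constant_of_has_deriv_right_zero (f := ψ) ?_ ?_ x₂ ⟨hle, le_refl _⟩
    · intro t ht
      exact (key t (hmem t ht).1 (hmem t ht).2).continuousAt.continuousWithinAt
    · intro t ht
      have := hmem t ⟨ht.1, le_of_lt ht.2⟩
      exact (key t this.1 this.2).hasDerivWithinAt
  intro x₁ x₂ h₁ h₁R h₂ h₂R
  rcases le_total x₁ x₂ with h | h
  · exact (half x₁ x₂ h₁ h₁R h₂ h₂R h).symm
  · exact half x₂ x₁ h₂ h₂R h₁ h₁R h
end

section
/- Let α > 0 and γ, λ be real numbers, and 0 < R ≤ ∞. Suppose y : (0,R) → ℝ is twice differentiable with y′(x) < 0 on (0,R), satisfies (x^α (−y′(x))^α)′ = λ x^γ e^{y(x)} on (0,R), and the first integral vanishes identically: α x^{α+1} (−y′(x))^{α+1} − (α+1)(γ+1) x^α (−y′(x))^α + λ(α+1) x^{γ+1} e^{y(x)} = 0 for all x ∈ (0,R). Then y satisfies the Bernoulli-type second-order equation y′′(x) = ((γ − α + 1)/α) · y′(x)/x + y′(x)²/(α + 1) for all x ∈ (0,R). -/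
open Real Set

/-- a decreasing solution of the generalized Liouville–Gelfand equation
whose first integral vanishes identically satisfies the Bernoulli-type equation
y″ = ((γ−α+1)/α) y′/x + y′²/(α+1). -/
theorem bernoulli_equation_from_vanishing_first_integral
    (α γ lam : ℝ) (hα : 0 < α)
    (R : EReal) (hR : 0 < R)
    (y : ℝ → ℝ)
    (hdiff : ∀ x : ℝ, 0 < x → (x : EReal) < R → DifferentiableAt ℝ y x)
    (hdiff2 : ∀ x : ℝ, 0 < x → (x : EReal) < R → DifferentiableAt ℝ (deriv y) x)
    (hdec : ∀ x : ℝ, 0 < x → (x : EReal) < R → deriv y x < 0)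
    (heq : ∀ x : ℝ, 0 < x → (x : EReal) < R →
      HasDerivAt (fun t : ℝ => t ^ α * (-deriv y t) ^ α)
        (lam * x ^ γ * Real.exp (y x)) x)
    (hψ : ∀ x : ℝ, 0 < x → (x : EReal) < R →
      α * x ^ (α + 1) * (-deriv y x) ^ (α + 1)
        - (α + 1) * (γ + 1) * x ^ α * (-deriv y x) ^ α
        + lam * (α + 1) * x ^ (γ + 1) * Real.exp (y x) = 0) :
    ∀ x : ℝ, 0 < x → (x : EReal) < R →
      deriv (deriv y) x =
        ((γ - α + 1) / α) * (deriv y x / x) + (deriv y x) ^ 2 / (α + 1) := by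
  intro x hx hxR
  have hd2 := hdiff2 x hx hxR
  have hu : 0 < -deriv y x := by linarith [hdec x hx hxR]
  have ha : (0:ℝ) < x ^ α := Real.rpow_pos_of_pos hx α
  have hb : (0:ℝ) < (-deriv y x) ^ α := Real.rpow_pos_of_pos hu α
  have h1 : HasDerivAt (fun t : ℝ => t ^ α) (α * x ^ (α - 1)) x :=
    Real.hasDerivAt_rpow_const (Or.inl hx.ne')
  have hinner : HasDerivAt (fun t => -deriv y t) (-deriv (deriv y) x) x :=
    hd2.hasDerivAt.neg
  have houter : HasDerivAt (fun v : ℝ => v ^ α) (α * (-deriv y x) ^ (α - 1)) (-deriv y x) :=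
    Real.hasDerivAt_rpow_const (Or.inl hu.ne')
  have h2 : HasDerivAt (fun t => (-deriv y t) ^ α)
      (α * (-deriv y x) ^ (α - 1) * -deriv (deriv y) x) x := by
    have := houter.comp x hinner; exact this
  have hprod := h1.mul h2
  have hE := (heq x hx hxR).unique hprod
  have hxa1 : x ^ (α - 1) = x ^ α / x := by
    rw [Real.rpow_sub hx, Real.rpow_one]
  have hua1 : (-deriv y x) ^ (α - 1) = (-deriv y x) ^ α / (-deriv y x) := by
    rw [Real.rpow_sub hu, Real.rpow_one]
  have hxa2 : x ^ (α + 1) = x ^ α * x := by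
    rw [Real.rpow_add hx, Real.rpow_one]
  have hua2 : (-deriv y x) ^ (α + 1) = (-deriv y x) ^ α * (-deriv y x) := by
    rw [Real.rpow_add hu, Real.rpow_one]
  have hxg : x ^ (γ + 1) = x ^ γ * x := by
    rw [Real.rpow_add hx, Real.rpow_one]
  have hP := hψ x hx hxR
  rw [hxa2, hua2, hxg] at hP
  rw [hxa1, hua1] at hE
  set A := x ^ α with hA
  set B := (-deriv y x) ^ α with hB
  set E := lam * x ^ γ * Real.exp (y x) with hEdef
  set Y := deriv (deriv y) x with hY
  set u := -deriv y x with hudef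
  have hyd : deriv y x = -u := by rw [hudef]; ring
  rw [hyd]
  have hune : u ≠ 0 := ne_of_gt hu
  have hxne : x ≠ 0 := ne_of_gt hx
  have hEne : lam * (α + 1) * (x ^ γ * x) * Real.exp (y x) = (α + 1) * x * E := by
    rw [hEdef]; ring
  rw [hEne] at hP
  field_simp at hE ⊢
  nlinarith [hP, hE, mul_pos ha hb, sq_nonneg (A*B), mul_pos hx hu]
end

section
/- Let α > 0, γ > −1, R > 0, λ > 0 be real numbers, set m = α λ^{1/α} R^{(γ+1)/α} / ((α+1)(γ+1)^{(α+1)/α}), and suppose μ > 0 satisfies H(μ) = m μ^{(α+1)/α} − μ + 1 = 0. Define y(x) = −(α+1) · ln( 1/μ + (α (λμ)^{1/α} / ((α+1)(γ+1)^{(α+1)/α})) · x^{(γ+1)/α} ) for x ∈ [0,R]. Then: (i) y(R) = 0 and y(x) > 0 for all x ∈ [0,R); (ii) y is differentiable on (0,R) with y′(x) < 0; (iii) x^α (−y′(x))^α → 0 as x → 0⁺; and (iv) the function x ↦ x^α (−y′(x))^α is differentiable on (0,R) with derivative λ x^γ e^{y(x)} for every x ∈ (0,R), i.e. y solves −(x^α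 |y′|^{α−1} y′)′ = λ x^γ e^y on (0,R). (Verification of the explicit solutions in Theorem 6, parts 1 and 2.) -/
open Real Set Filter Topology

set_option maxHeartbeats 1000000 in
/-- verification of the explicit solutions in Theorem 6, parts 1 and 2:
for any positive root μ of H(μ) = m μ^{(α+1)/α} − μ + 1, the explicit function y solves
the generalized Liouville–Gelfand problem −(x^α |y′|^{α−1} y′)′ = λ x^γ e^y on (0,R)
with y(R) = 0, y > 0 on [0,R), y′ < 0 and x^α(−y′)^α → 0 as x → 0⁺. -/
theorem explicit_solution_liouville_gelfand
    (α γ R lam : ℝ) (hα : 0 < α) (hγ : -1 < γ) (hR : 0 < R) (hlam : 0 < lam)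
    (m : ℝ)
    (hm : m = α * lam ^ (1 / α) * R ^ ((γ + 1) / α)
      / ((α + 1) * (γ + 1) ^ ((α + 1) / α)))
    (μ : ℝ) (hμ : 0 < μ) (hroot : m * μ ^ ((α + 1) / α) - μ + 1 = 0) :
    let y : ℝ → ℝ := fun x => -(α + 1) * Real.log
      (1 / μ + (α * (lam * μ) ^ (1 / α) / ((α + 1) * (γ + 1) ^ ((α + 1) / α)))
        * x ^ ((γ + 1) / α))
    y R = 0 ∧
    (∀ x : ℝ, 0 ≤ x → x < R → 0 < y x) ∧
    (∀ x : ℝ, 0 < x → x < R → DifferentiableAt ℝ y x ∧ deriv y x < 0) ∧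
    Tendsto (fun x : ℝ => x ^ α * (-deriv y x) ^ α)
      (nhdsWithin 0 (Set.Ioi 0)) (nhds 0) ∧
    (∀ x : ℝ, 0 < x → x < R →
      HasDerivAt (fun t : ℝ => t ^ α * (-deriv y t) ^ α)
        (lam * x ^ γ * Real.exp (y x)) x) := by
  have hα1 : (0:ℝ) < α + 1 := by linarith
  have hγ1 : (0:ℝ) < γ + 1 := by linarith
  have hlamμ : 0 < lam * μ := mul_pos hlam hμ
  set p : ℝ := (γ + 1) / α with hp_def
  have hp : 0 < p := div_pos hγ1 hα
  have hαp : α * p = γ + 1 := by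
    rw [hp_def]; field_simp
  set c : ℝ := α * (lam * μ) ^ (1 / α) / ((α + 1) * (γ + 1) ^ ((α + 1) / α)) with hc_def
  have hc : 0 < c := by
    apply div_pos (mul_pos hα (Real.rpow_pos_of_pos hlamμ _))
    exact mul_pos hα1 (Real.rpow_pos_of_pos hγ1 _)
  have hmpos : 0 < m := by
    rw [hm]
    apply div_pos
    · exact mul_pos (mul_pos hα (Real.rpow_pos_of_pos hlam _)) (Real.rpow_pos_of_pos hR _)
    · exact mul_pos hα1 (Real.rpow_pos_of_pos hγ1 _)
  have hμpow : μ ^ ((α+1)/α) = μ * μ ^ (1/α) := by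
    rw [show (α+1)/α = 1 + 1/α by field_simp, Real.rpow_add hμ, Real.rpow_one]
  have hμ1 : 1 < μ := by
    nlinarith [Real.rpow_pos_of_pos hμ ((α+1)/α), hroot]
  have hroot' : m * (μ * μ ^ (1/α)) = μ - 1 := by rw [← hμpow]; linarith
  have hmμ : m * μ ^ (1/α) = 1 - 1/μ := by
    field_simp
    nlinarith [hroot']
  intro y
  have hy : ∀ t : ℝ, y t = -(α+1) * Real.log (1/μ + c * t ^ p) := fun t => rfl
  have hgpos : ∀ t : ℝ, 0 ≤ t → 0 < 1/μ + c * t ^ p := by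
    intro t ht
    have : 0 ≤ c * t ^ p := mul_nonneg hc.le (Real.rpow_nonneg ht _)
    have h1 : 0 < 1/μ := by positivity
    linarith
  have hmul : (lam*μ) ^ (1/α) = lam ^ (1/α) * μ ^ (1/α) := Real.mul_rpow hlam.le hμ.le
  have hcR : c * R ^ p = 1 - 1/μ := by
    rw [← hmμ, hc_def, hm, hmul]; ring
  have hgR : (1/μ + c * R ^ p) = 1 := by rw [hcR]; ring
  -- part 1 : y R = 0
  have part1 : y R = 0 := by rw [hy, hgR, Real.log_one, mul_zero]
  -- part 2 : positivity
  have part2 : ∀ x : ℝ, 0 ≤ x → x < R → 0 < y x := by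
    intro x hx0 hxR
    rw [hy]
    have hlt : 1/μ + c * x ^ p < 1 := by
      have h1 : x ^ p < R ^ p := Real.rpow_lt_rpow hx0 hxR hp
      nlinarith [mul_lt_mul_of_pos_left h1 hc]
    have hlog := Real.log_neg (hgpos x hx0) hlt
    nlinarith
  -- derivative facts
  have hgd : ∀ t : ℝ, 0 < t →
      HasDerivAt (fun s : ℝ => 1/μ + c * s ^ p) (c * (p * t ^ (p-1))) t := by
    intro t ht
    exact ((Real.hasDerivAt_rpow_const (Or.inl ht.ne')).const_mul c).const_add (1/μ)
  have hyd : ∀ t : ℝ, 0 < t →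
      HasDerivAt y (-(α+1) * ((1/μ + c * t ^ p)⁻¹ * (c * (p * t ^ (p-1))))) t := by
    intro t ht
    have hlog : HasDerivAt (fun s : ℝ => Real.log (1/μ + c * s ^ p))
        ((1/μ + c * t ^ p)⁻¹ * (c * (p * t ^ (p-1)))) t := by
      have := (Real.hasDerivAt_log (hgpos t ht.le).ne').comp t (hgd t ht); exact this
    exact hlog.const_mul (-(α+1))
  have hyderiv : ∀ t : ℝ, 0 < t →
      deriv y t = -(α+1) * ((1/μ + c * t ^ p)⁻¹ * (c * (p * t ^ (p-1)))) :=
    fun t ht => (hyd t ht).deriv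
  -- part 3 : differentiability and negativity of derivative
  have part3 : ∀ x : ℝ, 0 < x → x < R → DifferentiableAt ℝ y x ∧ deriv y x < 0 := by
    intro x hx _
    refine ⟨(hyd x hx).differentiableAt, ?_⟩
    rw [hyderiv x hx]
    have h1 : 0 < (1/μ + c * x ^ p)⁻¹ := inv_pos.mpr (hgpos x hx.le)
    have h2 : 0 < c * (p * x ^ (p-1)) :=
      mul_pos hc (mul_pos hp (Real.rpow_pos_of_pos hx _))
    have h3 := mul_pos h1 h2
    nlinarith [mul_pos hα1 h3]
  set A : ℝ := (α+1) * (c * p) with hA_def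
  have hA : 0 < A := mul_pos hα1 (mul_pos hc hp)
  have hAeq : A = (lam * μ / (γ+1)) ^ (1/α) := by
    have h1 : (γ+1) ^ ((α+1)/α) = (γ+1) * (γ+1) ^ (1/α) := by
      rw [show (α+1)/α = 1 + 1/α by field_simp, Real.rpow_add hγ1, Real.rpow_one]
    rw [hA_def, hc_def, hp_def, h1, Real.div_rpow hlamμ.le hγ1.le]
    have h2 : (γ+1) ^ (1/α) ≠ 0 := (Real.rpow_pos_of_pos hγ1 _).ne'
    field_simp
  have hK : A ^ α = lam * μ / (γ+1) := by
    rw [hAeq, ← Real.rpow_mul (by positivity), one_div, inv_mul_cancel₀ hα.ne',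
      Real.rpow_one]
  -- the key pointwise identity
  have hFeq : ∀ t : ℝ, 0 < t →
      t ^ α * (-deriv y t) ^ α = A ^ α * (t ^ (γ+1) * (1/μ + c * t ^ p) ^ (-α)) := by
    intro t ht
    have hgt := hgpos t ht.le
    have hneg : -deriv y t = A * t ^ (p-1) / (1/μ + c * t ^ p) := by
      rw [hyderiv t ht, hA_def]; ring
    have h1 : (A * t ^ (p-1) / (1/μ + c * t ^ p)) ^ α
        = A ^ α * (t ^ (p-1)) ^ α / (1/μ + c * t ^ p) ^ α := by
      rw [Real.div_rpow (by positivity) hgt.le,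
        Real.mul_rpow hA.le (Real.rpow_nonneg ht.le _)]
    have h2 : t ^ α * (t ^ (p-1)) ^ α = t ^ (γ+1) := by
      rw [← Real.rpow_mul ht.le, ← Real.rpow_add ht]
      congr 1
      linear_combination hαp
    rw [hneg, h1, Real.rpow_neg hgt.le, ← h2]
    ring
  -- part 4 : the limit
  have part4 : Tendsto (fun x : ℝ => x ^ α * (-deriv y x) ^ α)
      (nhdsWithin 0 (Set.Ioi 0)) (nhds 0) := by
    have c1 : ContinuousAt (fun t : ℝ => t ^ (γ+1)) 0 :=
      Real.continuousAt_rpow_const 0 _ (Or.inr hγ1.le)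
    have cg : ContinuousAt (fun t : ℝ => 1/μ + c * t ^ p) 0 :=
      continuousAt_const.add (continuousAt_const.mul
        (Real.continuousAt_rpow_const 0 _ (Or.inr hp.le)))
    have hg0 : (1/μ + c * (0:ℝ) ^ p) ≠ 0 := (hgpos 0 le_rfl).ne'
    have c2 : ContinuousAt (fun t : ℝ => (1/μ + c * t ^ p) ^ (-α)) 0 :=
      cg.rpow_const (Or.inl hg0)
    have cfull : ContinuousAt
        (fun t : ℝ => A ^ α * (t ^ (γ+1) * (1/μ + c * t ^ p) ^ (-α))) 0 :=
      continuousAt_const.mul (c1.mul c2)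
    have hval : A ^ α * ((0:ℝ) ^ (γ+1) * (1/μ + c * (0:ℝ) ^ p) ^ (-α)) = 0 := by
      rw [Real.zero_rpow hγ1.ne']
      ring
    have hlim : Tendsto (fun t : ℝ => A ^ α * (t ^ (γ+1) * (1/μ + c * t ^ p) ^ (-α)))
        (nhdsWithin 0 (Set.Ioi 0)) (nhds 0) := by
      have h0 : Tendsto (fun t : ℝ => A ^ α * (t ^ (γ+1) * (1/μ + c * t ^ p) ^ (-α)))
          (nhdsWithin 0 (Set.Ioi 0))
          (nhds (A ^ α * ((0:ℝ) ^ (γ+1) * (1/μ + c * (0:ℝ) ^ p) ^ (-α)))) :=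
        cfull.tendsto.mono_left nhdsWithin_le_nhds
      rwa [hval] at h0
    exact Tendsto.congr' (by
      filter_upwards [self_mem_nhdsWithin] with t ht
      exact (hFeq t ht).symm) hlim
  -- part 5 : the equation
  have part5 : ∀ x : ℝ, 0 < x → x < R →
      HasDerivAt (fun t : ℝ => t ^ α * (-deriv y t) ^ α)
        (lam * x ^ γ * Real.exp (y x)) x := by
    intro x hx _
    have hgx := hgpos x hx.le
    have h1 : HasDerivAt (fun t : ℝ => t ^ (γ+1)) ((γ+1) * x ^ γ) x := by
      have := Real.hasDerivAt_rpow_const (x := x) (p := γ+1) (Or.inl hx.ne')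
      simpa using this
    have h2 : HasDerivAt (fun t : ℝ => (1/μ + c * t ^ p) ^ (-α))
        ((c * (p * x ^ (p-1))) * (-α) * (1/μ + c * x ^ p) ^ (-α - 1)) x :=
      (hgd x hx).rpow_const (Or.inl hgx.ne')
    have h3 : HasDerivAt (fun t : ℝ => A ^ α * (t ^ (γ+1) * (1/μ + c * t ^ p) ^ (-α)))
        (A ^ α * ((γ+1) * x ^ γ * (1/μ + c * x ^ p) ^ (-α)
          + x ^ (γ+1) * ((c * (p * x ^ (p-1))) * (-α) * (1/μ + c * x ^ p) ^ (-α - 1)))) x :=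
      (h1.mul h2).const_mul _
    have h4 : HasDerivAt (fun t : ℝ => t ^ α * (-deriv y t) ^ α)
        (A ^ α * ((γ+1) * x ^ γ * (1/μ + c * x ^ p) ^ (-α)
          + x ^ (γ+1) * ((c * (p * x ^ (p-1))) * (-α) * (1/μ + c * x ^ p) ^ (-α - 1)))) x := by
      apply h3.congr_of_eventuallyEq
      filter_upwards [Ioi_mem_nhds hx] with t ht
      exact hFeq t ht
    have e1 : Real.exp (y x) = (1/μ + c * x ^ p) ^ (-α - 1) := by
      rw [hy, Real.rpow_def_of_pos hgx]
      congr 1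
      ring
    have e2 : (1/μ + c * x ^ p) ^ (-α) = (1/μ + c * x ^ p) * (1/μ + c * x ^ p) ^ (-α - 1) := by
      conv_lhs => rw [show (-α : ℝ) = 1 + (-α - 1) by ring]
      rw [Real.rpow_add hgx, Real.rpow_one]
    have e3 : x ^ (γ+1) * x ^ (p-1) = x ^ γ * x ^ p := by
      rw [← Real.rpow_add hx, ← Real.rpow_add hx]
      congr 1; ring
    have hKμ : A ^ α * (γ+1) * (1/μ) = lam := by
      rw [hK]; field_simp
    have key : A ^ α * ((γ+1) * x ^ γ * (1/μ + c * x ^ p) ^ (-α)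
          + x ^ (γ+1) * ((c * (p * x ^ (p-1))) * (-α) * (1/μ + c * x ^ p) ^ (-α - 1)))
        = lam * x ^ γ * Real.exp (y x) := by
      rw [e1, e2]
      linear_combination (-(α*c*p*A^α*(1/μ + c*x^p)^(-α-1))) * e3
        + (-(c*A^α*(1/μ + c*x^p)^(-α-1)*x^γ*x^p)) * hαp
        + (x^γ*(1/μ + c*x^p)^(-α-1)) * hKμ
    rw [← key]
    exact h4
  exact ⟨part1, part2, part3, part4, part5⟩
end

section
/- Let α > 0 and m > 0 be real numbers, define H(μ) = m μ^{(α+1)/α} − μ + 1 for μ > 0, and set m₀ = α / (α+1)^{(α+1)/α}. Then: (i) if 0 < m < m₀, the equation H(μ) = 0 has exactly two solutions in (0,∞); (ii) if m = m₀, it has exactly one solution in (0,∞), namely μ = α + 1; and (iii) if m > m₀, it has no solution in (0,∞). -/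
open Real

private lemma mid_neg {f : ℝ → ℝ} (hf : StrictConvexOn ℝ (Set.Ici 0) f) {x y z : ℝ}
    (hx : 0 ≤ x) (hz : 0 ≤ z) (hxy : x < y) (hyz : y < z)
    (h0x : f x = 0) (h0z : f z = 0) : f y < 0 := by
  have hzx : 0 < z - x := by linarith
  have ha : 0 < (z - y) / (z - x) := div_pos (by linarith) hzx
  have hb : 0 < (y - x) / (z - x) := div_pos (by linarith) hzx
  have hab : (z - y) / (z - x) + (y - x) / (z - x) = 1 := by field_simp; ring
  have hzx' : z - x ≠ 0 := hzx.ne'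
  have hc : (z - y) / (z - x) * x + (y - x) / (z - x) * z = y := by
    field_simp; ring
  have h := hf.2 (Set.mem_Ici.2 hx) (Set.mem_Ici.2 hz) (by intro h; linarith) ha hb hab
  simp only [smul_eq_mul] at h
  rw [hc, h0x, h0z] at h
  simpa using h

/-- Key facts about `H` at the critical value `m₀`: `α+1` is a root, and `H` is
strictly positive elsewhere on `(0,∞)`. -/
private lemma Hm0_aux (α : ℝ) (hα : 0 < α) :
    (α / (α + 1) ^ ((α + 1) / α)) * (α + 1) ^ ((α + 1) / α) - (α + 1) + 1 = 0 ∧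
    ∀ μ : ℝ, 0 < μ → μ ≠ α + 1 →
      0 < (α / (α + 1) ^ ((α + 1) / α)) * μ ^ ((α + 1) / α) - μ + 1 := by
  have hα1 : (0:ℝ) < α + 1 := by linarith
  have hpow : 0 < (α + 1) ^ ((α + 1) / α) := Real.rpow_pos_of_pos hα1 _
  set m₀ : ℝ := α / (α + 1) ^ ((α + 1) / α) with hm0def
  have hm₀ : 0 < m₀ := div_pos hα hpow
  have hp0 : 0 < (α + 1) / α := by positivity
  have hp1 : 1 < (α + 1) / α := by rw [lt_div_iff₀ hα]; linarith
  have key1 : m₀ * (α + 1) ^ ((α + 1) / α) = α := by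
    rw [hm0def]; field_simp
  have hzero : m₀ * (α + 1) ^ ((α + 1) / α) - (α + 1) + 1 = 0 := by rw [key1]; ring
  have key2 : m₀ * ((α + 1) / α) * (α + 1) ^ ((α + 1) / α - 1) = 1 := by
    rw [Real.rpow_sub hα1, Real.rpow_one, hm0def]
    field_simp
  set f : ℝ → ℝ := fun μ => m₀ * μ ^ ((α + 1) / α) - μ + 1 with hfdef
  have hderiv : ∀ x : ℝ, x ≠ 0 →
      HasDerivAt f (m₀ * ((α + 1) / α * x ^ ((α + 1) / α - 1)) - 1) x := by
    intro x hx
    have h1 := (Real.hasDerivAt_rpow_const (p := (α + 1) / α) (Or.inl hx)).const_mul m₀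
    have h2 := h1.sub (hasDerivAt_id' (x := x))
    simpa [hfdef] using h2.add_const 1
  have hcont : Continuous f := by
    have := Real.continuous_rpow_const hp0.le
    fun_prop
  have hanti : StrictAntiOn f (Set.Icc 0 (α + 1)) := by
    apply strictAntiOn_of_deriv_neg (convex_Icc _ _) hcont.continuousOn
    intro x hx
    rw [interior_Icc, Set.mem_Ioo] at hx
    rw [(hderiv x (ne_of_gt hx.1)).deriv]
    have hlt : x ^ ((α + 1) / α - 1) < (α + 1) ^ ((α + 1) / α - 1) :=
      Real.rpow_lt_rpow hx.1.le hx.2 (by linarith)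
    nlinarith [mul_lt_mul_of_pos_left hlt (mul_pos hm₀ hp0)]
  have hmono : StrictMonoOn f (Set.Ici (α + 1)) := by
    apply strictMonoOn_of_deriv_pos (convex_Ici _) hcont.continuousOn
    intro x hx
    rw [interior_Ici, Set.mem_Ioi] at hx
    rw [(hderiv x (ne_of_gt (by linarith))).deriv]
    have hlt : (α + 1) ^ ((α + 1) / α - 1) < x ^ ((α + 1) / α - 1) :=
      Real.rpow_lt_rpow hα1.le hx (by linarith)
    nlinarith [mul_lt_mul_of_pos_left hlt (mul_pos hm₀ hp0)]
  refine ⟨hzero, fun μ hμ hne => ?_⟩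
  have hfz : f (α + 1) = 0 := hzero
  rcases lt_or_gt_of_ne hne with h | h
  · have h5 : f (α + 1) < f μ :=
      hanti ⟨hμ.le, h.le⟩ ⟨hα1.le, le_rfl⟩ h
    have : (0:ℝ) < f μ := by rw [← hfz]; exact h5
    exact this
  · have h5 : f (α + 1) < f μ := hmono (Set.mem_Ici.2 le_rfl) (Set.mem_Ici.2 h.le) h
    have : (0:ℝ) < f μ := by rw [← hfz]; exact h5
    exact this

/-- root counting for H(μ) = m μ^{(α+1)/α} − μ + 1 on (0,∞):
exactly two roots if 0 < m < m₀ := α/(α+1)^{(α+1)/α}, exactly one root (namely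
μ = α + 1) if m = m₀, and no roots if m > m₀. -/
theorem root_count_H
    (α m : ℝ) (hα : 0 < α) (hm : 0 < m)
    (m₀ : ℝ) (hm₀ : m₀ = α / (α + 1) ^ ((α + 1) / α)) :
    (m < m₀ → ∃ μ₁ μ₂ : ℝ, 0 < μ₁ ∧ 0 < μ₂ ∧ μ₁ ≠ μ₂ ∧
      m * μ₁ ^ ((α + 1) / α) - μ₁ + 1 = 0 ∧
      m * μ₂ ^ ((α + 1) / α) - μ₂ + 1 = 0 ∧
      ∀ μ : ℝ, 0 < μ → m * μ ^ ((α + 1) / α) - μ + 1 = 0 → μ = μ₁ ∨ μ = μ₂) ∧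
    (m = m₀ → ∀ μ : ℝ, 0 < μ →
      (m * μ ^ ((α + 1) / α) - μ + 1 = 0 ↔ μ = α + 1)) ∧
    (m₀ < m → ∀ μ : ℝ, 0 < μ → m * μ ^ ((α + 1) / α) - μ + 1 ≠ 0) := by
  subst hm₀
  obtain ⟨hzero, hpos⟩ := Hm0_aux α hα
  have hα1 : (0:ℝ) < α + 1 := by linarith
  have hpow : 0 < (α + 1) ^ ((α + 1) / α) := Real.rpow_pos_of_pos hα1 _
  have hp0 : 0 < (α + 1) / α := by positivity
  have hp1 : 1 < (α + 1) / α := by rw [lt_div_iff₀ hα]; linarith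
  set m₀ : ℝ := α / (α + 1) ^ ((α + 1) / α) with hm0def
  -- nonnegativity of H at m₀
  have hge : ∀ μ : ℝ, 0 < μ → 0 ≤ m₀ * μ ^ ((α + 1) / α) - μ + 1 := by
    intro μ hμ
    rcases eq_or_ne μ (α + 1) with rfl | hne
    · exact le_of_eq hzero.symm
    · exact (hpos μ hμ hne).le
  refine ⟨?_, ?_, ?_⟩
  · -- two roots when m < m₀
    intro hlt
    set f : ℝ → ℝ := fun μ => m * μ ^ ((α + 1) / α) - μ + 1 with hfdef
    have hcont : Continuous f := by
      have := Real.continuous_rpow_const hp0.le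
      fun_prop
    have hfA : f (α + 1) < 0 := by
      show m * (α + 1) ^ ((α + 1) / α) - (α + 1) + 1 < 0
      nlinarith [hzero, hpow]
    have hfhalf : 0 < f (1/2 : ℝ) := by
      show 0 < m * (1/2 : ℝ) ^ ((α + 1) / α) - 1/2 + 1
      have : 0 < m * (1/2 : ℝ) ^ ((α + 1) / α) := by positivity
      linarith
    have h12 : (1/2 : ℝ) ≤ α + 1 := by linarith
    obtain ⟨μ₁, hμ₁mem, hμ₁⟩ :=
      intermediate_value_Icc' h12 hcont.continuousOn ⟨hfA.le, hfhalf.le⟩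
    have hμ₁pos : 0 < μ₁ := lt_of_lt_of_le (by norm_num) hμ₁mem.1
    have hμ₁lt : μ₁ < α + 1 := by
      rcases lt_or_eq_of_le hμ₁mem.2 with h | h
      · exact h
      · exfalso; rw [h] at hμ₁; rw [hμ₁] at hfA; exact lt_irrefl _ hfA
    -- a large point where f is positive
    set M : ℝ := max (α + 2) ((1/m) ^ α) with hMdef
    have hM1 : α + 2 ≤ M := le_max_left _ _
    have hM0 : 0 < M := lt_of_lt_of_le (by linarith) hM1
    have hMa : 1/m ≤ M ^ (1/α) := by
      have h1 : ((1/m : ℝ) ^ α) ^ (1/α) ≤ M ^ (1/α) :=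
        Real.rpow_le_rpow (Real.rpow_nonneg (by positivity) α) (le_max_right _ _)
          (by positivity)
      rwa [← Real.rpow_mul (by positivity), mul_one_div_cancel hα.ne',
        Real.rpow_one] at h1
    have hfM : 0 < f M := by
      show 0 < m * M ^ ((α + 1) / α) - M + 1
      have hMp : M ^ ((α + 1) / α) = M * M ^ (1/α) := by
        rw [show (α + 1) / α = 1 + 1/α by field_simp, Real.rpow_add hM0, Real.rpow_one]
      rw [hMp]
      have h1 : 1 ≤ m * M ^ (1/α) := by
        calc (1:ℝ) = m * (1/m) := by field_simp
        _ ≤ m * M ^ (1/α) := mul_le_mul_of_nonneg_left hMa hm.le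
      nlinarith [hM0]
    have hA1M : α + 1 ≤ M := by linarith
    obtain ⟨μ₂, hμ₂mem, hμ₂⟩ :=
      intermediate_value_Icc hA1M hcont.continuousOn ⟨hfA.le, hfM.le⟩
    have hμ₂gt : α + 1 < μ₂ := by
      rcases lt_or_eq_of_le hμ₂mem.1 with h | h
      · exact h
      · exfalso; rw [← h] at hμ₂; rw [hμ₂] at hfA; exact lt_irrefl _ hfA
    have hμ₂pos : 0 < μ₂ := by linarith
    have hμ₁₂ : μ₁ < μ₂ := by linarith
    -- strict convexity of f
    have hconv : StrictConvexOn ℝ (Set.Ici 0) f := by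
      refine ⟨convex_Ici 0, fun x hx y hy hxy a b ha hb hab => ?_⟩
      have h := (strictConvexOn_rpow hp1).2 hx hy hxy ha hb hab
      simp only [smul_eq_mul] at h ⊢
      show m * (a * x + b * y) ^ ((α + 1) / α) - (a * x + b * y) + 1 <
        a * (m * x ^ ((α + 1) / α) - x + 1) + b * (m * y ^ ((α + 1) / α) - y + 1)
      nlinarith [mul_lt_mul_of_pos_left h hm]
    refine ⟨μ₁, μ₂, hμ₁pos, hμ₂pos, ne_of_lt hμ₁₂, hμ₁, hμ₂, ?_⟩
    intro μ hμ hroot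
    have hroot' : f μ = 0 := hroot
    rcases lt_trichotomy μ μ₁ with h | h | h
    · exfalso
      have := mid_neg hconv hμ.le hμ₂pos.le h (by linarith) hroot' hμ₂
      rw [hμ₁] at this; exact lt_irrefl _ this
    · exact Or.inl h
    · rcases lt_trichotomy μ μ₂ with h2 | h2 | h2
      · exfalso
        have := mid_neg hconv hμ₁pos.le hμ₂pos.le h h2 hμ₁ hμ₂
        rw [hroot'] at this; exact lt_irrefl _ this
      · exact Or.inr h2
      · exfalso
        have := mid_neg hconv hμ₁pos.le hμ.le hμ₁₂ h2 hμ₁ hroot'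
        rw [hμ₂] at this; exact lt_irrefl _ this
  · -- exactly one root when m = m₀
    intro heq μ hμ
    subst heq
    constructor
    · intro h
      by_contra hne
      have := hpos μ hμ hne
      linarith
    · rintro rfl
      exact hzero
  · -- no roots when m > m₀
    intro hlt μ hμ heq
    have h1 := hge μ hμ
    have h2 : 0 < μ ^ ((α + 1) / α) := Real.rpow_pos_of_pos hμ _
    nlinarith
end

section
/- Let α > 0, γ > −1, R > 0 be real numbers and set λ* = (γ+1)^{α+1} / ((α+1) R^{γ+1}). Suppose λ ≤ 0 or λ > λ*. Then there is no function y : [0,R] → ℝ such that: y is continuous on [0,R] with y(R) = 0 and y(x) > 0 for all x ∈ [0,R); y is differentiable on (0,R); the function x ↦ x^α |y′(x)|^{α−1} y′(x) is differentiable on (0,R) with derivative −λ x^γ e^{y(x)} for every x ∈ (0,R); and x^α |y′(x)|^{α−1} y′(x) → 0 as x → 0⁺. (Nonexistence part, Theorem 6, part 3.) -/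
open Real Set Filter Topology

/-- nonexistence, Theorem 6 part 3: for λ ≤ 0 or λ > λ* the generalized
Liouville–Gelfand problem −(x^α |y′|^{α−1} y′)′ = λ x^γ e^y on (0,R), y(R) = 0,
y > 0 on [0,R), x^α|y′|^{α−1}y′ → 0 as x → 0⁺, has no solution. -/
theorem nonexistence_liouville_gelfand
    (α γ R lam : ℝ) (hα : 0 < α) (hγ : -1 < γ) (hR : 0 < R)
    (hlam : lam ≤ 0 ∨ (γ + 1) ^ (α + 1) / ((α + 1) * R ^ (γ + 1)) < lam) :
    ¬ ∃ y : ℝ → ℝ,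
      ContinuousOn y (Set.Icc 0 R) ∧ y R = 0 ∧
      (∀ x : ℝ, 0 ≤ x → x < R → 0 < y x) ∧
      (∀ x : ℝ, 0 < x → x < R → DifferentiableAt ℝ y x) ∧
      (∀ x : ℝ, 0 < x → x < R →
        HasDerivAt (fun t : ℝ => t ^ α * |deriv y t| ^ (α - 1) * deriv y t)
          (-(lam * x ^ γ * Real.exp (y x))) x) ∧
      Tendsto (fun x : ℝ => x ^ α * |deriv y x| ^ (α - 1) * deriv y x)
        (nhdsWithin 0 (Set.Ioi 0)) (nhds 0) := by
  rintro ⟨y, hycont, hyR, hypos, hydiff, hode, hlim⟩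
  set w : ℝ → ℝ := fun t : ℝ => t ^ α * |deriv y t| ^ (α - 1) * deriv y t with hw_def
  have hγ1 : (0:ℝ) < γ + 1 := by linarith
  -- MVT tool for w
  have hwslope : ∀ a b : ℝ, 0 < a → a < b → b < R →
      ∃ c ∈ Ioo a b, -(lam * c ^ γ * Real.exp (y c)) = (w b - w a) / (b - a) := by
    intro a b ha hab hbR
    refine exists_hasDerivAt_eq_slope w _ hab ?_ ?_
    · intro t ht
      exact (hode t (lt_of_lt_of_le ha ht.1) (lt_of_le_of_lt ht.2 hbR)).continuousAt.continuousWithinAt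
    · intro t ht
      exact hode t (ha.trans ht.1) (ht.2.trans hbR)
  rcases hlam with hl | hl
  · -- Case λ ≤ 0 : w is nondecreasing, hence y' ≥ 0, contradicting y(R/2) > 0
    have hwmono : ∀ a x : ℝ, 0 < a → a < x → x < R → w a ≤ w x := by
      intro a x ha hax hxR
      obtain ⟨c, hc, hceq⟩ := hwslope a x ha hax hxR
      have hcpos : 0 < c := ha.trans hc.1
      have hnn : 0 ≤ (w x - w a) / (x - a) := by
        rw [← hceq]
        have : 0 < c ^ γ * Real.exp (y c) := by positivity
        nlinarith
      have := mul_nonneg hnn (sub_pos.mpr hax).le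
      rw [div_mul_cancel₀ _ (sub_pos.mpr hax).ne'] at this
      linarith
    have hwnn : ∀ x : ℝ, 0 < x → x < R → 0 ≤ w x := by
      intro x hx hxR
      have hne : (𝓝[Ioo (0:ℝ) x] 0).NeBot := by
        refine mem_closure_iff_nhdsWithin_neBot.mp ?_
        rw [closure_Ioo hx.ne]
        exact ⟨le_refl 0, hx.le⟩
      have hT : Tendsto w (𝓝[Ioo (0:ℝ) x] 0) (𝓝 0) :=
        hlim.mono_left (nhdsWithin_mono 0 fun t ht => ht.1)
      refine le_of_tendsto hT ?_
      filter_upwards [eventually_mem_nhdsWithin] with a ha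
      exact hwmono a x ha.1 ha.2 hxR
    have hderiv_nn : ∀ x : ℝ, 0 < x → x < R → 0 ≤ deriv y x := by
      intro x hx hxR
      by_contra hneg
      push_neg at hneg
      have habs : |deriv y x| = -(deriv y x) := abs_of_neg hneg
      have hsp : 0 < -(deriv y x) := by linarith
      have h1 : 0 < x ^ α * |deriv y x| ^ (α - 1) := by
        rw [habs]
        exact mul_pos (Real.rpow_pos_of_pos hx α) (Real.rpow_pos_of_pos hsp (α - 1))
      have : w x < 0 := mul_neg_of_pos_of_neg h1 hneg
      exact absurd (hwnn x hx hxR) (not_le.mpr this)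
    -- MVT for y on [R/2, R]
    have hhalf : (0:ℝ) < R / 2 := by linarith
    obtain ⟨c, hc, hceq⟩ := exists_hasDerivAt_eq_slope y (deriv y) (by linarith : R / 2 < R)
      (hycont.mono (Icc_subset_Icc (by linarith) le_rfl))
      (fun t ht => (hydiff t (hhalf.trans ht.1) ht.2).hasDerivAt)
    have h1 : 0 ≤ deriv y c := hderiv_nn c (hhalf.trans hc.1) hc.2
    have h2 : 0 < y (R / 2) := hypos (R / 2) hhalf.le (by linarith)
    rw [hceq, hyR] at h1
    have : (0 - y (R / 2)) / (R - R / 2) < 0 := by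
      apply div_neg_of_neg_of_pos <;> linarith
    linarith
  · -- Case λ > λ*
    have hlamstar : (0:ℝ) < (γ + 1) ^ (α + 1) / ((α + 1) * R ^ (γ + 1)) := by positivity
    have hlam0 : 0 < lam := hlamstar.trans hl
    -- w < 0 on (0,R)
    have hwanti : ∀ a x : ℝ, 0 < a → a < x → x < R → w x < w a := by
      intro a x ha hax hxR
      obtain ⟨c, hc, hceq⟩ := hwslope a x ha hax hxR
      have hcpos : 0 < c := ha.trans hc.1
      have hneg : (w x - w a) / (x - a) < 0 := by
        rw [← hceq]
        have : 0 < c ^ γ * Real.exp (y c) := by positivity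
        nlinarith
      have := mul_neg_of_neg_of_pos hneg (sub_pos.mpr hax)
      rw [div_mul_cancel₀ _ (sub_pos.mpr hax).ne'] at this
      linarith
    have hwneg : ∀ x : ℝ, 0 < x → x < R → w x < 0 := by
      intro x hx hxR
      have hx2 : 0 < x / 2 := by linarith
      have hhalf : w (x / 2) ≤ 0 := by
        have hne : (𝓝[Ioo (0:ℝ) (x / 2)] 0).NeBot := by
          refine mem_closure_iff_nhdsWithin_neBot.mp ?_
          rw [closure_Ioo hx2.ne]
          exact ⟨le_refl 0, hx2.le⟩
        have hT : Tendsto w (𝓝[Ioo (0:ℝ) (x / 2)] 0) (𝓝 0) :=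
          hlim.mono_left (nhdsWithin_mono 0 fun t ht => ht.1)
        refine ge_of_tendsto hT ?_
        filter_upwards [eventually_mem_nhdsWithin] with a ha
        exact (hwanti a (x / 2) ha.1 ha.2 (by linarith)).le
      have := hwanti (x / 2) x hx2 (by linarith) hxR
      linarith
    -- deriv y < 0 on (0,R)
    have hderiv_neg : ∀ x : ℝ, 0 < x → x < R → deriv y x < 0 := by
      intro x hx hxR
      by_contra hpos
      push_neg at hpos
      have : 0 ≤ w x := by
        have : (0:ℝ) ≤ x ^ α * |deriv y x| ^ (α - 1) := by positivity
        exact mul_nonneg this hpos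
      exact absurd (hwneg x hx hxR) (not_lt.mpr this)
    -- key identity : (-(w x))^(α⁻¹) = x * (-(deriv y x))
    have hkey : ∀ x : ℝ, 0 < x → x < R → (-(w x)) ^ α⁻¹ = x * (-(deriv y x)) := by
      intro x hx hxR
      have hs : deriv y x < 0 := hderiv_neg x hx hxR
      have hsp : 0 < -(deriv y x) := by linarith
      have habs : |deriv y x| = -(deriv y x) := abs_of_neg hs
      have h1 : -(w x) = (x * (-(deriv y x))) ^ α := by
        simp only [hw_def, habs]
        rw [Real.mul_rpow hx.le hsp.le]
        have h2 : (-(deriv y x)) ^ α = (-(deriv y x)) ^ (α - 1) * (-(deriv y x)) := by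
          rw [← Real.rpow_add_one hsp.ne' (α - 1)]
          congr 1
          ring
        rw [h2]
        ring
      rw [h1, ← Real.rpow_mul (by positivity), mul_inv_cancel₀ hα.ne', Real.rpow_one]
    -- the first integral E
    set E : ℝ → ℝ := fun t =>
      α / (α + 1) * (-(w t)) ^ ((α + 1) / α) + lam * (t ^ (γ + 1) * Real.exp (y t)) + (γ + 1) * w t
      with hE_def
    have hp_pos : (0:ℝ) < (α + 1) / α := by positivity
    have hEderiv : ∀ x : ℝ, 0 < x → x < R → HasDerivAt E 0 x := by
      intro x hx hxR
      have hw' := hode x hx hxR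
      have hW : 0 < -(w x) := by linarith [hwneg x hx hxR]
      have h1 : HasDerivAt (fun t => -(w t)) (lam * x ^ γ * Real.exp (y x)) x := by
        have := hw'.neg
        rwa [neg_neg] at this
      have h2 : HasDerivAt (fun t => (-(w t)) ^ ((α + 1) / α))
          ((lam * x ^ γ * Real.exp (y x)) * ((α + 1) / α) * (-(w x)) ^ ((α + 1) / α - 1)) x :=
        h1.rpow_const (Or.inl hW.ne')
      have h3 : HasDerivAt (fun t : ℝ => t ^ (γ + 1)) ((γ + 1) * x ^ γ) x := by
        have := Real.hasDerivAt_rpow_const (p := γ + 1) (Or.inl hx.ne')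
        simpa using this
      have h4 : HasDerivAt (fun t => Real.exp (y t)) (Real.exp (y x) * deriv y x) x :=
        ((hydiff x hx hxR).hasDerivAt).exp
      have h5 := h3.mul h4
      have h6 := ((h2.const_mul (α / (α + 1))).add (h5.const_mul lam)).add (hw'.const_mul (γ + 1))
      have hexp1 : (α + 1) / α - 1 = α⁻¹ := by field_simp; ring
      have heq : α / (α + 1) * (lam * x ^ γ * Real.exp (y x) * ((α + 1) / α) *
            (-(w x)) ^ ((α + 1) / α - 1)) +
          lam * ((γ + 1) * x ^ γ * Real.exp (y x) + x ^ (γ + 1) * (Real.exp (y x) * deriv y x)) +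
          (γ + 1) * -(lam * x ^ γ * Real.exp (y x)) = 0 := by
        rw [hexp1, hkey x hx hxR, Real.rpow_add_one hx.ne' γ]
        field_simp
        ring
      rw [heq] at h6
      exact h6
    -- E is constant on (0,R)
    have hEconst : ∀ a b : ℝ, 0 < a → a < b → b < R → E a = E b := by
      intro a b ha hab hbR
      obtain ⟨c, hc, hceq⟩ := exists_hasDerivAt_eq_slope E (fun _ => (0:ℝ)) hab
        (fun t ht => (hEderiv t (lt_of_lt_of_le ha ht.1)
          (lt_of_le_of_lt ht.2 hbR)).continuousAt.continuousWithinAt)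
        (fun t ht => hEderiv t (ha.trans ht.1) (ht.2.trans hbR))
      have h := hceq.symm
      rw [div_eq_zero_iff] at h
      rcases h with h | h
      · linarith
      · exact absurd h (sub_ne_zero.mpr hab.ne')
    -- E tends to 0 at 0+
    have hE0 : ∀ x : ℝ, 0 < x → x < R → E x = 0 := by
      intro x hx hxR
      have hne : (𝓝[Ioo (0:ℝ) x] 0).NeBot := by
        refine mem_closure_iff_nhdsWithin_neBot.mp ?_
        rw [closure_Ioo hx.ne]
        exact ⟨le_refl 0, hx.le⟩
      have hsub : Ioo (0:ℝ) x ⊆ Ioi 0 := fun t ht => ht.1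
      have hw0 : Tendsto (fun t => -(w t)) (𝓝[Ioo (0:ℝ) x] 0) (𝓝 0) := by
        have := (hlim.mono_left (nhdsWithin_mono 0 hsub)).neg
        simpa using this
      have hA : Tendsto (fun t => (-(w t)) ^ ((α + 1) / α)) (𝓝[Ioo (0:ℝ) x] 0) (𝓝 0) := by
        have hc : ContinuousAt (fun u : ℝ => u ^ ((α + 1) / α)) 0 :=
          Real.continuousAt_rpow_const 0 ((α + 1) / α) (Or.inr hp_pos.le)
        have := hc.tendsto.comp hw0
        simpa [Function.comp_def, Real.zero_rpow hp_pos.ne'] using this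
      have hB : Tendsto (fun t : ℝ => t ^ (γ + 1)) (𝓝[Ioo (0:ℝ) x] 0) (𝓝 0) := by
        have hc : ContinuousAt (fun u : ℝ => u ^ (γ + 1)) 0 :=
          Real.continuousAt_rpow_const 0 (γ + 1) (Or.inr hγ1.le)
        have h2 : Tendsto (fun t : ℝ => t ^ (γ + 1)) (𝓝[Ioo (0:ℝ) x] 0) (𝓝 ((0:ℝ) ^ (γ + 1))) :=
          hc.tendsto.mono_left nhdsWithin_le_nhds
        simpa [Real.zero_rpow hγ1.ne'] using h2
      have hy0 : Tendsto y (𝓝[Ioo (0:ℝ) x] 0) (𝓝 (y 0)) :=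
        (hycont 0 ⟨le_refl 0, hR.le⟩).mono
          (Ioo_subset_Icc_self.trans (Icc_subset_Icc le_rfl hxR.le))
      have hEy : Tendsto (fun t => Real.exp (y t)) (𝓝[Ioo (0:ℝ) x] 0) (𝓝 (Real.exp (y 0))) :=
        (Real.continuous_exp.continuousAt.tendsto.comp hy0)
      have hTE : Tendsto E (𝓝[Ioo (0:ℝ) x] 0) (𝓝 0) := by
        have h1 := hA.const_mul (α / (α + 1))
        have h2 := (hB.mul hEy).const_mul lam
        have h3 := (hlim.mono_left (nhdsWithin_mono 0 hsub)).const_mul (γ + 1)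
        have := (h1.add h2).add h3
        simpa using this
      have hev : ∀ᶠ t in 𝓝[Ioo (0:ℝ) x] 0, E t = E x := by
        filter_upwards [eventually_mem_nhdsWithin] with t ht
        exact hEconst t x ht.1 ht.2 hxR
      have hconst : Tendsto (fun _ : ℝ => E x) (𝓝[Ioo (0:ℝ) x] 0) (𝓝 0) :=
        Tendsto.congr' hev hTE
      exact tendsto_nhds_unique tendsto_const_nhds hconst
    -- Young's inequality bound
    have hpq : Real.HolderConjugate (α + 1) ((α + 1) / α) := by
      constructor
      · have hne : (α + 1) ≠ 0 := by linarith
        rw [inv_div, inv_one, inv_eq_one_div, ← add_div, div_eq_one_iff_eq hne]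
        ring
      · linarith
      · positivity
    have hineq : ∀ x : ℝ, 0 < x → x < R →
        lam * (x ^ (γ + 1) * Real.exp (y x)) ≤ (γ + 1) ^ (α + 1) / (α + 1) := by
      intro x hx hxR
      have hW : 0 < -(w x) := by linarith [hwneg x hx hxR]
      have hy := Real.young_inequality_of_nonneg hγ1.le hW.le hpq
      have hdiv : (-(w x)) ^ ((α + 1) / α) / ((α + 1) / α)
          = α / (α + 1) * (-(w x)) ^ ((α + 1) / α) := by
        rw [div_div_eq_mul_div]
        ring
      rw [hdiv] at hy
      have hE : α / (α + 1) * (-(w x)) ^ ((α + 1) / α) +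
          lam * (x ^ (γ + 1) * Real.exp (y x)) + (γ + 1) * w x = 0 := hE0 x hx hxR
      linarith
    -- let x → R
    have hneR : (𝓝[Ioo (0:ℝ) R] R).NeBot := by
      refine mem_closure_iff_nhdsWithin_neBot.mp ?_
      rw [closure_Ioo hR.ne]
      exact ⟨hR.le, le_rfl⟩
    have hyRlim : Tendsto y (𝓝[Ioo (0:ℝ) R] R) (𝓝 (y R)) :=
      (hycont R ⟨hR.le, le_rfl⟩).mono Ioo_subset_Icc_self
    have hBR : Tendsto (fun x : ℝ => x ^ (γ + 1)) (𝓝[Ioo (0:ℝ) R] R) (𝓝 (R ^ (γ + 1))) :=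
      ((Real.continuousAt_rpow_const R (γ + 1) (Or.inl hR.ne')).tendsto).mono_left
        nhdsWithin_le_nhds
    have hTf : Tendsto (fun x => lam * (x ^ (γ + 1) * Real.exp (y x))) (𝓝[Ioo (0:ℝ) R] R)
        (𝓝 (lam * (R ^ (γ + 1) * Real.exp (y R)))) :=
      (hBR.mul (Real.continuous_exp.continuousAt.tendsto.comp hyRlim)).const_mul lam
    have hfinal : lam * (R ^ (γ + 1) * Real.exp (y R)) ≤ (γ + 1) ^ (α + 1) / (α + 1) := by
      refine le_of_tendsto hTf ?_
      filter_upwards [eventually_mem_nhdsWithin] with t ht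
      exact hineq t ht.1 ht.2
    rw [hyR, Real.exp_zero, mul_one] at hfinal
    rw [div_lt_iff₀ (by positivity)] at hl
    have h2 := (le_div_iff₀ (by positivity : (0:ℝ) < α + 1)).mp hfinal
    nlinarith [h2, hl]
end

section
/- Let α > 0, γ > −1, R > 0 be real numbers and set λ* = (γ+1)^{α+1} / ((α+1) R^{γ+1}). Suppose λ = λ* and y : [0,R] → ℝ satisfies: y is continuous on [0,R] with y(R) = 0 and y(x) > 0 for all x ∈ [0,R); y is differentiable on (0,R); the function x ↦ x^α |y′(x)|^{α−1} y′(x) is differentiable on (0,R) with derivative −λ x^γ e^{y(x)} for every x ∈ (0,R); and x^α |y′(x)|^{α−1} y′(x) → 0 as x → 0⁺. Then y(x) = −(α+1) · ln( (1 + α (x/R)^{(γ+1)/α}) / (α+1) ) for all x ∈ [0,R]. (Uniqueness of the solution at λ = λ*, Theorem 6, part 2; this is the explicit formula with μ₀ = α+1, the unique root of H(μ) = 0 when m = α/(α+1)^{(α+1)/α}.) -/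
open Real Set Filter Topology

lemma aux_const_of_deriv_zero {f : ℝ → ℝ} {a b : ℝ}
    (h : ∀ x ∈ Set.Ioo a b, HasDerivAt f 0 x) {x z : ℝ}
    (hx : x ∈ Set.Ioo a b) (hz : z ∈ Set.Ioo a b) : f x = f z := by
  have key : ∀ u v : ℝ, u ∈ Set.Ioo a b → v ∈ Set.Ioo a b → u ≤ v → f v = f u := by
    intro u v hu hv huv
    have hcont : ContinuousOn f (Set.Icc u v) := fun t ht =>
      ((h t ⟨lt_of_lt_of_le hu.1 ht.1, lt_of_le_of_lt ht.2 hv.2⟩).continuousAt).continuousWithinAt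
    have hderiv : ∀ t ∈ Set.Ico u v, HasDerivWithinAt f 0 (Set.Ici t) t := fun t ht =>
      (h t ⟨lt_of_lt_of_le hu.1 ht.1, lt_trans ht.2 hv.2⟩).hasDerivWithinAt
    exact constant_of_has_deriv_right_zero hcont hderiv v ⟨huv, le_refl v⟩
  rcases le_total x z with hle | hle
  · exact (key x z hx hz hle).symm
  · exact key z x hz hx hle

/-- f(p) = c p^α - α/(α+1) p^(α+1) attains strict max at p = c, over p > 0. -/
lemma aux_fmax (α c : ℝ) (hα : 0 < α) (hc : 0 < c) :
    ∀ p : ℝ, 0 < p → p ≠ c →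
      c * p ^ α - α / (α + 1) * p ^ (α + 1) < c * c ^ α - α / (α + 1) * c ^ (α + 1) := by
  intro p hp hne
  set f : ℝ → ℝ := fun t => c * t ^ α - α / (α + 1) * t ^ (α + 1) with hf
  have hα1 : (0:ℝ) < α + 1 := by linarith
  have hd : ∀ t : ℝ, 0 < t → HasDerivAt f (α * t ^ (α - 1) * (c - t)) t := by
    intro t ht
    have h1 : HasDerivAt (fun s : ℝ => s ^ α) (α * t ^ (α - 1)) t :=
      Real.hasDerivAt_rpow_const (Or.inl (ne_of_gt ht))
    have h2 : HasDerivAt (fun s : ℝ => s ^ (α + 1)) ((α + 1) * t ^ (α + 1 - 1)) t :=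
      Real.hasDerivAt_rpow_const (Or.inl (ne_of_gt ht))
    have := ((h1.const_mul c).sub (h2.const_mul (α / (α + 1))))
    refine this.congr_deriv (Eq.symm ?_)
    have ht1 : t ^ (α + 1 - 1) = t ^ (α - 1) * t := by
      rw [show α + 1 - 1 = (α - 1) + 1 by ring, Real.rpow_add_one (ne_of_gt ht)]
    rw [ht1]
    field_simp
  have hcontf : ∀ s : Set ℝ, s ⊆ Set.Ioi 0 → ContinuousOn f s := by
    intro s hs t ht
    exact ((hd t (hs ht)).continuousAt).continuousWithinAt
  rcases lt_or_gt_of_ne hne with hlt | hgt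
  · -- p < c : f strict mono on [p, c]
    have hmono : StrictMonoOn f (Set.Icc p c) := by
      apply strictMonoOn_of_deriv_pos (convex_Icc p c)
      · exact hcontf _ (fun t ht => lt_of_lt_of_le hp ht.1)
      · intro t ht
        rw [interior_Icc] at ht
        have ht0 : 0 < t := lt_trans hp ht.1
        rw [(hd t ht0).deriv]
        have : 0 < t ^ (α - 1) := Real.rpow_pos_of_pos ht0 _
        have : 0 < c - t := by linarith [ht.2]
        positivity
    exact hmono ⟨le_refl p, le_of_lt hlt⟩ ⟨le_of_lt hlt, le_refl c⟩ hlt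
  · have hanti : StrictAntiOn f (Set.Icc c p) := by
      apply strictAntiOn_of_deriv_neg (convex_Icc c p)
      · exact hcontf _ (fun t ht => lt_of_lt_of_le hc ht.1)
      · intro t ht
        rw [interior_Icc] at ht
        have ht0 : 0 < t := lt_trans hc ht.1
        rw [(hd t ht0).deriv]
        have h1 : 0 < t ^ (α - 1) := Real.rpow_pos_of_pos ht0 _
        have h2 : c - t < 0 := by linarith [ht.1]
        exact mul_neg_of_pos_of_neg (by positivity) h2
    exact hanti ⟨le_refl c, le_of_lt hgt⟩ ⟨le_of_lt hgt, le_refl p⟩ hgt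

set_option maxHeartbeats 2000000 in
/-- uniqueness at λ = λ*, Theorem 6 part 2: at the extremal parameter
λ* = (γ+1)^{α+1}/((α+1)R^{γ+1}) any solution of the generalized Liouville–Gelfand
problem equals y(x) = −(α+1) ln((1 + α (x/R)^{(γ+1)/α})/(α+1)). -/
theorem uniqueness_at_extremal_lambda_liouville_gelfand
    (α γ R lam : ℝ) (hα : 0 < α) (hγ : -1 < γ) (hR : 0 < R)
    (hlam : lam = (γ + 1) ^ (α + 1) / ((α + 1) * R ^ (γ + 1)))
    (y : ℝ → ℝ)
    (hcont : ContinuousOn y (Set.Icc 0 R)) (hyR : y R = 0)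
    (hpos : ∀ x : ℝ, 0 ≤ x → x < R → 0 < y x)
    (hdiff : ∀ x : ℝ, 0 < x → x < R → DifferentiableAt ℝ y x)
    (heq : ∀ x : ℝ, 0 < x → x < R →
      HasDerivAt (fun t : ℝ => t ^ α * |deriv y t| ^ (α - 1) * deriv y t)
        (-(lam * x ^ γ * Real.exp (y x))) x)
    (hlim : Tendsto (fun x : ℝ => x ^ α * |deriv y x| ^ (α - 1) * deriv y x)
      (nhdsWithin 0 (Set.Ioi 0)) (nhds 0)) :
    ∀ x : ℝ, 0 ≤ x → x ≤ R →
      y x = -(α + 1) * Real.log ((1 + α * (x / R) ^ ((γ + 1) / α)) / (α + 1)) := by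
  have hγ1 : (0:ℝ) < γ + 1 := by linarith
  have hα1 : (0:ℝ) < α + 1 := by linarith
  have hαne : α ≠ 0 := ne_of_gt hα
  have hα1ne : α + 1 ≠ 0 := ne_of_gt hα1
  set q : ℝ := (γ + 1) / α with hqdef
  have hq : 0 < q := div_pos hγ1 hα
  have hRγ : (0:ℝ) < R ^ (γ + 1) := Real.rpow_pos_of_pos hR _
  have hlampos : 0 < lam := by
    rw [hlam]
    have : (0:ℝ) < (γ + 1) ^ (α + 1) := Real.rpow_pos_of_pos hγ1 _
    positivity
  set v : ℝ → ℝ := fun t => -(t ^ α * |deriv y t| ^ (α - 1) * deriv y t) with hvdef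
  have hv' : ∀ x ∈ Set.Ioo (0:ℝ) R, HasDerivAt v (lam * x ^ γ * Real.exp (y x)) x := by
    intro x hx
    have h := (heq x hx.1 hx.2).neg
    simp only [neg_neg] at h
    exact h
  have hv0 : Tendsto v (nhdsWithin 0 (Set.Ioi 0)) (nhds 0) := by
    simpa using hlim.neg
  have hvmono : StrictMonoOn v (Set.Ioo 0 R) := by
    apply strictMonoOn_of_deriv_pos (convex_Ioo 0 R)
    · exact fun t ht => ((hv' t ht).continuousAt).continuousWithinAt
    · intro t ht
      rw [interior_Ioo] at ht
      rw [(hv' t ht).deriv]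
      have : (0:ℝ) < t ^ γ := Real.rpow_pos_of_pos ht.1 _
      positivity
  have hvpos : ∀ x ∈ Set.Ioo (0:ℝ) R, 0 < v x := by
    intro x hx
    have hhx : 0 < x / 2 := by linarith [hx.1]
    have hhalf : x / 2 ∈ Set.Ioo (0:ℝ) R := ⟨hhx, by linarith [hx.2, hx.1]⟩
    have h1 : 0 ≤ v (x / 2) := by
      apply le_of_tendsto hv0
      filter_upwards [Ioo_mem_nhdsGT_of_mem (left_mem_Ico.mpr hhx)] with ξ hξ
      exact le_of_lt (hvmono ⟨hξ.1, lt_trans hξ.2 hhalf.2⟩ hhalf hξ.2)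
    have h2 : v (x / 2) < v x := hvmono hhalf hx (by linarith [hx.1])
    exact lt_of_le_of_lt h1 h2
  have hy'neg : ∀ x ∈ Set.Ioo (0:ℝ) R, deriv y x < 0 := by
    intro x hx
    by_contra h
    push_neg at h
    have h1 : 0 ≤ x ^ α * |deriv y x| ^ (α - 1) * deriv y x :=
      mul_nonneg (mul_nonneg (Real.rpow_nonneg (le_of_lt hx.1) _)
        (Real.rpow_nonneg (abs_nonneg _) _)) h
    have h2 := hvpos x hx
    simp only [hvdef] at h2
    linarith
  have hvP : ∀ x ∈ Set.Ioo (0:ℝ) R, v x = (x * (-(deriv y x))) ^ α := by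
    intro x hx
    have hyn := hy'neg x hx
    have hpos' : (0:ℝ) < -(deriv y x) := by linarith
    have habs : |deriv y x| = -(deriv y x) := abs_of_neg hyn
    have hmul : (-(deriv y x)) ^ (α - 1) * (-(deriv y x)) = (-(deriv y x)) ^ α := by
      rw [← Real.rpow_add_one (ne_of_gt hpos') (α - 1)]; ring_nf
    simp only [hvdef, habs]
    rw [Real.mul_rpow (le_of_lt hx.1) (le_of_lt hpos'), ← hmul]
    ring
  set P : ℝ → ℝ := fun t => v t ^ (α⁻¹ : ℝ) with hPdef
  have hPpos : ∀ x ∈ Set.Ioo (0:ℝ) R, 0 < P x := fun x hx =>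
    Real.rpow_pos_of_pos (hvpos x hx) _
  have hPval : ∀ x ∈ Set.Ioo (0:ℝ) R, P x = x * (-(deriv y x)) := by
    intro x hx
    have hyn := hy'neg x hx
    have hnn : (0:ℝ) ≤ x * (-(deriv y x)) := by nlinarith [hx.1]
    simp only [hPdef, hvP x hx]
    exact Real.rpow_rpow_inv hnn hαne
  have hPα : ∀ x ∈ Set.Ioo (0:ℝ) R, (P x) ^ α = v x := fun x hx =>
    Real.rpow_inv_rpow (le_of_lt (hvpos x hx)) hαne

  -- the first integral E
  set E : ℝ → ℝ := fun t =>
    (γ + 1) * v t - α / (α + 1) * v t ^ ((α + 1) / α) - lam * t ^ (γ + 1) * Real.exp (y t)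
    with hEdef
  have hexp : ∀ x ∈ Set.Ioo (0:ℝ) R, HasDerivAt (fun t => Real.exp (y t))
      (Real.exp (y x) * deriv y x) x := fun x hx =>
    ((hdiff x hx.1 hx.2).hasDerivAt).exp
  have hE' : ∀ x ∈ Set.Ioo (0:ℝ) R, HasDerivAt E 0 x := by
    intro x hx
    have hvx := hvpos x hx
    have hxne : x ≠ 0 := ne_of_gt hx.1
    have h1 : HasDerivAt (fun t : ℝ => t ^ (γ + 1)) ((γ + 1) * x ^ (γ + 1 - 1)) x :=
      Real.hasDerivAt_rpow_const (Or.inl hxne)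
    have hL : HasDerivAt (fun t => lam * t ^ (γ + 1) * Real.exp (y t))
        (lam * ((γ + 1) * x ^ (γ + 1 - 1)) * Real.exp (y x)
          + lam * x ^ (γ + 1) * (Real.exp (y x) * deriv y x)) x :=
      (h1.const_mul lam).mul (hexp x hx)
    have hB : HasDerivAt (fun t => v t ^ ((α + 1) / α))
        ((lam * x ^ γ * Real.exp (y x)) * ((α + 1) / α) * v x ^ ((α + 1) / α - 1)) x :=
      (hv' x hx).rpow_const (Or.inl (ne_of_gt hvx))
    have htot := (((hv' x hx).const_mul (γ + 1)).sub (hB.const_mul (α / (α + 1)))).sub hL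
    refine htot.congr_deriv (Eq.symm ?_)
    have e1 : v x ^ ((α + 1) / α - 1) = x * (-(deriv y x)) := by
      rw [show (α + 1) / α - 1 = α⁻¹ by field_simp; ring]
      exact hPval x hx
    have e2 : x ^ (γ + 1) = x ^ γ * x := Real.rpow_add_one hxne γ
    have e3 : γ + 1 - 1 = γ := by ring
    rw [e1, e2, e3]
    field_simp
    ring
  have hE0 : ∀ x ∈ Set.Ioo (0:ℝ) R, E x = 0 := by
    have hEtend : Tendsto E (nhdsWithin 0 (Set.Ioi 0)) (nhds 0) := by
      have t1 : Tendsto (fun ξ => (γ + 1) * v ξ) (nhdsWithin 0 (Set.Ioi 0)) (nhds 0) := by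
        have h := hv0.const_mul (γ + 1); rw [mul_zero] at h; exact h
      have t2 : Tendsto (fun ξ => α / (α + 1) * v ξ ^ ((α + 1) / α))
          (nhdsWithin 0 (Set.Ioi 0)) (nhds 0) := by
        have hc : ContinuousAt (fun s : ℝ => s ^ ((α + 1) / α)) 0 :=
          Real.continuousAt_rpow_const 0 _ (Or.inr (by positivity))
        have h := (hc.tendsto.comp hv0).const_mul (α / (α + 1))
        rw [Real.zero_rpow (by positivity : ((α + 1) / α : ℝ) ≠ 0), mul_zero] at h
        exact h
      have t3 : Tendsto (fun ξ => lam * ξ ^ (γ + 1) * Real.exp (y ξ))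
          (nhdsWithin 0 (Set.Ioi 0)) (nhds 0) := by
        have hc : ContinuousAt (fun s : ℝ => s ^ (γ + 1)) 0 :=
          Real.continuousAt_rpow_const 0 _ (Or.inr (le_of_lt hγ1))
        have hp : Tendsto (fun ξ : ℝ => ξ ^ (γ + 1)) (nhdsWithin 0 (Set.Ioi 0)) (nhds 0) := by
          have h := hc.tendsto.mono_left (nhdsWithin_le_nhds (s := Set.Ioi (0:ℝ)))
          rw [Real.zero_rpow (ne_of_gt hγ1)] at h
          exact h
        have hy0 : Tendsto (fun ξ => Real.exp (y ξ)) (nhdsWithin 0 (Set.Ioi 0))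
            (nhds (Real.exp (y 0))) := by
          have hyc : Tendsto y (nhdsWithin 0 (Set.Icc 0 R)) (nhds (y 0)) :=
            hcont 0 ⟨le_refl 0, le_of_lt hR⟩
          have hmono : nhdsWithin (0:ℝ) (Set.Ioo 0 R) ≤ nhdsWithin 0 (Set.Icc 0 R) :=
            nhdsWithin_mono 0 Set.Ioo_subset_Icc_self
          have h00 : nhdsWithin (0:ℝ) (Set.Ioo 0 R) = nhdsWithin 0 (Set.Ioi 0) :=
            nhdsWithin_Ioo_eq_nhdsGT hR
          exact Real.continuous_exp.continuousAt.tendsto.comp (hyc.mono_left (h00 ▸ hmono))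
        have h := (hp.const_mul lam).mul hy0
        rw [mul_zero, zero_mul] at h
        exact h
      have h := (t1.sub t2).sub t3
      rw [sub_zero, sub_zero] at h
      exact h
    intro x hx
    have hev : E =ᶠ[nhdsWithin 0 (Set.Ioi 0)] fun _ => E x := by
      filter_upwards [Ioo_mem_nhdsGT_of_mem (left_mem_Ico.mpr hx.1)] with ξ hξ
      exact aux_const_of_deriv_zero hE' ⟨hξ.1, lt_trans hξ.2 hx.2⟩ hx
    have : Tendsto (fun _ : ℝ => E x) (nhdsWithin 0 (Set.Ioi 0)) (nhds 0) :=
      hEtend.congr' hev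
    exact (tendsto_nhds_unique this tendsto_const_nhds).symm
  have hstar : ∀ x ∈ Set.Ioo (0:ℝ) R,
      (γ + 1) * v x - α / (α + 1) * v x ^ ((α + 1) / α) = lam * x ^ (γ + 1) * Real.exp (y x) := by
    intro x hx
    have := hE0 x hx
    simp only [hEdef] at this
    linarith

  -- the linear ODE for x^q / P x
  set G : ℝ → ℝ := fun t => t ^ q * (P t)⁻¹ - t ^ q * ((α + 1) * q)⁻¹ with hGdef
  have hG' : ∀ x ∈ Set.Ioo (0:ℝ) R, HasDerivAt G 0 x := by
    intro x hx
    have hvx := hvpos x hx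
    have hxne : x ≠ 0 := ne_of_gt hx.1
    have hPx := hPpos x hx
    have h1 : HasDerivAt (fun t : ℝ => t ^ q) (q * x ^ (q - 1)) x :=
      Real.hasDerivAt_rpow_const (Or.inl hxne)
    have hPder : HasDerivAt P ((lam * x ^ γ * Real.exp (y x)) * α⁻¹ * v x ^ (α⁻¹ - 1)) x :=
      (hv' x hx).rpow_const (Or.inl (ne_of_gt hvx))
    have hPinv : HasDerivAt (fun t => (P t)⁻¹)
        (-((lam * x ^ γ * Real.exp (y x)) * α⁻¹ * v x ^ (α⁻¹ - 1)) / (P x) ^ 2) x :=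
      hPder.inv (ne_of_gt hPx)
    have htot := (h1.mul hPinv).sub (h1.mul_const ((α + 1) * q)⁻¹)
    refine htot.congr_deriv (Eq.symm ?_)
    -- algebraic identity
    have hxv : x * (lam * x ^ γ * Real.exp (y x))
        = (γ + 1) * v x - α / (α + 1) * (v x * P x) := by
      have e2 : x ^ (γ + 1) = x ^ γ * x := Real.rpow_add_one hxne γ
      have e4 : v x ^ ((α + 1) / α) = v x * P x := by
        rw [show (α + 1) / α = 1 + α⁻¹ by field_simp, Real.rpow_add hvx, Real.rpow_one]
      have := hstar x hx
      rw [e4, e2] at this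
      linarith [this]
    have e5 : v x ^ (α⁻¹ - 1) = P x / v x := by
      rw [Real.rpow_sub_one (ne_of_gt hvx)]
    have e6 : x ^ q = x ^ (q - 1) * x := by
      rw [← Real.rpow_add_one hxne (q - 1)]; ring_nf
    rw [e5, e6]
    have hαq : α * q = γ + 1 := by rw [hqdef]; field_simp
    generalize lam * x ^ γ * Real.exp (y x) = L at hxv ⊢
    generalize x ^ (q - 1) = a at hxv ⊢
    generalize v x = V at hxv hvx ⊢
    generalize P x = Pp at hxv hPx ⊢
    field_simp at hxv
    field_simp
    linear_combination a * hxv - a * V * (α + 1) * hαq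

  -- G is constant; explicit formula for P
  have hhalfR : R / 2 ∈ Set.Ioo (0:ℝ) R := ⟨half_pos hR, half_lt_self hR⟩
  set C₀ : ℝ := G (R / 2) with hC₀def
  have hGform : ∀ x ∈ Set.Ioo (0:ℝ) R, x ^ q * (P x)⁻¹ = C₀ + x ^ q * ((α + 1) * q)⁻¹ := by
    intro x hx
    have h := aux_const_of_deriv_zero hG' hx hhalfR
    rw [hC₀def]
    simp only [hGdef] at h ⊢
    linarith [h]
  have hDpos : ∀ x ∈ Set.Ioo (0:ℝ) R, 0 < C₀ + x ^ q * ((α + 1) * q)⁻¹ := by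
    intro x hx
    rw [← hGform x hx]
    have := Real.rpow_pos_of_pos hx.1 q
    have := hPpos x hx
    positivity
  set K : ℝ := C₀ + R ^ q * ((α + 1) * q)⁻¹ with hKdef
  have hKpos : 0 < K := by
    have h1 := hDpos (R / 2) hhalfR
    have h2 : (R / 2) ^ q < R ^ q :=
      Real.rpow_lt_rpow (le_of_lt (half_pos hR)) (half_lt_self hR) hq
    have h3 : (0:ℝ) < ((α + 1) * q)⁻¹ := by positivity
    rw [hKdef]
    nlinarith [mul_pos (sub_pos.mpr h2) h3]
  have hform : ∀ x ∈ Set.Ioo (0:ℝ) R,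
      P x = x ^ q / (C₀ + x ^ q * ((α + 1) * q)⁻¹) := by
    intro x hx
    have hPne : P x ≠ 0 := ne_of_gt (hPpos x hx)
    rw [eq_div_iff (ne_of_gt (hDpos x hx)), ← hGform x hx]
    field_simp
  haveI hNB : (nhdsWithin R (Set.Ioo (0:ℝ) R)).NeBot := by
    rw [nhdsWithin_Ioo_eq_nhdsLT hR]; infer_instance
  set PR : ℝ := R ^ q / K with hPRdef
  have hRq : (0:ℝ) < R ^ q := Real.rpow_pos_of_pos hR q
  have hPRpos : 0 < PR := div_pos hRq hKpos
  have hPlim : Tendsto P (nhdsWithin R (Set.Ioo 0 R)) (nhds PR) := by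
    have h1 : ContinuousAt (fun t : ℝ => t ^ q) R :=
      Real.continuousAt_rpow_const R q (Or.inl (ne_of_gt hR))
    have hcform : ContinuousAt (fun t : ℝ => t ^ q / (C₀ + t ^ q * ((α + 1) * q)⁻¹)) R :=
      h1.div (continuousAt_const.add (h1.mul continuousAt_const)) (ne_of_gt hKpos)
    have h2 : Tendsto (fun t : ℝ => t ^ q / (C₀ + t ^ q * ((α + 1) * q)⁻¹))
        (nhdsWithin R (Set.Ioo 0 R)) (nhds PR) := hcform.continuousWithinAt.tendsto
    apply h2.congr'
    filter_upwards [eventually_mem_nhdsWithin] with ξ hξ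
    exact (hform ξ hξ).symm
  have hfP : ∀ x ∈ Set.Ioo (0:ℝ) R,
      (γ + 1) * P x ^ α - α / (α + 1) * P x ^ (α + 1) = lam * x ^ (γ + 1) * Real.exp (y x) := by
    intro x hx
    have hvx := hvpos x hx
    have e4 : v x ^ ((α + 1) / α) = v x * P x := by
      rw [show (α + 1) / α = 1 + α⁻¹ by field_simp, Real.rpow_add hvx, Real.rpow_one]
    have e7 : P x ^ (α + 1) = v x * P x := by
      rw [Real.rpow_add_one (ne_of_gt (hPpos x hx)) α, hPα x hx]
    rw [hPα x hx, e7, ← e4]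
    exact hstar x hx
  have hfPR : (γ + 1) * PR ^ α - α / (α + 1) * PR ^ (α + 1) = lam * R ^ (γ + 1) := by
    have hL : Tendsto (fun x => (γ + 1) * P x ^ α - α / (α + 1) * P x ^ (α + 1))
        (nhdsWithin R (Set.Ioo 0 R))
        (nhds ((γ + 1) * PR ^ α - α / (α + 1) * PR ^ (α + 1))) := by
      have h1 := (hPlim.rpow_const (p := α) (Or.inl (ne_of_gt hPRpos))).const_mul (γ + 1)
      have h2 := (hPlim.rpow_const (p := α + 1) (Or.inl (ne_of_gt hPRpos))).const_mul (α / (α + 1))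
      exact h1.sub h2
    have hRfilter : Tendsto (fun x => lam * x ^ (γ + 1) * Real.exp (y x))
        (nhdsWithin R (Set.Ioo 0 R)) (nhds (lam * R ^ (γ + 1))) := by
      have h1 : ContinuousAt (fun t : ℝ => lam * t ^ (γ + 1)) R :=
        (Real.continuousAt_rpow_const R (γ + 1) (Or.inl (ne_of_gt hR))).const_mul lam
      have hyc : Tendsto y (nhdsWithin R (Set.Icc 0 R)) (nhds (y R)) :=
        hcont R ⟨le_of_lt hR, le_refl R⟩
      have hyc2 : Tendsto y (nhdsWithin R (Set.Ioo 0 R)) (nhds 0) := by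
        have h := hyc.mono_left (nhdsWithin_mono R (Set.Ioo_subset_Icc_self (a := (0:ℝ)) (b := R)))
        rwa [hyR] at h
      have hec : Tendsto (fun x => Real.exp (y x)) (nhdsWithin R (Set.Ioo 0 R)) (nhds 1) := by
        have := Real.continuous_exp.continuousAt.tendsto.comp hyc2
        rw [Real.exp_zero] at this
        exact this
      have hgl : Tendsto (fun t : ℝ => lam * t ^ (γ + 1))
          (nhdsWithin R (Set.Ioo 0 R)) (nhds (lam * R ^ (γ + 1))) :=
        h1.continuousWithinAt.tendsto
      have h := hgl.mul hec
      rwa [mul_one] at h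
    have hLeq : Tendsto (fun x => (γ + 1) * P x ^ α - α / (α + 1) * P x ^ (α + 1))
        (nhdsWithin R (Set.Ioo 0 R)) (nhds (lam * R ^ (γ + 1))) := by
      apply hRfilter.congr'
      filter_upwards [eventually_mem_nhdsWithin] with ξ hξ
      exact (hfP ξ hξ).symm
    exact tendsto_nhds_unique hL hLeq

  -- the extremal value forces PR = γ + 1
  have hlamR : lam * R ^ (γ + 1) = (γ + 1) ^ (α + 1) / (α + 1) := by
    rw [hlam]
    field_simp
  have hmaxval : (γ + 1) * (γ + 1) ^ α - α / (α + 1) * (γ + 1) ^ (α + 1)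
      = (γ + 1) ^ (α + 1) / (α + 1) := by
    rw [Real.rpow_add_one (ne_of_gt hγ1) α]
    field_simp
    ring
  have hPReq : PR = γ + 1 := by
    by_contra hne
    have hlt := aux_fmax α (γ + 1) hα hγ1 PR hPRpos hne
    rw [hfPR, hlamR] at hlt
    linarith [hmaxval, hlt]
  have hKval : K = R ^ q / (γ + 1) := by
    have h : R ^ q / K = γ + 1 := hPRdef ▸ hPReq
    rw [div_eq_iff (ne_of_gt hKpos)] at h
    rw [eq_div_iff (ne_of_gt hγ1)]
    linarith [h]
  have hPfinal : ∀ x ∈ Set.Ioo (0:ℝ) R,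
      P x = (α + 1) * (γ + 1) * x ^ q / (α * x ^ q + R ^ q) := by
    intro x hx
    have hxq : (0:ℝ) < x ^ q := Real.rpow_pos_of_pos hx.1 q
    have hden : C₀ + x ^ q * ((α + 1) * q)⁻¹ = (α * x ^ q + R ^ q) / ((α + 1) * (γ + 1)) := by
      have hC₀ : C₀ = R ^ q / (γ + 1) - R ^ q * ((α + 1) * q)⁻¹ := by
        rw [← hKval, hKdef]; ring
      rw [hC₀, hqdef]
      field_simp
      ring
    rw [hform x hx, hden, div_div_eq_mul_div]
    ring
  have hderivy : ∀ x ∈ Set.Ioo (0:ℝ) R, deriv y x = -(P x) / x := by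
    intro x hx
    have hxne : x ≠ 0 := ne_of_gt hx.1
    rw [hPval x hx]
    field_simp

  -- conclusion: compare with the explicit function u
  set u : ℝ → ℝ := fun t => -(α + 1) * Real.log ((1 + α * (t / R) ^ q) / (α + 1)) with hudef
  have hargpos : ∀ t : ℝ, 0 ≤ t → 0 < (1 + α * (t / R) ^ q) / (α + 1) := by
    intro t ht
    have h1 : 0 ≤ (t / R) ^ q := Real.rpow_nonneg (div_nonneg ht (le_of_lt hR)) q
    have h2 : 0 < 1 + α * (t / R) ^ q := by nlinarith
    positivity
  have hu' : ∀ x ∈ Set.Ioo (0:ℝ) R, HasDerivAt u (-(P x) / x) x := by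
    intro x hx
    have hxR : 0 < x / R := div_pos hx.1 hR
    have hxne : x ≠ 0 := ne_of_gt hx.1
    have hRne : R ≠ 0 := ne_of_gt hR
    have hxq : (0:ℝ) < x ^ q := Real.rpow_pos_of_pos hx.1 q
    have hRq2 : (0:ℝ) < R ^ q := Real.rpow_pos_of_pos hR q
    have hdenpos : (0:ℝ) < α * x ^ q + R ^ q := by positivity
    have h1 : HasDerivAt (fun t : ℝ => t / R) (1 / R) x := (hasDerivAt_id x).div_const R
    have h2 : HasDerivAt (fun t : ℝ => (t / R) ^ q) (q * (x / R) ^ (q - 1) * (1 / R)) x := by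
      have := (Real.hasDerivAt_rpow_const (x := x / R) (p := q)
        (Or.inl (ne_of_gt hxR))).comp x h1
      exact this
    have h3 : HasDerivAt (fun t : ℝ => (1 + α * (t / R) ^ q) / (α + 1))
        (α * (q * (x / R) ^ (q - 1) * (1 / R)) / (α + 1)) x :=
      ((h2.const_mul α).const_add 1).div_const (α + 1)
    have harg : (1 + α * (x / R) ^ q) / (α + 1) ≠ 0 := ne_of_gt (hargpos x (le_of_lt hx.1))
    have h4 := (h3.log harg).const_mul (-(α + 1))
    refine h4.congr_deriv (Eq.symm ?_)
    have e1 : (x / R) ^ (q - 1) = (x / R) ^ q / (x / R) :=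
      Real.rpow_sub_one (ne_of_gt hxR) q
    have e2 : (x / R) ^ q = x ^ q / R ^ q := Real.div_rpow (le_of_lt hx.1) (le_of_lt hR) q
    have hαq : α * q = γ + 1 := by rw [hqdef]; field_simp
    rw [hPfinal x hx, ← hαq, e1, e2]
    field_simp
    ring
  have hucont : ContinuousOn u (Set.Icc 0 R) := by
    have hc1 : Continuous fun t : ℝ => (t / R) ^ q := by
      rw [continuous_iff_continuousAt]
      intro t
      have hf : ContinuousAt (fun s : ℝ => s / R) t := (continuous_id.div_const R).continuousAt
      have hg := Real.continuousAt_rpow_const (t / R) q (Or.inr (le_of_lt hq))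
      exact ContinuousAt.comp (f := fun s : ℝ => s / R) (x := t) hg hf
    apply ContinuousOn.mul continuousOn_const
    apply ContinuousOn.log
    · exact ((continuous_const.add (continuous_const.mul hc1)).div_const (α + 1)).continuousOn
    · intro t ht
      exact ne_of_gt (hargpos t ht.1)
  have huR : u R = 0 := by
    simp only [hudef]
    rw [div_self (ne_of_gt hR), Real.one_rpow,
      show (1 + α * 1) / (α + 1) = 1 by rw [mul_one, add_comm 1 α, div_self hα1ne], Real.log_one]
    ring
  have hDzero : ∀ x ∈ Set.Ioc (0:ℝ) R, y x - u x = 0 := by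
    intro x hx
    have hcontD : ContinuousOn (fun t => y t - u t) (Set.Icc x R) :=
      (hcont.mono (Set.Icc_subset_Icc (le_of_lt hx.1) le_rfl)).sub
        (hucont.mono (Set.Icc_subset_Icc (le_of_lt hx.1) le_rfl))
    have hder : ∀ t ∈ Set.Ico x R, HasDerivWithinAt (fun t => y t - u t) 0 (Set.Ici t) t := by
      intro t ht
      have htI : t ∈ Set.Ioo (0:ℝ) R := ⟨lt_of_lt_of_le hx.1 ht.1, ht.2⟩
      have hy := (hdiff t htI.1 htI.2).hasDerivAt
      rw [hderivy t htI] at hy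
      have hsub := hy.sub (hu' t htI)
      rw [sub_self] at hsub
      exact hsub.hasDerivWithinAt
    have h := constant_of_has_deriv_right_zero hcontD hder R ⟨hx.2, le_rfl⟩
    rw [hyR, huR] at h
    linarith [h]
  intro x hx0 hxR
  rcases eq_or_lt_of_le hx0 with h0 | h0
  · haveI : (nhdsWithin (0:ℝ) (Set.Ioc 0 R)).NeBot := by
      rw [nhdsWithin_Ioc_eq_nhdsGT hR]; infer_instance
    have hDcont : ContinuousWithinAt (fun t => y t - u t) (Set.Icc 0 R) 0 :=
      ((hcont 0 ⟨le_rfl, le_of_lt hR⟩).sub (hucont 0 ⟨le_rfl, le_of_lt hR⟩))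
    have ht1 : Tendsto (fun t => y t - u t) (nhdsWithin 0 (Set.Ioc 0 R)) (nhds (y 0 - u 0)) :=
      hDcont.tendsto.mono_left (nhdsWithin_mono 0 (Set.Ioc_subset_Icc_self (a := (0:ℝ)) (b := R)))
    have ht2 : Tendsto (fun t => y t - u t) (nhdsWithin 0 (Set.Ioc 0 R)) (nhds 0) := by
      apply tendsto_const_nhds.congr'
      filter_upwards [eventually_mem_nhdsWithin] with ξ hξ
      exact (hDzero ξ hξ).symm
    have h := tendsto_nhds_unique ht1 ht2
    have hyu : y x = u x := by rw [← h0]; linarith [h]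
    rw [hyu]
  · have h := hDzero x ⟨h0, hxR⟩
    have hyu : y x = u x := by linarith [h]
    rw [hyu]
end

section
/- Let n ≥ 3 be an integer and p, q > 0 real numbers with pq > 1; set a = 2(1+q)/(pq−1) and b = 2(1+p)/(pq−1), and for μ > 0 and u, v : (0,∞) → ℝ define u_μ(t) = μ^a u(μt), v_μ(t) = μ^b v(μt). Then: (i) if u, v are differentiable and t^{n−1} u′(t) v′(t) is integrable on (0,∞), then ∫₀^∞ t^{n−1} u_μ′(t) v_μ′(t) dt = μ^{a+b+2−n} ∫₀^∞ t^{n−1} u′(t) v′(t) dt; (ii) for nonnegative measurable u, v (as integrals of nonnegative functions, possibly infinite), ∫₀^∞ t^{n−1} u_μ(t)^{p+1} dt = μ^{a(p+1)−n} ∫₀^∞ t^{n−1} u(t)^{p+1} dt and ∫₀^∞ t^{n−1} v_μ(t)^{q+1} dt = μ^{b(q+1)−n} ∫₀^∞ t^{n−1} v(t)^{q+1} dt; and (iii) the three exponents a+b+2−n, a(p+1)−n, b(q+1)−n all vanish if and only if n/2 = (p+1)(q+1)/(pq−1), i.e. if and only if (p,q) lies on the critical hyperbola n/(p+1) + n/(q+1)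 = n − 2. (This is the substance of Theorem 8: every Lie point symmetry of the Lane–Emden system is a variational symmetry of its functional exactly when (p,q) lies on the critical hyperbola.) -/
open Real Set MeasureTheory

lemma lint_scale (f : ℝ → ENNReal) (hf : Measurable f) {c : ℝ} (hc : 0 < c) :
    ∫⁻ t in Ioi (0:ℝ), f (c * t) = ENNReal.ofReal c⁻¹ * ∫⁻ s in Ioi (0:ℝ), f s := by
  have hmap : Measure.map (c * ·) (volume.restrict (Ioi (0:ℝ)))
      = ENNReal.ofReal c⁻¹ • (volume.restrict (Ioi (0:ℝ))) := by
    have h1 : (c * ·) ⁻¹' (Ioi (0:ℝ)) = Ioi 0 := by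
      rw [Set.preimage_const_mul_Ioi₀ _ hc, zero_div]
    conv_lhs => rw [← h1]
    rw [← Measure.restrict_map (measurable_const_mul c) measurableSet_Ioi,
      Real.map_volume_mul_left hc.ne', Measure.restrict_smul,
      abs_of_pos (inv_pos.mpr hc)]
  calc ∫⁻ t in Ioi (0:ℝ), f (c * t)
      = ∫⁻ s, f s ∂(Measure.map (c * ·) (volume.restrict (Ioi (0:ℝ)))) :=
        (lintegral_map hf (measurable_const_mul c)).symm
    _ = ENNReal.ofReal c⁻¹ * ∫⁻ s in Ioi (0:ℝ), f s := by
        rw [hmap, lintegral_smul_measure, smul_eq_mul]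

lemma deriv_scale (u : ℝ → ℝ) (c γ t : ℝ) (hu : DifferentiableAt ℝ u (γ * t)) :
    deriv (fun s => c * u (γ * s)) t = c * (γ * deriv u (γ * t)) := by
  have hin : HasDerivAt (fun s : ℝ => γ * s) γ t := by
    simpa using (hasDerivAt_id t).const_mul γ
  have h := (HasDerivAt.comp t hu.hasDerivAt hin).const_mul c
  have hd := h.deriv
  simp only [Function.comp] at hd
  rw [hd]; ring

lemma pow_term (n : ℕ) (p a μ : ℝ) (hμ : 0 < μ) (u : ℝ → ℝ) (hu : Measurable u)
    (hu0 : ∀ t, 0 ≤ u t) :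
    (∫⁻ t in Set.Ioi (0:ℝ),
        ENNReal.ofReal (t ^ ((n : ℝ) - 1) * (μ ^ a * u (μ * t)) ^ (p + 1))) =
      ENNReal.ofReal (μ ^ (a * (p + 1) - (n : ℝ))) *
        ∫⁻ t in Set.Ioi (0:ℝ), ENNReal.ofReal (t ^ ((n : ℝ) - 1) * u t ^ (p + 1)) := by
  set F : ℝ → ENNReal := fun s => ENNReal.ofReal (s ^ ((n:ℝ)-1) * u s ^ (p+1)) with hF
  have hFm : Measurable F := by
    apply Measurable.ennreal_ofReal; fun_prop
  have hμmul : ∀ x y : ℝ, μ ^ x * μ ^ y = μ ^ (x + y) := fun x y => (rpow_add hμ x y).symm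
  set c := μ ^ (a * (p+1) - ((n:ℝ)-1)) with hc
  have hc0 : 0 ≤ c := (rpow_pos_of_pos hμ _).le
  have key : ∀ t ∈ Ioi (0:ℝ),
      ENNReal.ofReal (t ^ ((n : ℝ) - 1) * (μ ^ a * u (μ * t)) ^ (p + 1))
        = ENNReal.ofReal c * F (μ * t) := by
    intro t ht
    rw [hF]
    rw [← ENNReal.ofReal_mul hc0]
    congr 1
    have h1 : (μ ^ a * u (μ * t)) ^ (p + 1) = μ ^ (a * (p+1)) * u (μ * t) ^ (p+1) := by
      rw [Real.mul_rpow (rpow_pos_of_pos hμ a).le (hu0 _), ← Real.rpow_mul hμ.le]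
    have h2 : (μ * t) ^ ((n:ℝ)-1) = μ ^ ((n:ℝ)-1) * t ^ ((n:ℝ)-1) :=
      Real.mul_rpow hμ.le (le_of_lt ht)
    have h3 : c * μ ^ ((n:ℝ)-1) = μ ^ (a * (p+1)) := by
      rw [hc, hμmul]; congr 1; ring
    rw [h1, h2]
    linear_combination (-(t ^ ((n:ℝ)-1) * u (μ*t) ^ (p+1))) * h3
  rw [setLIntegral_congr_fun measurableSet_Ioi key,
    lintegral_const_mul' _ _ ENNReal.ofReal_ne_top, lint_scale F hFm hμ,
    ← mul_assoc, ← ENNReal.ofReal_mul hc0]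
  congr 2
  rw [hc, ← Real.rpow_neg_one μ, hμmul]
  congr 1; ring

/-- substance of Theorem 8: scaling behaviour of the three terms of the
Lane–Emden functional J[u,v] = ∫₀^∞ t^{n−1}[u′v′ − u^{p+1}/(p+1) − v^{q+1}/(q+1)]dt
under u_μ(t) = μ^a u(μt), v_μ(t) = μ^b v(μt), and the fact that all scaling exponents
vanish iff (p,q) lies on the critical hyperbola n/(p+1) + n/(q+1) = n − 2. -/
theorem variational_symmetry_iff_critical_hyperbola
    (n : ℕ) (hn : 3 ≤ n) (p q : ℝ) (hp : 0 < p) (hq : 0 < q) (hpq : 1 < p * q)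
    (a b : ℝ) (ha : a = 2 * (1 + q) / (p * q - 1)) (hb : b = 2 * (1 + p) / (p * q - 1))
    (μ : ℝ) (hμ : 0 < μ) :
    (∀ u v : ℝ → ℝ,
      (∀ t > (0:ℝ), DifferentiableAt ℝ u t) → (∀ t > (0:ℝ), DifferentiableAt ℝ v t) →
      IntegrableOn (fun t : ℝ => t ^ ((n : ℝ) - 1) * deriv u t * deriv v t) (Set.Ioi 0) →
      (∫ t in Set.Ioi (0:ℝ), t ^ ((n : ℝ) - 1)
          * deriv (fun s : ℝ => μ ^ a * u (μ * s)) t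
          * deriv (fun s : ℝ => μ ^ b * v (μ * s)) t) =
        μ ^ (a + b + 2 - (n : ℝ)) *
          ∫ t in Set.Ioi (0:ℝ), t ^ ((n : ℝ) - 1) * deriv u t * deriv v t) ∧
    (∀ u : ℝ → ℝ, Measurable u → (∀ t, 0 ≤ u t) →
      (∫⁻ t in Set.Ioi (0:ℝ),
          ENNReal.ofReal (t ^ ((n : ℝ) - 1) * (μ ^ a * u (μ * t)) ^ (p + 1))) =
        ENNReal.ofReal (μ ^ (a * (p + 1) - (n : ℝ))) *
          ∫⁻ t in Set.Ioi (0:ℝ), ENNReal.ofReal (t ^ ((n : ℝ) - 1) * u t ^ (p + 1))) ∧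
    (∀ v : ℝ → ℝ, Measurable v → (∀ t, 0 ≤ v t) →
      (∫⁻ t in Set.Ioi (0:ℝ),
          ENNReal.ofReal (t ^ ((n : ℝ) - 1) * (μ ^ b * v (μ * t)) ^ (q + 1))) =
        ENNReal.ofReal (μ ^ (b * (q + 1) - (n : ℝ))) *
          ∫⁻ t in Set.Ioi (0:ℝ), ENNReal.ofReal (t ^ ((n : ℝ) - 1) * v t ^ (q + 1))) ∧
    ((a + b + 2 - (n : ℝ) = 0 ∧ a * (p + 1) - (n : ℝ) = 0 ∧ b * (q + 1) - (n : ℝ) = 0) ↔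
      (n : ℝ) / 2 = (p + 1) * (q + 1) / (p * q - 1)) ∧
    ((n : ℝ) / 2 = (p + 1) * (q + 1) / (p * q - 1) ↔
      (n : ℝ) / (p + 1) + (n : ℝ) / (q + 1) = (n : ℝ) - 2) := by
  have hd : (0:ℝ) < p * q - 1 := by linarith
  have hμmul : ∀ x y : ℝ, μ ^ x * μ ^ y = μ ^ (x + y) := fun x y => (rpow_add hμ x y).symm
  refine ⟨?_, ?_, ?_, ?_, ?_⟩
  · -- derivative term
    intro u v hu hv hint
    have key : ∀ t ∈ Ioi (0:ℝ),
        t ^ ((n : ℝ) - 1) * deriv (fun s : ℝ => μ ^ a * u (μ * s)) t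
            * deriv (fun s : ℝ => μ ^ b * v (μ * s)) t
          = μ ^ (a + b + 2 - ((n:ℝ)-1)) *
            ((fun s : ℝ => s ^ ((n : ℝ) - 1) * deriv u s * deriv v s) (μ * t)) := by
      intro t ht
      have ht' : (0:ℝ) < μ * t := mul_pos hμ ht
      rw [deriv_scale u _ μ t (hu _ ht'), deriv_scale v _ μ t (hv _ ht')]
      simp only
      have h2 : (μ * t) ^ ((n:ℝ)-1) = μ ^ ((n:ℝ)-1) * t ^ ((n:ℝ)-1) :=
        Real.mul_rpow hμ.le (le_of_lt ht)
      have h3 : μ ^ (a + b + 2 - ((n:ℝ)-1)) * μ ^ ((n:ℝ)-1) = μ ^ a * μ * (μ ^ b * μ) := by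
        rw [hμmul]
        have e : a + b + 2 - ((n:ℝ)-1) + ((n:ℝ)-1) = (a+1) + (b+1) := by ring
        rw [e, ← hμmul, ← hμmul, ← hμmul, Real.rpow_one]
      rw [h2]
      linear_combination (-(t ^ ((n:ℝ)-1) * deriv u (μ*t) * deriv v (μ*t))) * h3
    rw [setIntegral_congr_fun measurableSet_Ioi key, integral_const_mul,
      integral_comp_mul_left_Ioi (fun s : ℝ => s ^ ((n : ℝ) - 1) * deriv u s * deriv v s) 0 hμ]
    rw [mul_zero, smul_eq_mul, ← mul_assoc]
    congr 1
    rw [← Real.rpow_neg_one μ, hμmul]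
    congr 1; ring
  · intro u hu hu0
    exact pow_term n p a μ hμ u hu hu0
  · intro v hv hv0
    exact pow_term n q b μ hμ v hv hv0
  · subst ha hb
    have hd2 : q * p - 1 ≠ 0 := by rw [mul_comm]; exact hd.ne'
    constructor
    · rintro ⟨-, h2, -⟩
      rw [div_eq_div_iff (by norm_num) hd.ne']
      field_simp at h2
      linarith
    · intro h
      rw [div_eq_div_iff (by norm_num) hd.ne'] at h
      refine ⟨?_, ?_, ?_⟩ <;> field_simp <;> linarith
  · rw [div_eq_div_iff (by norm_num) hd.ne']
    have hp1 : (0:ℝ) < p + 1 := by linarith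
    have hq1 : (0:ℝ) < q + 1 := by linarith
    rw [div_add_div _ _ hp1.ne' hq1.ne', div_eq_iff (by positivity)]
    constructor <;> intro h <;> nlinarith [h]
end

section
/- Let n, k be natural numbers with k ≥ 1 and n > 2k, let p ≠ 1 be a real number, and set a = 2k/(1−p). For μ > 0 and u : EuclideanSpace ℝ (Fin n) → ℝ smooth with compact support, define u_μ(x) = μ^a · u(μ^{−1} x). Then: (i) ∫_{ℝⁿ} ‖iteratedFDeriv ℝ k u_μ x‖² dx = μ^{2a − 2k + n} ∫_{ℝⁿ} ‖iteratedFDeriv ℝ k u x‖² dx; (ii) ∫_{ℝⁿ} |u_μ(x)|^{p+1} dx = μ^{a(p+1) + n} ∫_{ℝⁿ} |u(x)|^{p+1} dx (for p + 1 > 0, as integrals of nonnegative functions); and (iii) the two exponents 2a − 2k + n and a(p+1) + n both vanish if and only if p = (n+2k)/(n−2k). (This is the substance of Theorem 10: the dilation symmetry Z of the polyharmonic equation (−1)^k Δ^k u = u^p is a variational symmetry of its energy functional if and only if p equals the critical exponent (n+2k)/(n−2k).) -/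
open Real MeasureTheory

lemma my_lintegral_comp_smul {E : Type*} [NormedAddCommGroup E] [NormedSpace ℝ E]
    [MeasurableSpace E] [BorelSpace E] [FiniteDimensional ℝ E]
    (ν : Measure E) [ν.IsAddHaarMeasure] (f : E → ENNReal) {R : ℝ} (hR : R ≠ 0) :
    ∫⁻ x, f (R • x) ∂ν
      = ENNReal.ofReal |(R ^ Module.finrank ℝ E)⁻¹| * ∫⁻ x, f x ∂ν := by
  calc ∫⁻ x, f (R • x) ∂ν
      = ∫⁻ y, f y ∂(Measure.map (fun x => R • x) ν) :=
        (lintegral_map_equiv f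
          (Homeomorph.smul (isUnit_iff_ne_zero.2 hR).unit).toMeasurableEquiv).symm
    _ = ENNReal.ofReal |(R ^ Module.finrank ℝ E)⁻¹| * ∫⁻ x, f x ∂ν := by
        rw [Measure.map_addHaar_smul ν hR, lintegral_smul_measure, smul_eq_mul]

lemma my_comp_smul_id {E F : Type*} [NormedAddCommGroup E] [NormedSpace ℝ E]
    [NormedAddCommGroup F] [NormedSpace ℝ F] {k : ℕ}
    (M : ContinuousMultilinearMap ℝ (fun _ : Fin k => E) F) (c : ℝ) :
    (M.compContinuousLinearMap fun _ => c • ContinuousLinearMap.id ℝ E) = c ^ k • M := by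
  ext m
  simp [ContinuousMultilinearMap.map_smul_univ]

lemma my_norm_iteratedFDeriv_comp_smul {E F : Type*} [NormedAddCommGroup E] [NormedSpace ℝ E]
    [NormedAddCommGroup F] [NormedSpace ℝ F] {u : E → F} (hu : ContDiff ℝ (⊤ : ℕ∞) u) (c : ℝ)
    (k : ℕ) (x : E) :
    ‖iteratedFDeriv ℝ k (fun z => u (c • z)) x‖ = |c| ^ k * ‖iteratedFDeriv ℝ k u (c • x)‖ := by
  have heq : (fun z => u (c • z)) = u ∘ (c • ContinuousLinearMap.id ℝ E) := rfl
  rw [heq, (c • ContinuousLinearMap.id ℝ E).iteratedFDeriv_comp_right hu x (by exact_mod_cast (le_top : (k : ℕ∞) ≤ ⊤))]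
  have : ((c • ContinuousLinearMap.id ℝ E) x) = c • x := rfl
  rw [this, my_comp_smul_id, norm_smul (c ^ k) (iteratedFDeriv ℝ k u (c • x)), norm_pow,
    Real.norm_eq_abs]

/-- substance of Theorem 10: under the dilation u_μ(x) = μ^a u(μ⁻¹x),
a = 2k/(1−p), the kinetic and potential terms of the energy functional of the
polyharmonic equation (−1)^k Δ^k u = u^p scale by μ^{2a−2k+n} and μ^{a(p+1)+n}
respectively, and both exponents vanish iff p = (n+2k)/(n−2k). -/
theorem variational_symmetry_iff_critical_exponent_polyharmonic
    (n k : ℕ) (hk : 1 ≤ k) (hn : 2 * k < n) (p : ℝ) (hp : p ≠ 1)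
    (a : ℝ) (ha : a = 2 * (k : ℝ) / (1 - p))
    (μ : ℝ) (hμ : 0 < μ)
    (u : EuclideanSpace ℝ (Fin n) → ℝ)
    (hu : ContDiff ℝ (⊤ : ℕ∞) u) (hsupp : HasCompactSupport u) :
    (∫ x : EuclideanSpace ℝ (Fin n),
        ‖iteratedFDeriv ℝ k (fun z : EuclideanSpace ℝ (Fin n) => μ ^ a * u (μ⁻¹ • z)) x‖ ^ 2) =
      μ ^ (2 * a - 2 * (k : ℝ) + (n : ℝ)) *
        ∫ x : EuclideanSpace ℝ (Fin n), ‖iteratedFDeriv ℝ k u x‖ ^ 2 ∧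
    (0 < p + 1 →
      (∫⁻ x : EuclideanSpace ℝ (Fin n), ENNReal.ofReal (|μ ^ a * u (μ⁻¹ • x)| ^ (p + 1))) =
        ENNReal.ofReal (μ ^ (a * (p + 1) + (n : ℝ))) *
          ∫⁻ x : EuclideanSpace ℝ (Fin n), ENNReal.ofReal (|u x| ^ (p + 1))) ∧
    ((2 * a - 2 * (k : ℝ) + (n : ℝ) = 0 ∧ a * (p + 1) + (n : ℝ) = 0) ↔
      p = ((n : ℝ) + 2 * k) / ((n : ℝ) - 2 * k)) := by
  have hμa : (0:ℝ) < μ ^ a := Real.rpow_pos_of_pos hμ a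
  have hμinv : (0:ℝ) < μ⁻¹ := inv_pos.2 hμ
  have hcomp : ContDiff ℝ (⊤ : ℕ∞) (fun z : EuclideanSpace ℝ (Fin n) => u (μ⁻¹ • z)) :=
    hu.comp (contDiff_id.const_smul μ⁻¹)
  have hinvk : (μ⁻¹ : ℝ) ^ k = μ ^ (-(k:ℝ)) := by
    rw [Real.rpow_neg hμ.le, Real.rpow_natCast, ← inv_pow]
  refine ⟨?_, ?_, ?_⟩
  · -- kinetic term
    have hkey : ∀ x : EuclideanSpace ℝ (Fin n),
        ‖iteratedFDeriv ℝ k (fun z : EuclideanSpace ℝ (Fin n) => μ ^ a * u (μ⁻¹ • z)) x‖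
          = μ ^ a * μ⁻¹ ^ k * ‖iteratedFDeriv ℝ k u (μ⁻¹ • x)‖ := by
      intro x
      have h1 : (fun z : EuclideanSpace ℝ (Fin n) => μ ^ a * u (μ⁻¹ • z))
          = fun z => (μ ^ a) • (fun w : EuclideanSpace ℝ (Fin n) => u (μ⁻¹ • w)) z := by
        funext z; simp [smul_eq_mul]
      rw [h1, iteratedFDeriv_const_smul_apply' (hcomp.of_le (by exact_mod_cast le_top)).contDiffAt,
        norm_smul, Real.norm_eq_abs, abs_of_pos hμa,
        my_norm_iteratedFDeriv_comp_smul hu μ⁻¹ k x, abs_of_pos hμinv, mul_assoc]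
    calc (∫ x : EuclideanSpace ℝ (Fin n),
          ‖iteratedFDeriv ℝ k (fun z : EuclideanSpace ℝ (Fin n) => μ ^ a * u (μ⁻¹ • z)) x‖ ^ 2)
        = ∫ x : EuclideanSpace ℝ (Fin n),
            (μ ^ a * μ⁻¹ ^ k) ^ 2 * ‖iteratedFDeriv ℝ k u (μ⁻¹ • x)‖ ^ 2 := by
          simp_rw [hkey, mul_pow]
      _ = (μ ^ a * μ⁻¹ ^ k) ^ 2 *
            ∫ x : EuclideanSpace ℝ (Fin n), ‖iteratedFDeriv ℝ k u (μ⁻¹ • x)‖ ^ 2 :=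
          integral_const_mul _ _
      _ = (μ ^ a * μ⁻¹ ^ k) ^ 2 * (μ ^ Module.finrank ℝ (EuclideanSpace ℝ (Fin n)) •
            ∫ x : EuclideanSpace ℝ (Fin n), ‖iteratedFDeriv ℝ k u x‖ ^ 2) := by
          rw [Measure.integral_comp_inv_smul_of_nonneg volume
            (fun y : EuclideanSpace ℝ (Fin n) => ‖iteratedFDeriv ℝ k u y‖ ^ 2) hμ.le]
      _ = μ ^ (2 * a - 2 * (k : ℝ) + (n : ℝ)) *
            ∫ x : EuclideanSpace ℝ (Fin n), ‖iteratedFDeriv ℝ k u x‖ ^ 2 := by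
          rw [finrank_euclideanSpace_fin, smul_eq_mul, ← mul_assoc]
          congr 1
          rw [hinvk, ← Real.rpow_add hμ, ← Real.rpow_natCast (μ ^ (a + -(k:ℝ))) 2,
            ← Real.rpow_natCast μ n, ← Real.rpow_mul hμ.le, ← Real.rpow_add hμ]
          congr 1
          push_cast
          ring
  · -- potential term
    intro hp1
    have hkey : ∀ x : EuclideanSpace ℝ (Fin n),
        ENNReal.ofReal (|μ ^ a * u (μ⁻¹ • x)| ^ (p + 1))
          = ENNReal.ofReal (μ ^ (a * (p + 1))) * ENNReal.ofReal (|u (μ⁻¹ • x)| ^ (p + 1)) := by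
      intro x
      rw [abs_mul, abs_of_pos hμa, Real.mul_rpow hμa.le (abs_nonneg _),
        ← Real.rpow_mul hμ.le, ENNReal.ofReal_mul (Real.rpow_nonneg hμ.le _)]
    simp_rw [hkey]
    rw [lintegral_const_mul' _ _ ENNReal.ofReal_ne_top,
      my_lintegral_comp_smul volume
        (fun y : EuclideanSpace ℝ (Fin n) => ENNReal.ofReal (|u y| ^ (p + 1)))
        (ne_of_gt hμinv),
      finrank_euclideanSpace_fin, ← mul_assoc, ← ENNReal.ofReal_mul (Real.rpow_nonneg hμ.le _)]
    congr 2
    rw [inv_pow, inv_inv, abs_of_pos (pow_pos hμ n), ← Real.rpow_natCast μ n,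
      ← Real.rpow_add hμ]
  · -- exponents
    have hnk : ((n:ℝ) - 2 * k) ≠ 0 := by
      have : (2 * k : ℝ) < n := by exact_mod_cast hn
      linarith
    have h1p : (1:ℝ) - p ≠ 0 := sub_ne_zero.2 (Ne.symm hp)
    have hA : a * (1 - p) = 2 * k := by rw [ha]; field_simp
    constructor
    · rintro ⟨h1, _⟩
      rw [eq_div_iff hnk]
      linear_combination 2 * hA - (1 - p) * h1
    · intro hpc
      have hval : (1:ℝ) - p = -(4 * k) / ((n:ℝ) - 2 * k) := by
        rw [hpc]; field_simp; ring
      have hk0 : (k:ℝ) ≠ 0 := Nat.cast_ne_zero.2 (by omega)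
      have ha' : a = -((n:ℝ) - 2 * k) / 2 := by
        rw [ha, hval]; field_simp; ring
      constructor
      · rw [ha']; ring
      · rw [ha', hpc]; field_simp; ring
end
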